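/- arXiv:2211.03883 — 8 statements merged into one kernel-verified Lean document; each statement's English description precedes it below -/
import Mathlib

section
/- (Rematching, asymmetric case) In the asymmetric setup below, let ε̄ ≥ 0 and ε := (1+ε̄)^m − 1, and let R = (R_i)_{i∈Ā} be an ε̄-local optimum of J with respect to the endowed valuations v̄_i; set R_i := ∅ for i ∈ A∖Ā. Then there exists a partial matching ρ : A → H ∪ {⊥} (i.e., ρ(i) = ρ(k) ≠ ⊥ implies i = k) such that ∏_{i∈A} v_i(R_i ∪ {ρ(i)})^{w_i} ≥ OPT / ( (2 + n·w_max)·e·(1+ε) ), where R_i ∪ {⊥} is interpreted as R_i. -/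
/-!
Let `O` be an optimal partition, `t_i = |O_i ∩ H|`, `b_i` the best singleton value in `O_i ∩ H`
and `a_i = v_i(ℓ(i))` (`0` outside `Ā`). Submodularity gives
`v_i(O_i) ≤ a_i + t_i b_i + v_i(O_i ∩ J)`. Local optimality prices every item `j ∈ O_i ∩ J` at
`1 + ε̄` times the loss its owner `k` suffers when `j` is removed from `R_k`, and by submodularity
the losses of one owner multiply to at most `e^{w_k}`; hence replacing `O_i ∩ J` by `R_i` costs a
factor `e (1 + ε̄)^{|J|}`. Weighted AM-GM bounds `∏ (2 + t_i)^{w_i}` by `2 + n w_max`, which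
reduces the claim to a matching `ρ` with
`∏ v_i(R_i ∪ ρ(i))^{w_i} ≥ ∏ max(a_i, b_i, v_i(R_i))^{w_i}`.

An agent whose maximum is `b_i` takes the item of `H` realising it, and an agent `k` whose maximum
is `a_k` takes `τ(k)`. When `τ(k)` is wanted by another agent, the whole chain of agents leading to
`k` keeps its `τ`-items instead: comparing `τ` with the injection that shifts the items one step
along the chain and gives `k` the item `ℓ(k) ∉ H`, optimality of `τ` shows that this loses nothing
in product.
-/

open Finset

lemma one_add_sum_le_prod_one_add {ι : Type*} (s : Finset ι) (f : ι → ℝ)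
    (hf : ∀ i ∈ s, 0 ≤ f i) : 1 + ∑ i ∈ s, f i ≤ ∏ i ∈ s, (1 + f i) := by
  classical
  induction s using Finset.induction_on with
  | empty => simp
  | @insert a s ha ih =>
    rw [sum_insert ha, prod_insert ha]
    have hfa := hf a (mem_insert_self a s)
    have hs := ih fun i hi => hf i (mem_insert_of_mem hi)
    have hsum := sum_nonneg fun i hi => hf i (mem_insert_of_mem hi)
    nlinarith

lemma add_div_add_le_add_div_add {a b c c' : ℝ} (hc' : 0 < c') (hc : c' ≤ c) (hab : a ≤ b)
    (ha : 0 ≤ a) : (c + b) / (c + a) ≤ (c' + b) / (c' + a) := by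
  rw [div_le_div_iff₀ (by linarith) (by linarith)]
  nlinarith

lemma pos_of_prod_rpow_pos {ι : Type*} [Fintype ι] {f w : ι → ℝ} (hf : ∀ i, 0 ≤ f i)
    (hw : ∀ i, w i ≠ 0) (h : 0 < ∏ i, f i ^ w i) (i : ι) : 0 < f i :=
  (hf i).lt_of_ne fun h0 =>
    h.ne' (prod_eq_zero (mem_univ i) (by rw [← h0, Real.zero_rpow (hw i)]))

lemma prod_add_rpow_le_add_mul_sum {ι : Type*} (s : Finset ι) {w t : ι → ℝ}
    (hw : ∀ i ∈ s, 0 ≤ w i) (hws : ∑ i ∈ s, w i = 1) {W c : ℝ} (hW : ∀ i ∈ s, w i ≤ W)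
    (hc : 0 ≤ c) (ht : ∀ i ∈ s, 0 ≤ t i) :
    ∏ i ∈ s, (c + t i) ^ w i ≤ c + W * ∑ i ∈ s, t i := by
  calc ∏ i ∈ s, (c + t i) ^ w i ≤ ∑ i ∈ s, w i * (c + t i) :=
        Real.geom_mean_le_arith_mean_weighted s w _ hw hws fun i hi => by linarith [ht i hi]
    _ = c + ∑ i ∈ s, w i * t i := by
        simp_rw [mul_add, sum_add_distrib, ← sum_mul, hws, one_mul]
    _ ≤ c + W * ∑ i ∈ s, t i := by
        rw [mul_sum]
        gcongr with i hi
        exacts [ht i hi, hW i hi]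

lemma prod_add_rpow_le_mul_prod_max {ι : Type*} [Fintype ι] {w : ι → ℝ} (hw : ∀ i, 0 ≤ w i)
    (hws : ∑ i, w i = 1) {W : ℝ} (hW : ∀ i, w i ≤ W) (hW0 : 0 ≤ W) {a b r : ι → ℝ}
    (ha : ∀ i, 0 ≤ a i) (hb : ∀ i, 0 ≤ b i) (hr : ∀ i, 0 ≤ r i) {t : ι → ℕ} {N : ℝ}
    (ht : ∑ i, (t i : ℝ) ≤ N) :
    ∏ i, (a i + t i * b i + r i) ^ w i ≤ (2 + W * N) * ∏ i, max (max (a i) (b i)) (r i) ^ w i := by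
  set M := fun i => max (max (a i) (b i)) (r i)
  have hM : ∀ i, 0 ≤ M i := fun i => le_max_of_le_right (hr i)
  have hle : ∀ i, a i + t i * b i + r i ≤ (2 + t i) * M i := fun i => by
    have hbM : t i * b i ≤ t i * M i := mul_le_mul_of_nonneg_left
      ((le_max_right (a i) (b i)).trans (le_max_left _ (r i))) (Nat.cast_nonneg _)
    linarith [(le_max_left (a i) (b i)).trans (le_max_left _ (r i)),
      le_max_right (max (a i) (b i)) (r i)]
  have hnn : ∀ i, 0 ≤ a i + t i * b i + r i := fun i => by
    linarith [ha i, hr i, mul_nonneg (Nat.cast_nonneg (α := ℝ) (t i)) (hb i)]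
  calc ∏ i, (a i + t i * b i + r i) ^ w i ≤ ∏ i, ((2 + t i) * M i) ^ w i :=
        prod_le_prod (fun i _ => Real.rpow_nonneg (hnn i) _)
          fun i _ => Real.rpow_le_rpow (hnn i) (hle i) (hw i)
    _ = (∏ i, (2 + (t i : ℝ)) ^ w i) * ∏ i, M i ^ w i := by
        rw [← prod_mul_distrib]
        exact prod_congr rfl fun i _ => Real.mul_rpow (by positivity) (hM i)
    _ ≤ (2 + W * N) * ∏ i, M i ^ w i := by
        gcongr
        · exact prod_nonneg fun i _ => Real.rpow_nonneg (hM i) _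
        · exact (prod_add_rpow_le_add_mul_sum univ (fun i _ => hw i) hws (fun i _ => hW i)
            zero_le_two fun i _ => Nat.cast_nonneg _).trans (by gcongr)

structure IsSubmodularValuation {G : Type*} [DecidableEq G] (v : Finset G → ℝ) : Prop where
  mono : ∀ S T : Finset G, S ⊆ T → v S ≤ v T
  submod : ∀ S T : Finset G, v (S ∩ T) + v (S ∪ T) ≤ v S + v T
  map_empty : v ∅ = 0

namespace IsSubmodularValuation

variable {G : Type*} [DecidableEq G] {v : Finset G → ℝ} (hv : IsSubmodularValuation v)
include hv

lemma nonneg (S : Finset G) : 0 ≤ v S :=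
  hv.map_empty ▸ hv.mono ∅ S (empty_subset S)

lemma union_singleton_le (S : Finset G) (j : G) : v (S ∪ {j}) ≤ v S + v {j} := by
  linarith [hv.submod S {j}, hv.nonneg (S ∩ {j})]

lemma le_erase_add_singleton (S : Finset G) (j : G) : v S ≤ v (S.erase j) + v {j} :=
  (hv.mono _ _ fun x hx => by by_cases hxj : x = j <;> simp [hxj, hx]).trans
    (hv.union_singleton_le (S.erase j) j)

lemma union_le_add_sum_marginal (S T : Finset G) :
    v (S ∪ T) ≤ v S + ∑ j ∈ T, (v (S ∪ {j}) - v S) := by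
  induction T using Finset.induction_on with
  | empty => simp
  | @insert a T ha ih =>
    have hunion : (S ∪ T) ∪ (S ∪ {a}) = S ∪ insert a T := by
      ext x; simp only [mem_union, mem_insert, mem_singleton]; tauto
    have hinter : S ⊆ (S ∪ T) ∩ (S ∪ {a}) := subset_inter subset_union_left subset_union_left
    have hsub := hv.submod (S ∪ T) (S ∪ {a})
    rw [hunion] at hsub
    rw [sum_insert ha]
    linarith [hv.mono _ _ hinter]

lemma union_le_add_sum_singleton (S T : Finset G) : v (S ∪ T) ≤ v S + ∑ j ∈ T, v {j} := by
  refine (hv.union_le_add_sum_marginal S T).trans (add_le_add_right (sum_le_sum fun j _ => ?_) _)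
  linarith [hv.union_singleton_le S j]

lemma le_sum_singleton (S : Finset G) : v S ≤ ∑ j ∈ S, v {j} := by
  simpa [hv.map_empty] using hv.union_le_add_sum_singleton ∅ S

lemma exists_singleton_pos {S : Finset G} (hS : 0 < v S) : ∃ x ∈ S, 0 < v {x} :=
  exists_lt_of_sum_lt (f := fun _ => (0 : ℝ))
    (by simpa using hS.trans_le (hv.le_sum_singleton S))

lemma le_inter_add_sum_singleton {H J : Finset G} (hHJ : ∀ x, x ∈ J ∨ x ∈ H) (S : Finset G) :
    v S ≤ v (S ∩ J) + ∑ x ∈ S ∩ H, v {x} :=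
  (hv.mono _ _ fun x hx => by rcases hHJ x with h | h <;> simp [hx, h]).trans
    (hv.union_le_add_sum_singleton (S ∩ J) (S ∩ H))

lemma sum_sub_erase_le (S : Finset G) : ∑ j ∈ S, (v S - v (S.erase j)) ≤ v S := by
  induction S using Finset.induction_on with
  | empty => simp [hv.map_empty]
  | @insert a T ha ih =>
    have hstep : ∀ j ∈ T, v (insert a T) - v ((insert a T).erase j) ≤ v T - v (T.erase j) := by
      intro j hj
      have hja : a ≠ j := fun h => ha (h ▸ hj)
      have hunion : (insert a T).erase j ∪ T = insert a T := by
        rw [erase_insert_of_ne hja, insert_union, erase_union_of_mem hj, union_self]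
      have hinter : (insert a T).erase j ∩ T = T.erase j := by
        rw [erase_insert_of_ne hja, insert_inter_of_notMem ha,
          inter_eq_left.mpr (erase_subset j T)]
      have hsub := hv.submod ((insert a T).erase j) T
      rw [hunion, hinter] at hsub
      linarith
    rw [sum_insert ha, erase_insert ha]
    linarith [sum_le_sum hstep]

lemma add_div_add_le_prod {c : ℝ} (hc : 0 < c) (R Q : Finset G) :
    (c + v Q) / (c + v R) ≤ ∏ j ∈ Q, (c + v (R ∪ {j})) / (c + v R) := by
  have hd : 0 < c + v R := by linarith [hv.nonneg R]
  have hmarg : ∀ j ∈ Q, 0 ≤ (v (R ∪ {j}) - v R) / (c + v R) := fun j _ =>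
    div_nonneg (by linarith [hv.mono R (R ∪ {j}) subset_union_left]) hd.le
  calc (c + v Q) / (c + v R) ≤ 1 + ∑ j ∈ Q, (v (R ∪ {j}) - v R) / (c + v R) := by
        rw [← sum_div, div_le_iff₀ hd, add_mul, one_mul, div_mul_cancel₀ _ hd.ne']
        linarith [hv.union_le_add_sum_marginal R Q, hv.mono Q (R ∪ Q) subset_union_right]
    _ ≤ ∏ j ∈ Q, (1 + (v (R ∪ {j}) - v R) / (c + v R)) := one_add_sum_le_prod_one_add Q _ hmarg
    _ = ∏ j ∈ Q, (c + v (R ∪ {j})) / (c + v R) :=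
        prod_congr rfl fun j _ => by field_simp; ring

lemma prod_add_div_add_erase_le_exp_one {e : ℝ} (he : 0 < e) (R : Finset G)
    (hR : ∀ j ∈ R, v {j} ≤ e) : ∏ j ∈ R, (e + v R) / (e + v (R.erase j)) ≤ Real.exp 1 := by
  set d := max e (v R)
  have hd : 0 < d := lt_max_of_lt_left he
  have hpos : ∀ j, 0 < e + v (R.erase j) := fun j => by linarith [hv.nonneg (R.erase j)]
  -- each denominator dominates `v R` because `e ≥ v {j}`
  have hden : ∀ j ∈ R, d ≤ e + v (R.erase j) := fun j hj =>
    max_le (by linarith [hv.nonneg (R.erase j)])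
      (by linarith [hv.le_erase_add_singleton R j, hR j hj])
  have hgap : ∀ j, 0 ≤ v R - v (R.erase j) := fun j => by
    linarith [hv.mono _ _ (erase_subset j R)]
  calc ∏ j ∈ R, (e + v R) / (e + v (R.erase j))
      = ∏ j ∈ R, (1 + (v R - v (R.erase j)) / (e + v (R.erase j))) :=
        prod_congr rfl fun j _ => by field_simp [(hpos j).ne']; ring
    _ ≤ Real.exp (∑ j ∈ R, (v R - v (R.erase j)) / (e + v (R.erase j))) :=
        Real.prod_one_add_le_exp_sum R fun j => div_nonneg (hgap j) (hpos j).le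
    _ ≤ Real.exp 1 := by
        gcongr
        calc ∑ j ∈ R, (v R - v (R.erase j)) / (e + v (R.erase j))
            ≤ ∑ j ∈ R, (v R - v (R.erase j)) / d :=
              sum_le_sum fun j hj => div_le_div_of_nonneg_left (hgap j) hd (hden j hj)
          _ ≤ v R / d := by rw [← sum_div]; gcongr; exact hv.sum_sub_erase_le R
          _ ≤ 1 := (div_le_one hd).mpr (le_max_right _ _)

end IsSubmodularValuation

section LocalOptimum

variable {G A : Type*} [DecidableEq G]

/-- `e i` stands for the endowment `v_i(ℓ(i))`, so `e i + v i S` is the endowed valuation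
`v̄_i(S)`. -/
def IsLocalOpt (w : A → ℝ) (v : A → Finset G → ℝ) (e : A → ℝ) (B : Finset A)
    (R : A → Finset G) (ε' : ℝ) : Prop :=
  ∀ i ∈ B, ∀ k ∈ B, i ≠ k → ∀ j ∈ R i,
    ((e i + v i ((R i).erase j)) / (e i + v i (R i))) ^ w i *
      ((e k + v k (R k ∪ {j})) / (e k + v k (R k))) ^ w k ≤ 1 + ε'

/-- The factor of `k` is `1` unless `j ∈ R k`, so this is the loss the owners of `j` suffer when
`j` is taken away. -/
noncomputable def removalLoss (w : A → ℝ) (v : A → Finset G → ℝ) (e : A → ℝ) (B : Finset A)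
    (R : A → Finset G) (j : G) : ℝ :=
  ∏ k ∈ B, ((e k + v k (R k)) / (e k + v k ((R k).erase j))) ^ w k

variable {w : A → ℝ} {v : A → Finset G → ℝ} {e : A → ℝ} {B : Finset A} {R : A → Finset G}
  (hw : ∀ i, 0 ≤ w i) (hv : ∀ i, IsSubmodularValuation (v i)) (he : ∀ i ∈ B, 0 < e i)
include hw hv he

lemma one_le_removalLoss_factor {k : A} (hk : k ∈ B) (j : G) :
    1 ≤ ((e k + v k (R k)) / (e k + v k ((R k).erase j))) ^ w k := by
  have hpos : 0 < e k + v k ((R k).erase j) := by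
    linarith [he k hk, (hv k).nonneg ((R k).erase j)]
  refine Real.one_le_rpow ((one_le_div hpos).mpr ?_) (hw k)
  linarith [(hv k).mono _ _ (erase_subset j (R k))]

lemma one_le_removalLoss (j : G) : 1 ≤ removalLoss w v e B R j :=
  one_le_prod fun _ hk => one_le_removalLoss_factor hw hv he hk j

lemma prod_removalLoss_le_exp_one {J : Finset G} (hwB : ∑ k ∈ B, w k ≤ 1)
    (heJ : ∀ k ∈ B, ∀ j ∈ J, v k {j} ≤ e k) (hRJ : ∀ k ∈ B, R k ⊆ J) :
    ∏ j ∈ J, removalLoss w v e B R j ≤ Real.exp 1 := by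
  have hk : ∀ k ∈ B, ∏ j ∈ J, ((e k + v k (R k)) / (e k + v k ((R k).erase j))) ^ w k
      ≤ Real.exp (w k) := by
    intro k hk
    have hpos : ∀ j, 0 ≤ (e k + v k (R k)) / (e k + v k ((R k).erase j)) := fun j =>
      div_nonneg (by linarith [he k hk, (hv k).nonneg (R k)])
        (by linarith [he k hk, (hv k).nonneg ((R k).erase j)])
    have hout : ∀ j ∈ J, j ∉ R k →
        ((e k + v k (R k)) / (e k + v k ((R k).erase j))) ^ w k = 1 := fun j _ hj => by
      rw [erase_eq_of_notMem hj, div_self (by linarith [he k hk, (hv k).nonneg (R k)]),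
        Real.one_rpow]
    rw [← prod_subset (hRJ k hk) hout, Real.finsetProd_rpow _ _ fun j _ => hpos j,
      ← Real.exp_one_rpow]
    exact Real.rpow_le_rpow (prod_nonneg fun j _ => hpos j)
      ((hv k).prod_add_div_add_erase_le_exp_one (he k hk) (R k)
        fun j hj => heJ k hk j (hRJ k hk hj)) (hw k)
  calc ∏ j ∈ J, removalLoss w v e B R j
      = ∏ k ∈ B, ∏ j ∈ J, ((e k + v k (R k)) / (e k + v k ((R k).erase j))) ^ w k := prod_comm
    _ ≤ ∏ k ∈ B, Real.exp (w k) :=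
        prod_le_prod (fun k hk => prod_nonneg fun j _ => zero_le_one.trans
          (one_le_removalLoss_factor hw hv he hk j)) hk
    _ ≤ Real.exp 1 := by rw [← Real.exp_sum]; exact Real.exp_le_exp.mpr hwB

lemma rpow_le_mul_removalLoss {ε' : ℝ} (hε' : 0 ≤ ε') (hloc : IsLocalOpt w v e B R ε')
    {J : Finset G} (hcover : J ⊆ B.biUnion R) {i : A} (hi : i ∈ B) {c : ℝ} (hc : e i ≤ c)
    {j : G} (hj : j ∈ J) :
    ((c + v i (R i ∪ {j})) / (c + v i (R i))) ^ w i ≤ (1 + ε') * removalLoss w v e B R j := by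
  obtain ⟨k, hk, hjk⟩ := mem_biUnion.mp (hcover hj)
  have hL := one_le_removalLoss hw hv he (R := R) j
  obtain rfl | hki := eq_or_ne k i
  · rw [union_eq_left.mpr (singleton_subset_iff.mpr hjk),
      div_self (by linarith [he k hk, (hv k).nonneg (R k)]), Real.one_rpow]
    nlinarith
  have hdel : 0 < (e k + v k ((R k).erase j)) / (e k + v k (R k)) :=
    div_pos (by linarith [he k hk, (hv k).nonneg ((R k).erase j)])
      (by linarith [he k hk, (hv k).nonneg (R k)])
  have hshift : (c + v i (R i ∪ {j})) / (c + v i (R i)) ≤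
      (e i + v i (R i ∪ {j})) / (e i + v i (R i)) :=
    add_div_add_le_add_div_add (he i hi) hc ((hv i).mono _ _ subset_union_left)
      ((hv i).nonneg _)
  have hsingle : ((e k + v k (R k)) / (e k + v k ((R k).erase j))) ^ w k ≤
      removalLoss w v e B R j := by
    simpa [removalLoss] using prod_le_prod_of_subset_of_one_le (singleton_subset_iff.mpr hk)
      (f := fun k' => ((e k' + v k' (R k')) / (e k' + v k' ((R k').erase j))) ^ w k')
      (fun k' hk' => zero_le_one.trans
        (one_le_removalLoss_factor hw hv he (mem_singleton.mp hk' ▸ hk) j))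
      fun k' hk' _ => one_le_removalLoss_factor hw hv he hk' j
  calc ((c + v i (R i ∪ {j})) / (c + v i (R i))) ^ w i
      ≤ ((e i + v i (R i ∪ {j})) / (e i + v i (R i))) ^ w i :=
        Real.rpow_le_rpow (div_nonneg (by linarith [he i hi, (hv i).nonneg (R i ∪ {j})])
          (by linarith [he i hi, (hv i).nonneg (R i)])) hshift (hw i)
    _ ≤ (1 + ε') * ((e k + v k (R k)) / (e k + v k ((R k).erase j))) ^ w k := by
        rw [← inv_div (e k + v k ((R k).erase j)), Real.inv_rpow hdel.le, ← div_eq_mul_inv,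
          le_div_iff₀ (Real.rpow_pos_of_pos hdel _), mul_comm]
        exact hloc k hk i hi hki j hjk
    _ ≤ (1 + ε') * removalLoss w v e B R j := by gcongr

lemma rpow_add_div_add_le_prod {ε' : ℝ} (hε' : 0 ≤ ε') (hloc : IsLocalOpt w v e B R ε')
    {J : Finset G} (hcover : J ⊆ B.biUnion R) {i : A} (hi : i ∈ B) {c : ℝ} (hc : e i ≤ c)
    {Q : Finset G} (hQ : Q ⊆ J) :
    ((c + v i Q) / (c + v i (R i))) ^ w i ≤ ∏ j ∈ Q, ((1 + ε') * removalLoss w v e B R j) := by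
  have hcpos : 0 < c := (he i hi).trans_le hc
  have hratio : ∀ j, 0 ≤ (c + v i (R i ∪ {j})) / (c + v i (R i)) := fun j =>
    div_nonneg (by linarith [(hv i).nonneg (R i ∪ {j})]) (by linarith [(hv i).nonneg (R i)])
  calc ((c + v i Q) / (c + v i (R i))) ^ w i
      ≤ (∏ j ∈ Q, (c + v i (R i ∪ {j})) / (c + v i (R i))) ^ w i :=
        Real.rpow_le_rpow (div_nonneg (by linarith [(hv i).nonneg Q])
          (by linarith [(hv i).nonneg (R i)])) ((hv i).add_div_add_le_prod hcpos (R i) Q) (hw i)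
    _ = ∏ j ∈ Q, ((c + v i (R i ∪ {j})) / (c + v i (R i))) ^ w i :=
        (Real.finsetProd_rpow _ _ (fun j _ => hratio j) _).symm
    _ ≤ ∏ j ∈ Q, ((1 + ε') * removalLoss w v e B R j) :=
        prod_le_prod (fun j _ => Real.rpow_nonneg (hratio j) _)
          fun j hj => rpow_le_mul_removalLoss hw hv he hε' hloc hcover hi hc (hQ hj)

theorem prod_rpow_add_div_add_le_of_isLocalOpt {ε' : ℝ} (hε' : 0 ≤ ε')
    (hloc : IsLocalOpt w v e B R ε') {J : Finset G} (hwB : ∑ k ∈ B, w k ≤ 1)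
    (heJ : ∀ k ∈ B, ∀ j ∈ J, v k {j} ≤ e k) (hRJ : ∀ k ∈ B, R k ⊆ J)
    (hcover : J ⊆ B.biUnion R) {Q : A → Finset G} (hQJ : ∀ i ∈ B, Q i ⊆ J)
    (hQdisj : (B : Set A).PairwiseDisjoint Q) {c : A → ℝ} (hc : ∀ i ∈ B, e i ≤ c i) :
    ∏ i ∈ B, ((c i + v i (Q i)) / (c i + v i (R i))) ^ w i ≤ Real.exp 1 * (1 + ε') ^ #J := by
  have hloss : ∀ j, 0 ≤ (1 + ε') * removalLoss w v e B R j := fun j =>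
    mul_nonneg (by linarith) (zero_le_one.trans (one_le_removalLoss hw hv he j))
  calc ∏ i ∈ B, ((c i + v i (Q i)) / (c i + v i (R i))) ^ w i
      ≤ ∏ i ∈ B, ∏ j ∈ Q i, ((1 + ε') * removalLoss w v e B R j) :=
        prod_le_prod (fun i hi => Real.rpow_nonneg (div_nonneg
          (by linarith [he i hi, hc i hi, (hv i).nonneg (Q i)])
          (by linarith [he i hi, hc i hi, (hv i).nonneg (R i)])) _)
          fun i hi => rpow_add_div_add_le_prod hw hv he hε' hloc hcover hi (hc i hi) (hQJ i hi)
    _ = ∏ j ∈ B.biUnion Q, ((1 + ε') * removalLoss w v e B R j) := (prod_biUnion hQdisj).symm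
    _ ≤ ∏ j ∈ J, ((1 + ε') * removalLoss w v e B R j) :=
        prod_le_prod_of_subset_of_one_le (biUnion_subset.mpr hQJ) (fun j _ => hloss j)
          fun j _ _ => one_le_mul_of_one_le_of_one_le (by linarith) (one_le_removalLoss hw hv he j)
    _ ≤ Real.exp 1 * (1 + ε') ^ #J := by
        rw [prod_mul_distrib, prod_const, mul_comm]
        gcongr
        exact prod_removalLoss_le_exp_one hw hv he hwB heJ hRJ

theorem prod_add_rpow_le_of_isLocalOpt [Fintype A] [DecidableEq A] {ε' : ℝ} (hε' : 0 ≤ ε')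
    (hloc : IsLocalOpt w v e B R ε') {J : Finset G} (hws : ∑ i, w i = 1)
    (heJ : ∀ k ∈ B, ∀ j ∈ J, v k {j} ≤ e k) (hRJ : ∀ k ∈ B, R k ⊆ J)
    (hcover : J ⊆ B.biUnion R) {Q : A → Finset G} (hQJ : ∀ i ∈ B, Q i ⊆ J)
    (hQdisj : (B : Set A).PairwiseDisjoint Q) (hQB : ∀ i ∉ B, v i (Q i) = 0) {c : A → ℝ}
    (hc : ∀ i ∈ B, e i ≤ c i) (hc0 : ∀ i, 0 ≤ c i) :
    ∏ i, (c i + v i (Q i)) ^ w i ≤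
      Real.exp 1 * (1 + ε') ^ #J * ∏ i, (c i + v i (R i)) ^ w i := by
  have hnum : ∀ i, 0 ≤ c i + v i (Q i) := fun i => by linarith [hc0 i, (hv i).nonneg (Q i)]
  have hden : ∀ i, 0 ≤ c i + v i (R i) := fun i => by linarith [hc0 i, (hv i).nonneg (R i)]
  have hB : ∏ i ∈ B, (c i + v i (Q i)) ^ w i =
      (∏ i ∈ B, ((c i + v i (Q i)) / (c i + v i (R i))) ^ w i) *
        ∏ i ∈ B, (c i + v i (R i)) ^ w i := by
    rw [← prod_mul_distrib]
    refine prod_congr rfl fun i hi => ?_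
    have hpos : 0 < c i + v i (R i) := by linarith [he i hi, hc i hi, (hv i).nonneg (R i)]
    rw [← Real.mul_rpow (div_nonneg (hnum i) hpos.le) hpos.le, div_mul_cancel₀ _ hpos.ne']
  have hBc : ∏ i ∈ Bᶜ, (c i + v i (Q i)) ^ w i ≤ ∏ i ∈ Bᶜ, (c i + v i (R i)) ^ w i :=
    prod_le_prod (fun i _ => Real.rpow_nonneg (hnum i) _) fun i hi =>
      Real.rpow_le_rpow (hnum i)
        (by rw [hQB i (mem_compl.mp hi)]; linarith [(hv i).nonneg (R i)]) (hw i)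
  have hratio := prod_rpow_add_div_add_le_of_isLocalOpt hw hv he hε' hloc
    (hws ▸ sum_le_sum_of_subset_of_nonneg (subset_univ B) fun i _ _ => hw i) heJ hRJ hcover
    hQJ hQdisj hc
  have hRprod : 0 ≤ ∏ i ∈ B, (c i + v i (R i)) ^ w i :=
    prod_nonneg fun i _ => Real.rpow_nonneg (hden i) _
  rw [← prod_mul_prod_compl B, ← prod_mul_prod_compl B (fun i => (c i + v i (R i)) ^ w i), hB,
    ← mul_assoc]
  exact mul_le_mul (mul_le_mul_of_nonneg_right hratio hRprod) hBc
    (prod_nonneg fun i _ => Real.rpow_nonneg (hnum i) _) (mul_nonneg (by positivity) hRprod)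

end LocalOptimum

section Basin

variable {A : Type*} [Fintype A] {D : Finset A} {π : A → A} {y k k' : A}

open Classical in
noncomputable def basin (D : Finset A) (π : A → A) (k : A) : Finset A :=
  univ.filter fun y => ∃ t, π^[t] y = k ∧ ∀ s < t, π^[s] y ∈ D

lemma mem_basin : y ∈ basin D π k ↔ ∃ t, π^[t] y = k ∧ ∀ s < t, π^[s] y ∈ D := by
  simp [basin]

lemma self_mem_basin : k ∈ basin D π k :=
  mem_basin.mpr ⟨0, rfl, fun _ h => absurd h (Nat.not_lt_zero _)⟩

lemma mem_basin_of_apply_mem (hy : y ∈ D) (h : π y ∈ basin D π k) : y ∈ basin D π k := by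
  obtain ⟨t, ht, hD⟩ := mem_basin.mp h
  refine mem_basin.mpr ⟨t + 1, by rwa [Function.iterate_succ_apply], fun s hs => ?_⟩
  cases s with
  | zero => exact hy
  | succ s => rw [Function.iterate_succ_apply]; exact hD s (by omega)

lemma mem_and_apply_mem_basin (h : y ∈ basin D π k) (hne : y ≠ k) :
    y ∈ D ∧ π y ∈ basin D π k := by
  obtain ⟨t, ht, hD⟩ := mem_basin.mp h
  cases t with
  | zero => exact absurd ht hne
  | succ t =>
    exact ⟨hD 0 (Nat.succ_pos t), mem_basin.mpr ⟨t, by rwa [← Function.iterate_succ_apply],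
      fun s hs => by rw [← Function.iterate_succ_apply]; exact hD (s + 1) (by omega)⟩⟩

lemma disjoint_basin (hk : k ∉ D) (hk' : k' ∉ D) (hne : k ≠ k') :
    Disjoint (basin D π k) (basin D π k') := by
  refine disjoint_left.mpr fun y hy hy' => hne ?_
  obtain ⟨t, rfl, hD⟩ := mem_basin.mp hy
  obtain ⟨t', rfl, hD'⟩ := mem_basin.mp hy'
  rcases lt_trichotomy t t' with hlt | rfl | hlt
  · exact absurd (hD' t hlt) hk
  · rfl
  · exact absurd (hD t' hlt) hk'

end Basin

section Matching

variable {A G : Type*} [Fintype A] [DecidableEq A]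

theorem prod_le_prod_of_isOptimal {u : A → G → ℝ} {τ : A → G} (hτinj : Function.Injective τ)
    (hτopt : ∀ τ' : A → G, Function.Injective τ' → ∏ i, u i (τ' i) ≤ ∏ i, u i (τ i))
    (hτpos : ∀ i, 0 < u i (τ i)) (C : Finset A) (f : A → G) (hf : Set.InjOn f C)
    (hfτ : ∀ x ∈ C, ∀ y ∉ C, f x ≠ τ y) :
    ∏ x ∈ C, u x (f x) ≤ ∏ x ∈ C, u x (τ x) := by
  set τ' : A → G := fun x => if x ∈ C then f x else τ x
  have hτ'inj : Function.Injective τ' := by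
    intro x y hxy
    by_cases hx : x ∈ C <;> by_cases hy : y ∈ C <;>
      simp only [τ', hx, hy, if_true, if_false] at hxy
    · exact hf hx hy hxy
    · exact absurd hxy (hfτ x hx y hy)
    · exact absurd hxy.symm (hfτ y hy x hx)
    · exact hτinj hxy
  have hC : ∏ x ∈ C, u x (τ' x) = ∏ x ∈ C, u x (f x) :=
    prod_congr rfl fun x hx => by simp only [τ', if_pos hx]
  have hCc : ∏ x ∈ Cᶜ, u x (τ' x) = ∏ x ∈ Cᶜ, u x (τ x) :=
    prod_congr rfl fun x hx => by simp only [τ', if_neg (mem_compl.mp hx)]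
  have h := hτopt τ' hτ'inj
  rw [← prod_mul_prod_compl C, ← prod_mul_prod_compl C (fun x => u x (τ x)), hC, hCc] at h
  exact le_of_mul_le_mul_right h (prod_pos fun x _ => hτpos x)

theorem singleton_pos_of_isOptimal [DecidableEq G] {w : A → ℝ} (hw : ∀ i, 0 < w i)
    {v : A → Finset G → ℝ} (hv : ∀ i, IsSubmodularValuation (v i)) {O : A → Finset G}
    (hOdisj : ∀ i k, i ≠ k → Disjoint (O i) (O k)) (hO : 0 < ∏ i, v i (O i) ^ w i)
    {τ : A → G} (hτopt : ∀ τ' : A → G, Function.Injective τ' →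
      ∏ i, v i {τ' i} ^ w i ≤ ∏ i, v i {τ i} ^ w i) (i : A) : 0 < v i {τ i} := by
  have hne : ∀ i, w i ≠ 0 := fun i => (hw i).ne'
  choose g hgO hgpos using fun i =>
    (hv i).exists_singleton_pos (pos_of_prod_rpow_pos (fun i => (hv i).nonneg _) hne hO i)
  have hginj : Function.Injective g := fun i k hik => by
    by_contra hik'
    exact disjoint_left.mp (hOdisj i k hik') (hgO i) (hik ▸ hgO k)
  exact pos_of_prod_rpow_pos (fun i => (hv i).nonneg _) hne
    ((prod_pos fun i _ => Real.rpow_pos_of_pos (hgpos i) _).trans_le (hτopt g hginj)) i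

variable {w : A → ℝ} {v : A → Finset G → ℝ} {τ : A → G}
  (hw : ∀ i, 0 ≤ w i) (hτinj : Function.Injective τ)
  (hτopt : ∀ τ' : A → G, Function.Injective τ' →
    ∏ i, v i {τ' i} ^ w i ≤ ∏ i, v i {τ i} ^ w i)
  (hτpos : ∀ i, 0 < v i {τ i})
include hw hτinj hτopt hτpos

/-- Compare `τ` with the injection that shifts the `τ`-items one step along `π` on `C` and gives
`k` the item `g`. -/
lemma prod_rpow_le_of_chain {M : A → ℝ} (hM : ∀ i, 0 ≤ M i) {D : Finset A}
    {π : A → A} (hπ : Set.InjOn π D) (hMD : ∀ y ∈ D, M y ≤ v y {τ (π y)}) {C : Finset A}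
    {k : A} (hC : ∀ x ∈ C, x ≠ k → x ∈ D ∧ π x ∈ C) {g : G} (hg : ∀ x, g ≠ τ x)
    (hMk : M k ≤ v k {g}) :
    ∏ x ∈ C, M x ^ w x ≤ ∏ x ∈ C, v x {τ x} ^ w x := by
  set f : A → G := fun x => if x = k then g else τ (π x)
  have hf : Set.InjOn f C := by
    intro x hx y hy hxy
    by_cases hxk : x = k <;> by_cases hyk : y = k <;>
      simp only [f, hxk, hyk, if_true, if_false] at hxy
    · rw [hxk, hyk]
    · exact absurd hxy (hg _)
    · exact absurd hxy.symm (hg _)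
    · exact hπ (hC x hx hxk).1 (hC y hy hyk).1 (hτinj hxy)
  have hfτ : ∀ x ∈ C, ∀ y ∉ C, f x ≠ τ y := by
    intro x hx y hy hxy
    by_cases hxk : x = k
    · simp only [f, if_pos hxk] at hxy; exact hg y hxy
    · simp only [f, if_neg hxk] at hxy; exact hy (hτinj hxy ▸ (hC x hx hxk).2)
  have hMf : ∀ x ∈ C, M x ^ w x ≤ v x {f x} ^ w x := fun x hx => by
    refine Real.rpow_le_rpow (hM x) ?_ (hw x)
    by_cases hxk : x = k
    · simp only [f, if_pos hxk]; exact hxk ▸ hMk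
    · simp only [f, if_neg hxk]; exact hMD x (hC x hx hxk).1
  exact (prod_le_prod (fun x _ => Real.rpow_nonneg (hM x) _) hMf).trans
    (prod_le_prod_of_isOptimal (u := fun i g => v i {g} ^ w i) hτinj hτopt
      (fun i => Real.rpow_pos_of_pos (hτpos i) _) C f hf hfτ)

lemma prod_rpow_biUnion_basin_le {M : A → ℝ} (hM : ∀ i, 0 ≤ M i) {D K : Finset A}
    (hKD : ∀ k ∈ K, k ∉ D) {π : A → A} (hπ : Set.InjOn π D) {ℓ : A → G}
    (hℓ : ∀ k ∈ K, ∀ x, ℓ k ≠ τ x) (hMD : ∀ y ∈ D, M y ≤ v y {τ (π y)})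
    (hMK : ∀ k ∈ K, M k ≤ v k {ℓ k}) :
    ∏ y ∈ K.biUnion (basin D π), M y ^ w y ≤ ∏ y ∈ K.biUnion (basin D π), v y {τ y} ^ w y := by
  have hdisj : (K : Set A).PairwiseDisjoint (basin D π) := fun k hk k' hk' hne =>
    disjoint_basin (hKD k hk) (hKD k' hk') hne
  rw [prod_biUnion hdisj, prod_biUnion hdisj]
  exact prod_le_prod (fun k _ => prod_nonneg fun y _ => Real.rpow_nonneg (hM y) _)
    fun k hk => prod_rpow_le_of_chain hw hτinj hτopt hτpos hM hπ hMD
      (fun x hx hxk => mem_and_apply_mem_basin hx hxk) (hℓ k hk) (hMK k hk)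

theorem exists_partialMatching_prod_rpow_le [DecidableEq G]
    (hv : ∀ i, IsSubmodularValuation (v i)) (R : A → Finset G) {M : A → ℝ}
    (hM : ∀ i, 0 ≤ M i) {D K : Finset A} (hKD : ∀ k ∈ K, k ∉ D) {π : A → A}
    (hπ : Set.InjOn π D) {ℓ : A → G} (hℓ : ∀ k ∈ K, ∀ x, ℓ k ≠ τ x)
    (hMD : ∀ y ∈ D, M y ≤ v y {τ (π y)}) (hMK : ∀ k ∈ K, M k ≤ v k {ℓ k})
    (hMR : ∀ y, y ∉ D → y ∉ K → M y ≤ v y (R y)) :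
    ∃ ρ : A → Option G, (∀ i, ∀ g ∈ ρ i, g ∈ Set.range τ) ∧
      (∀ i k g, ρ i = some g → ρ k = some g → i = k) ∧
      ∏ i, M i ^ w i ≤ ∏ i, v i (R i ∪ (ρ i).toFinset) ^ w i := by
  classical
  set N := K.biUnion (basin D π)
  have hNapply : ∀ y ∈ D, π y ∈ N → y ∈ N := fun y hy h => by
    obtain ⟨k, hk, hyk⟩ := mem_biUnion.mp h
    exact mem_biUnion.mpr ⟨k, hk, mem_basin_of_apply_mem hy hyk⟩
  set ρ : A → Option G := fun y =>
    if y ∈ N then some (τ y) else if y ∈ D then some (τ (π y)) else none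
  have hρ : ∀ y g, ρ y = some g → (y ∈ N ∧ τ y = g) ∨ (y ∉ N ∧ y ∈ D ∧ τ (π y) = g) := by
    intro y g hy
    simp only [ρ] at hy
    split_ifs at hy <;> simp_all
  have hN : ∏ y ∈ N, M y ^ w y ≤ ∏ y ∈ N, v y (R y ∪ (ρ y).toFinset) ^ w y :=
    (prod_rpow_biUnion_basin_le hw hτinj hτopt hτpos hM hKD hπ hℓ hMD hMK).trans <|
      prod_le_prod (fun y _ => Real.rpow_nonneg ((hv y).nonneg _) _) fun y hy => by
        rw [show ρ y = some (τ y) from if_pos hy, Option.toFinset_some]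
        exact Real.rpow_le_rpow ((hv y).nonneg _) ((hv y).mono _ _ subset_union_right) (hw y)
  have hNc : ∀ y ∉ N, M y ≤ v y (R y ∪ (ρ y).toFinset) := fun y hy => by
    by_cases hyD : y ∈ D
    · simp only [ρ, if_neg hy, if_pos hyD, Option.toFinset_some]
      exact (hMD y hyD).trans ((hv y).mono _ _ subset_union_right)
    · have hyK : y ∉ K := fun hyK => hy (mem_biUnion.mpr ⟨y, hyK, self_mem_basin⟩)
      exact (hMR y hyD hyK).trans ((hv y).mono _ _ subset_union_left)
  refine ⟨ρ, fun i g hg => ?_, fun i k g hi hk => ?_, ?_⟩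
  · rcases hρ i g hg with ⟨-, rfl⟩ | ⟨-, -, rfl⟩ <;> exact Set.mem_range_self _
  · rcases hρ i g hi with ⟨hiN, rfl⟩ | ⟨hiN, hiD, rfl⟩ <;>
      rcases hρ k _ hk with ⟨hkN, hik⟩ | ⟨hkN, hkD, hik⟩
    · exact (hτinj hik).symm
    · exact absurd (hNapply k hkD (hτinj hik ▸ hiN)) hkN
    · exact absurd (hNapply i hiD (hτinj hik ▸ hkN)) hiN
    · exact (hπ hkD hiD (hτinj hik)).symm
  · rw [← prod_mul_prod_compl N, ← prod_mul_prod_compl N fun y =>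
      v y (R y ∪ (ρ y).toFinset) ^ w y]
    exact mul_le_mul hN (prod_le_prod (fun y _ => Real.rpow_nonneg (hM y) _) fun y hy =>
      Real.rpow_le_rpow (hM y) (hNc y (mem_compl.mp hy)) (hw y))
      (prod_nonneg fun y _ => Real.rpow_nonneg (hM y) _)
      (prod_nonneg fun y _ => Real.rpow_nonneg ((hv y).nonneg _) _)

theorem exists_partialMatching_prod_max_le [DecidableEq G]
    (hv : ∀ i, IsSubmodularValuation (v i)) (R : A → Finset G) {a b : A → ℝ} {ℓ : A → G}
    (hℓ : ∀ i, 0 < a i → a i ≤ v i {ℓ i} ∧ ∀ x, ℓ i ≠ τ x) {π : A → A}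
    (hπ : ∀ i, 0 < b i → b i ≤ v i {τ (π i)}) (hπinj : Set.InjOn π {i | 0 < b i}) :
    ∃ ρ : A → Option G, (∀ i, ∀ g ∈ ρ i, g ∈ Set.range τ) ∧
      (∀ i k g, ρ i = some g → ρ k = some g → i = k) ∧
      ∏ i, max (max (a i) (b i)) (v i (R i)) ^ w i ≤
        ∏ i, v i (R i ∪ (ρ i).toFinset) ^ w i := by
  classical
  have hr := fun i => (hv i).nonneg (R i)
  refine exists_partialMatching_prod_rpow_le hw hτinj hτopt hτpos hv R
    (fun i => le_max_of_le_right (hr i)) (D := univ.filter fun i => max (a i) (v i (R i)) < b i)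
    (K := univ.filter fun i => v i (R i) < a i ∧ b i ≤ a i) (fun k hk hkD => ?_)
    (hπinj.mono fun i hi => ?_) (fun k hk => (hℓ k ?_).2) (fun y hy => ?_) (fun k hk => ?_)
    (fun y hyD hyK => ?_)
  all_goals simp only [coe_filter, mem_filter, mem_univ, true_and, Set.mem_ofPred_eq,
    max_lt_iff, not_lt, not_and, not_le] at *
  · linarith [hk.2, hkD.1]
  · linarith [hi.2, hr i]
  · linarith [hk.1, hr k]
  · have hb : 0 < b y := by linarith [hy.2, hr y]
    exact max_le (max_le (by linarith [hy.1, hπ y hb]) (hπ y hb)) (by linarith [hy.2, hπ y hb])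
  · have ha := (hℓ k (by linarith [hk.1, hr k])).1
    exact max_le (max_le ha (hk.2.trans ha)) (by linarith [hk.1])
  · have ha : a y ≤ v y (R y) := by
      by_contra! h
      linarith [hyD (hyK h), hyK h]
    have hb : b y ≤ v y (R y) := by
      by_contra! h
      exact absurd (hyD (ha.trans_lt h)) (not_le.mpr h)
    exact max_le (max_le ha hb) le_rfl

end Matching

theorem exists_best_items {A G : Type*} [Nonempty A] (τ : A → G) {u : A → G → ℝ}
    (hu : ∀ i x, 0 ≤ u i x) {T : A → Finset G} (hT : ∀ i, ∀ x ∈ T i, x ∈ Set.range τ)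
    (hTdisj : ∀ i k, i ≠ k → Disjoint (T i) (T k)) :
    ∃ (b : A → ℝ) (π : A → A), (∀ i, 0 ≤ b i) ∧ (∀ i, ∑ x ∈ T i, u i x ≤ #(T i) * b i) ∧
      (∀ i, 0 < b i → b i ≤ u i (τ (π i))) ∧ Set.InjOn π {i | 0 < b i} := by
  have hbest : ∀ i, ∃ (b : ℝ) (p : A), 0 ≤ b ∧ ∑ x ∈ T i, u i x ≤ #(T i) * b ∧
      (0 < b → τ p ∈ T i ∧ b ≤ u i (τ p)) := by
    intro i
    rcases (T i).eq_empty_or_nonempty with hTi | hTi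
    · exact ⟨0, Classical.arbitrary A, le_rfl, by simp [hTi], fun h => absurd h (lt_irrefl 0)⟩
    obtain ⟨x, hx, hxmax⟩ := exists_max_image (T i) (u i) hTi
    obtain ⟨p, rfl⟩ := hT i x hx
    exact ⟨u i (τ p), p, hu i _, nsmul_eq_mul (#(T i)) (u i (τ p)) ▸
      sum_le_card_nsmul _ _ _ hxmax, fun _ => ⟨hx, le_rfl⟩⟩
  choose b π hb0 hbsum hbπ using hbest
  refine ⟨b, π, hb0, hbsum, fun i hi => (hbπ i hi).2, fun i hi k hk hik => ?_⟩
  by_contra hne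
  exact disjoint_left.mp (hTdisj i k hne) (hbπ i hi).1 (hik ▸ (hbπ k hk).1)

theorem prod_rpow_le_mul_prod_max_of_isLocalOpt {A G : Type*} [Fintype A] [DecidableEq A]
    [DecidableEq G] {w : A → ℝ} (hw : ∀ i, 0 ≤ w i) (hws : ∑ i, w i = 1) {W : ℝ}
    (hW : ∀ i, w i ≤ W) (hW0 : 0 ≤ W) {v : A → Finset G → ℝ}
    (hv : ∀ i, IsSubmodularValuation (v i)) {H J : Finset G} (hHJ : ∀ x, x ∈ J ∨ x ∈ H)
    {B : Finset A} (hB : ∀ i, i ∈ B ↔ 0 < v i J) {ℓ : A → G}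
    (hℓ : ∀ i ∈ B, ∀ j ∈ J, v i {j} ≤ v i {ℓ i}) {R : A → Finset G} (hRJ : ∀ i ∈ B, R i ⊆ J)
    (hcover : J ⊆ B.biUnion R) {ε' : ℝ} (hε' : 0 ≤ ε')
    (hloc : IsLocalOpt w v (fun i => v i {ℓ i}) B R ε') {O : A → Finset G}
    (hOdisj : ∀ i k, i ≠ k → Disjoint (O i) (O k)) {a b : A → ℝ} (ha : ∀ i, 0 ≤ a i)
    (haℓ : ∀ i ∈ B, v i {ℓ i} ≤ a i) (hb : ∀ i, 0 ≤ b i)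
    (hbsum : ∀ i, ∑ x ∈ O i ∩ H, v i {x} ≤ #(O i ∩ H) * b i) :
    ∏ i, v i (O i) ^ w i ≤ Real.exp 1 * (1 + ε') ^ #J * (2 + W * #H) *
      ∏ i, max (max (a i) (b i)) (v i (R i)) ^ w i := by
  have he : ∀ i ∈ B, 0 < v i {ℓ i} := fun i hi => by
    obtain ⟨j, hj, hpos⟩ := (hv i).exists_singleton_pos ((hB i).mp hi)
    exact hpos.trans_le (hℓ i hi j hj)
  have htb : ∀ i, 0 ≤ (#(O i ∩ H) : ℝ) * b i := fun i => mul_nonneg (Nat.cast_nonneg _) (hb i)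
  have hO : ∀ i, v i (O i) ≤ a i + #(O i ∩ H) * b i + v i (O i ∩ J) := fun i => by
    linarith [(hv i).le_inter_add_sum_singleton hHJ (O i), hbsum i, ha i]
  have hQB : ∀ i ∉ B, v i (O i ∩ J) = 0 := fun i hi => le_antisymm
    (((hv i).mono _ _ inter_subset_right).trans (not_lt.mp (mt (hB i).mpr hi)))
    ((hv i).nonneg _)
  have hOH : ((univ : Finset A) : Set A).PairwiseDisjoint fun i => O i ∩ H :=
    fun i _ k _ hik => (hOdisj i k hik).mono inter_subset_left inter_subset_left
  have hH : ∑ i, (#(O i ∩ H) : ℝ) ≤ #H := by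
    rw [← Nat.cast_sum, ← card_biUnion hOH]
    exact_mod_cast card_le_card (biUnion_subset.mpr fun i _ => inter_subset_right)
  calc ∏ i, v i (O i) ^ w i ≤ ∏ i, (a i + #(O i ∩ H) * b i + v i (O i ∩ J)) ^ w i :=
        prod_le_prod (fun i _ => Real.rpow_nonneg ((hv i).nonneg _) _)
          fun i _ => Real.rpow_le_rpow ((hv i).nonneg _) (hO i) (hw i)
    _ ≤ Real.exp 1 * (1 + ε') ^ #J * ∏ i, (a i + #(O i ∩ H) * b i + v i (R i)) ^ w i :=
        prod_add_rpow_le_of_isLocalOpt hw hv he hε' hloc hws hℓ hRJ hcover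
          (fun i _ => inter_subset_right)
          (fun i _ k _ hik => (hOdisj i k hik).mono inter_subset_left inter_subset_left) hQB
          (c := fun i => a i + #(O i ∩ H) * b i)
          (fun i hi => (haℓ i hi).trans (le_add_of_nonneg_right (htb i)))
          fun i => add_nonneg (ha i) (htb i)
    _ ≤ Real.exp 1 * (1 + ε') ^ #J * ((2 + W * #H) *
          ∏ i, max (max (a i) (b i)) (v i (R i)) ^ w i) := by
        gcongr
        exact prod_add_rpow_le_mul_prod_max hw hws hW hW0 ha hb (fun i => (hv i).nonneg _) hH
    _ = _ := by ring

theorem rematching_asymmetric_general {G A : Type*} [Fintype G] [DecidableEq G]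
    [Fintype A] [DecidableEq A]
    (n m : ℕ) (hn : n = Fintype.card A) (hm : m = Fintype.card G)
    (w : A → ℝ) (hw : ∀ i, 0 < w i) (hwsum : ∑ i, w i = 1)
    (wmax : ℝ) (hwmax : ∀ i, w i ≤ wmax) (hwmax' : ∃ i, w i = wmax)
    (v : A → Finset G → ℝ)
    (hmono : ∀ i, ∀ S T : Finset G, S ⊆ T → v i S ≤ v i T)
    (hsubmod : ∀ i, ∀ S T : Finset G, v i (S ∩ T) + v i (S ∪ T) ≤ v i S + v i T)
    (hv0 : ∀ i, v i ∅ = 0)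
    (OPT : ℝ) (hOPTpos : 0 < OPT)
    (hOPTex : ∃ P : A → Finset G, (∀ i k, i ≠ k → Disjoint (P i) (P k)) ∧
      Finset.univ.biUnion P = (univ : Finset G) ∧
      ∏ i, v i (P i) ^ (w i) = OPT)
    (τ : A → G) (hτinj : Function.Injective τ)
    (hτopt : ∀ τ' : A → G, Function.Injective τ' →
      ∏ i, v i {τ' i} ^ (w i) ≤ ∏ i, v i {τ i} ^ (w i))
    (H J : Finset G) (hH : H = Finset.univ.image τ) (hJ : J = univ \ H)
    (Abar : Finset A) (hAbar : Abar = univ.filter (fun i => 0 < v i J))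
    (ℓ : A → G) (hℓ : ∀ i ∈ Abar, ℓ i ∈ J ∧ ∀ j ∈ J, v i {j} ≤ v i {ℓ i})
    (vb : A → Finset G → ℝ) (hvb : ∀ i S, vb i S = v i {ℓ i} + v i S)
    (ε' ε : ℝ) (hε' : 0 ≤ ε') (hε : ε = (1 + ε') ^ m - 1)
    (R : A → Finset G)
    (hRsub : ∀ i, R i ⊆ J)
    (hRcover : Abar.biUnion R = J)
    (hloc : ∀ i ∈ Abar, ∀ k ∈ Abar, i ≠ k → ∀ j ∈ R i,
      (vb i ((R i).erase j) / vb i (R i)) ^ (w i) *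
        (vb k (R k ∪ {j}) / vb k (R k)) ^ (w k) ≤ 1 + ε') :
    ∃ ρ : A → Option G,
      (∀ (i : A), ∀ g ∈ ρ i, g ∈ H) ∧
      (∀ (i k : A) (g : G), ρ i = some g → ρ k = some g → i = k) ∧
      OPT / ((2 + n * wmax) * Real.exp 1 * (1 + ε))
        ≤ ∏ i, v i (R i ∪ (ρ i).toFinset) ^ (w i) := by
  obtain ⟨i₀, rfl⟩ := hwmax'
  have : Nonempty A := ⟨i₀⟩
  have hv : ∀ i, IsSubmodularValuation (v i) := fun i => ⟨hmono i, hsubmod i, hv0 i⟩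
  obtain ⟨O, hOdisj, -, rfl⟩ := hOPTex
  have hHτ : ∀ x, x ∈ H ↔ x ∈ Set.range τ := by simp [hH]
  have hJH : ∀ x, x ∈ J ↔ x ∉ H := by simp [hJ]
  obtain ⟨b, π, hb0, hbsum, hbπ, hπinj⟩ := exists_best_items τ (fun i x => (hv i).nonneg {x})
    (T := fun i => O i ∩ H) (fun i x hx => (hHτ x).mp (mem_inter.mp hx).2)
    fun i k hik => (hOdisj i k hik).mono inter_subset_left inter_subset_left
  set a : A → ℝ := fun i => if i ∈ Abar then v i {ℓ i} else 0
  have ha : ∀ i, 0 ≤ a i := fun i => by by_cases hi : i ∈ Abar <;> simp [a, hi, (hv i).nonneg]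
  have haℓ : ∀ i, 0 < a i → a i ≤ v i {ℓ i} ∧ ∀ x, ℓ i ≠ τ x := fun i hi => by
    by_cases hiA : i ∈ Abar
    · exact ⟨by simp [a, hiA], fun x hx => (hJH _).mp (hℓ i hiA).1 ((hHτ _).mpr ⟨x, hx.symm⟩)⟩
    · simp [a, hiA] at hi
  obtain ⟨ρ, hρH, hρinj, hρ⟩ := exists_partialMatching_prod_max_le (fun i => (hw i).le) hτinj
    hτopt (singleton_pos_of_isOptimal hw hv hOdisj hOPTpos hτopt) hv R haℓ hbπ hπinj
  refine ⟨ρ, fun i g hg => (hHτ g).mpr (hρH i g hg), hρinj, ?_⟩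
  have hOPT := prod_rpow_le_mul_prod_max_of_isLocalOpt (fun i => (hw i).le) hwsum hwmax
    (hw i₀).le hv (fun x => (em' (x ∈ H)).imp_left (hJH x).mpr) (B := Abar)
    (fun i => by simp [hAbar]) (fun i hi => (hℓ i hi).2) (fun i _ => hRsub i) hRcover.ge hε'
    (by unfold IsLocalOpt; simpa only [hvb] using hloc) hOdisj ha (fun i hi => by simp [a, hi])
    hb0 hbsum
  have hnH : #H = n := by rw [hH, card_image_of_injective _ hτinj, card_univ, hn]
  have hJm : (1 + ε') ^ #J ≤ 1 + ε := by
    rw [hε, add_sub_cancel, hm]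
    exact pow_le_pow_right₀ (by linarith) (card_le_univ J)
  have hε0 : 0 < 1 + ε := (pow_pos (by linarith) _).trans_le hJm
  have hw₀ := hw i₀
  rw [div_le_iff₀ (by positivity), ← hnH]
  calc _ ≤ _ := hOPT
    _ ≤ Real.exp 1 * (1 + ε) * (2 + w i₀ * #H) * ∏ i, v i (R i ∪ (ρ i).toFinset) ^ w i := by
        gcongr
        exact prod_nonneg fun i _ => Real.rpow_nonneg (le_max_of_le_right ((hv i).nonneg _)) _
    _ = _ := by ring

/-- (Rematching, asymmetric case.)
Let `ε̄ ≥ 0`, `ε := (1+ε̄)^m − 1`, and let `R` be an `ε̄`-local optimum of `J` with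
respect to the endowed valuations; `R_i = ∅` for `i ∉ Ā`. Then there exists a partial
matching `ρ : A → H ∪ {⊥}` such that
`∏_{i∈A} v_i(R_i ∪ {ρ(i)})^{w_i} ≥ OPT / ((2 + n·w_max)·e·(1+ε))`. -/
theorem rematching_asymmetric {G A : Type*} [Fintype G] [DecidableEq G]
    [Fintype A] [DecidableEq A]
    (n m : ℕ) (hn : n = Fintype.card A) (hm : m = Fintype.card G)
    (hn1 : 1 ≤ n) (hnm : n ≤ m)
    (w : A → ℝ) (hw : ∀ i, 0 < w i) (hwsum : ∑ i, w i = 1)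
    (wmax : ℝ) (hwmax : ∀ i, w i ≤ wmax) (hwmax' : ∃ i, w i = wmax)
    (v : A → Finset G → ℝ)
    (hmono : ∀ i, ∀ S T : Finset G, S ⊆ T → v i S ≤ v i T)
    (hsubmod : ∀ i, ∀ S T : Finset G, v i (S ∩ T) + v i (S ∪ T) ≤ v i S + v i T)
    (hv0 : ∀ i, v i ∅ = 0)
    (OPT : ℝ) (hOPTpos : 0 < OPT)
    (hOPTub : ∀ P : A → Finset G, (∀ i k, i ≠ k → Disjoint (P i) (P k)) →
      Finset.univ.biUnion P = (univ : Finset G) →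
      ∏ i, v i (P i) ^ (w i) ≤ OPT)
    (hOPTex : ∃ P : A → Finset G, (∀ i k, i ≠ k → Disjoint (P i) (P k)) ∧
      Finset.univ.biUnion P = (univ : Finset G) ∧
      ∏ i, v i (P i) ^ (w i) = OPT)
    (τ : A → G) (hτinj : Function.Injective τ)
    (hτopt : ∀ τ' : A → G, Function.Injective τ' →
      ∏ i, v i {τ' i} ^ (w i) ≤ ∏ i, v i {τ i} ^ (w i))
    (H J : Finset G) (hH : H = Finset.univ.image τ) (hJ : J = univ \ H)
    (Abar : Finset A) (hAbar : Abar = univ.filter (fun i => 0 < v i J))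
    (ℓ : A → G) (hℓ : ∀ i ∈ Abar, ℓ i ∈ J ∧ ∀ j ∈ J, v i {j} ≤ v i {ℓ i})
    (vb : A → Finset G → ℝ) (hvb : ∀ i S, vb i S = v i {ℓ i} + v i S)
    (ε' ε : ℝ) (hε' : 0 ≤ ε') (hε : ε = (1 + ε') ^ m - 1)
    (R : A → Finset G)
    (hRsub : ∀ i, R i ⊆ J) (hRout : ∀ i ∉ Abar, R i = ∅)
    (hRdisj : ∀ i k, i ≠ k → Disjoint (R i) (R k))
    (hRcover : Abar.biUnion R = J)
    (hloc : ∀ i ∈ Abar, ∀ k ∈ Abar, i ≠ k → ∀ j ∈ R i,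
      (vb i ((R i).erase j) / vb i (R i)) ^ (w i) *
        (vb k (R k ∪ {j}) / vb k (R k)) ^ (w k) ≤ 1 + ε') :
    ∃ ρ : A → Option G,
      (∀ (i : A), ∀ g ∈ ρ i, g ∈ H) ∧
      (∀ (i k : A) (g : G), ρ i = some g → ρ k = some g → i = k) ∧
      OPT / ((2 + n * wmax) * Real.exp 1 * (1 + ε))
        ≤ ∏ i, v i (R i ∪ (ρ i).toFinset) ^ (w i) :=
  rematching_asymmetric_general n m hn hm w hw hwsum wmax hwmax hwmax' v hmono hsubmod hv0 OPT
    hOPTpos hOPTex τ hτinj hτopt H J hH hJ Abar hAbar ℓ hℓ vb hvb ε' ε hε' hε R hRsub hRcover hloc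
end

section
/- Define φ : [0,∞) → ℝ by φ(ν) := sup_{x ∈ (0,1]} 2^{1−x}·(1 + ν/x)^x. Then φ(ν) ≤ ν + 2 for every ν ≥ 0, and φ(ν) = ν + 1 for every ν ≥ 3.5. -/
/-!
For every `ν ≥ 0`, weighted AM-GM gives `2^{1-x} (1 + ν/x)^x ≤ (1 - x)·2 + x·(1 + ν/x) = ν + 2 - x`.

For `ν ≥ 7/2` put `c = (ν + 1)/2 ≥ 9/4` and `t = 1/x ≥ 1`. The bound `2^{1-x} (1 + ν/x)^x ≤ ν + 1`
becomes `1 + (2c - 1) t ≤ 2 c^t`. Both sides agree at `t = 1`, and the tangent line of the convex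
right-hand side at `t = 1` has slope `2c log c ≥ 2c - 1` as soon as `log c ≥ 1 - 1/(2c)`, which holds
for `c ≥ 9/4` because `log (9/4) ≥ 7/9`. The value `ν + 1` itself is attained at `x = 1`.
-/

open Real

lemma seven_div_nine_le_log_nine_div_four : (7 : ℝ) / 9 ≤ log (9 / 4) := by
  rw [le_log_iff_exp_le (by norm_num)]
  have hpow : exp (7 / 9) ^ 9 = exp 1 ^ 7 := by
    rw [← exp_nat_mul, exp_one_pow]
    norm_num
  have hle : exp (7 / 9) ^ 9 ≤ (9 / 4 : ℝ) ^ 9 :=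
    calc exp (7 / 9) ^ 9 = exp 1 ^ 7 := hpow
      _ ≤ 2.7182818286 ^ 7 := pow_le_pow_left₀ (exp_pos 1).le exp_one_lt_d9.le 7
      _ ≤ (9 / 4) ^ 9 := by norm_num
  exact le_of_pow_le_pow_left₀ (by norm_num) (by norm_num) hle

lemma two_mul_sub_one_le_two_mul_mul_log {c : ℝ} (hc : 9 / 4 ≤ c) :
    2 * c - 1 ≤ 2 * c * log c := by
  have hc0 : 0 < c := by linarith
  have hsplit : log c = log (9 / 4) + log (4 * c / 9) := by
    rw [← log_mul (by norm_num) (by positivity)]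
    ring_nf
  have hrest : 1 - 9 / (4 * c) ≤ log (4 * c / 9) := by
    simpa only [inv_div] using one_sub_inv_le_log_of_pos (x := 4 * c / 9) (by positivity)
  have hlog : 1 - 1 / (2 * c) ≤ log c := by
    have hsmall : 7 / 4 / c ≤ 7 / 9 := by rw [div_le_iff₀ hc0]; linarith
    have hlog94 := seven_div_nine_le_log_nine_div_four
    calc 1 - 1 / (2 * c) = 1 - 9 / (4 * c) + 7 / 4 / c := by field_simp; ring
      _ ≤ log c := by linarith
  calc 2 * c - 1 = 2 * c * (1 - 1 / (2 * c)) := by field_simp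
    _ ≤ 2 * c * log c := by gcongr

lemma mul_one_add_mul_log_le_rpow {a : ℝ} (ha : 0 < a) (s : ℝ) :
    a * (1 + s * log a) ≤ a ^ (1 + s) := by
  rw [rpow_add ha, rpow_one, rpow_def_of_pos ha, mul_comm (log a)]
  gcongr
  linarith [add_one_le_exp (s * log a)]

lemma one_add_mul_le_two_mul_rpow {c t : ℝ} (hc : 9 / 4 ≤ c) (ht : 1 ≤ t) :
    1 + (2 * c - 1) * t ≤ 2 * c ^ t := by
  have htangent := mul_one_add_mul_log_le_rpow (by linarith : 0 < c) (t - 1)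
  rw [add_sub_cancel] at htangent
  nlinarith [mul_le_mul_of_nonneg_right (two_mul_sub_one_le_two_mul_mul_log hc)
    (sub_nonneg.2 ht)]

lemma two_rpow_one_sub_mul_one_add_div_rpow_le_add_two {ν x : ℝ} (hν : 0 ≤ ν) (hx : 0 < x)
    (hx1 : x ≤ 1) : (2 : ℝ) ^ (1 - x) * (1 + ν / x) ^ x ≤ ν + 2 := by
  have hamgm := geom_mean_le_arith_mean2_weighted (sub_nonneg.2 hx1) hx.le zero_le_two
    (by positivity : 0 ≤ 1 + ν / x) (sub_add_cancel 1 x)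
  calc (2 : ℝ) ^ (1 - x) * (1 + ν / x) ^ x ≤ (1 - x) * 2 + x * (1 + ν / x) := hamgm
    _ = ν + 2 - x := by rw [mul_add, mul_div_cancel₀ _ hx.ne']; ring
    _ ≤ ν + 2 := by linarith

lemma two_rpow_one_sub_mul_one_add_div_rpow_le_add_one {ν x : ℝ} (hν : 7 / 2 ≤ ν) (hx : 0 < x)
    (hx1 : x ≤ 1) : (2 : ℝ) ^ (1 - x) * (1 + ν / x) ^ x ≤ ν + 1 := by
  set c := (ν + 1) / 2 with hc
  have hc0 : 0 < c := by linarith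
  have hbase : 1 + ν / x ≤ 2 * c ^ x⁻¹ := by
    have hct := one_add_mul_le_two_mul_rpow (by linarith : 9 / 4 ≤ c) (one_le_inv_iff₀.2 ⟨hx, hx1⟩)
    convert hct using 2
    rw [hc, div_eq_mul_inv]
    ring
  calc (2 : ℝ) ^ (1 - x) * (1 + ν / x) ^ x ≤ 2 ^ (1 - x) * (2 * c ^ x⁻¹) ^ x := by
        gcongr
    _ = 2 ^ (1 - x + x) * c := by
        rw [mul_rpow zero_le_two (by positivity), rpow_inv_rpow hc0.le hx.ne', rpow_add two_pos]
        ring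
    _ = ν + 1 := by rw [sub_add_cancel, rpow_one, hc]; ring

/-- Define `φ(ν) := sup_{x ∈ (0,1]} 2^{1−x}·(1 + ν/x)^x`.
Then `φ(ν) ≤ ν + 2` for every `ν ≥ 0`, and `φ(ν) = ν + 1` for every `ν ≥ 3.5`. -/
theorem phi_bounds (φ : ℝ → ℝ)
    (hφ : ∀ ν : ℝ, φ ν =
      sSup ((fun x : ℝ => (2 : ℝ) ^ (1 - x) * (1 + ν / x) ^ x) '' Set.Ioc 0 1)) :
    (∀ ν : ℝ, 0 ≤ ν → φ ν ≤ ν + 2) ∧ (∀ ν : ℝ, (3.5 : ℝ) ≤ ν → φ ν = ν + 1) := by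
  refine ⟨fun ν hν => ?_, fun ν hν => ?_⟩
  · rw [hφ]
    refine Real.sSup_le (Set.forall_mem_image.2 fun x hx => ?_) (by linarith)
    exact two_rpow_one_sub_mul_one_add_div_rpow_le_add_two hν hx.1 hx.2
  · rw [hφ]
    refine IsGreatest.csSup_eq ⟨⟨1, Set.right_mem_Ioc.2 one_pos, ?_⟩, ?_⟩
    · simp only [sub_self, rpow_zero, div_one, rpow_one]
      ring
    · refine Set.forall_mem_image.2 fun x hx => ?_
      exact two_rpow_one_sub_mul_one_add_div_rpow_le_add_one (by norm_num at hν ⊢; linarith)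
        hx.1 hx.2
end

section
/- Let R = (R_i)_{i∈Ā} be an ε̄-local optimum with respect to the endowed valuations v̄_i, with prices p_j as defined. Then for every agent i ∈ Ā and every set S ⊆ J, v_i(S) / max{ v_i(R_i), v_i(ℓ(i)) } ≤ −1 + 2·(1+ε̄)^{|S|/w_i} · e^{p(S)/w_i}. -/
open Finset Real

/-! Moving an item `j` from its owner to agent `i` is not improving, which in logarithmic form
says `w_i · log (v̄_i(R_i ∪ {j}) / v̄_i(R_i)) ≤ log (1 + ε̄) + p_j`. Hence the marginal value of `j`
for `i` is at most `v̄_i(R_i) · (x_j - 1)` with `x_j = exp ((log (1 + ε̄) + p_j) / w_i) ≥ 1`.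
Submodularity adds these marginals up over `S`, `∑ (x_j - 1) ≤ ∏ x_j - 1`, and the product is
`(1 + ε̄)^{|S|/w_i} e^{p(S)/w_i}`; finally `v̄_i(R_i) ≤ 2 max {v_i(R_i), v_i(ℓ(i))}`. -/

theorem Finset.sum_sub_one_le_prod_sub_one {ι : Type*} (s : Finset ι)
    {x : ι → ℝ} (hx : ∀ i ∈ s, 1 ≤ x i) : ∑ i ∈ s, (x i - 1) ≤ ∏ i ∈ s, x i - 1 := by
  classical
  induction s using Finset.induction_on with
  | empty => simp
  | @insert a s ha ih =>
    have hs : ∀ i ∈ s, 1 ≤ x i := fun i hi => hx i (mem_insert_of_mem hi)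
    have hprod : 1 ≤ ∏ i ∈ s, x i := Finset.one_le_prod hs
    rw [sum_insert ha, prod_insert ha]
    nlinarith [ih hs, hx a (mem_insert_self a s)]

section SetFunction

variable {J : Type*} [DecidableEq J] (v : Finset J → ℝ)

theorem union_le_add_sum_marginal_of_submodular
    (hsub : ∀ S T : Finset J, v (S ∩ T) + v (S ∪ T) ≤ v S + v T) (B T : Finset J) :
    v (B ∪ T) ≤ v B + ∑ j ∈ T, (v (B ∪ {j}) - v B) := by
  induction T using Finset.induction_on with
  | empty => simp
  | @insert a s ha ih =>
    have hinter : (B ∪ s) ∩ (B ∪ {a}) = B := by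
      rw [← union_inter_distrib_left, inter_singleton_of_notMem ha, union_empty]
    have hunion : (B ∪ s) ∪ (B ∪ {a}) = B ∪ insert a s := by
      ext; simp only [mem_union, mem_insert, mem_singleton]; tauto
    have := hsub (B ∪ s) (B ∪ {a})
    rw [hinter, hunion] at this
    rw [sum_insert ha]
    linarith

theorem le_sum_singleton_of_submodular
    (hsub : ∀ S T : Finset J, v (S ∩ T) + v (S ∪ T) ≤ v S + v T) (h0 : v ∅ = 0)
    (T : Finset J) : v T ≤ ∑ j ∈ T, v {j} := by
  simpa [h0] using union_le_add_sum_marginal_of_submodular v hsub ∅ T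

theorem singleton_pos_of_forall_singleton_le [Fintype J]
    (hsub : ∀ S T : Finset J, v (S ∩ T) + v (S ∪ T) ≤ v S + v T) (h0 : v ∅ = 0)
    (huniv : 0 < v univ) {ℓ : J} (hℓ : ∀ j, v {j} ≤ v {ℓ}) : 0 < v {ℓ} := by
  by_contra! h
  have : ∑ j, v {j} ≤ 0 := sum_nonpos fun j _ => (hℓ j).trans h
  linarith [le_sum_singleton_of_submodular v hsub h0 univ]

theorem le_add_mul_prod_sub_one_of_submodular
    (hmono : ∀ S T : Finset J, S ⊆ T → v S ≤ v T)
    (hsub : ∀ S T : Finset J, v (S ∩ T) + v (S ∪ T) ≤ v S + v T)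
    {B : Finset J} {c : ℝ} (hc : 0 ≤ c) {x : J → ℝ} (S : Finset J) (hx : ∀ j ∈ S, 1 ≤ x j)
    (hmarginal : ∀ j ∈ S, v (B ∪ {j}) - v B ≤ c * (x j - 1)) :
    v S ≤ v B + c * (∏ j ∈ S, x j - 1) := calc
  v S ≤ v (B ∪ S) := hmono _ _ subset_union_right
  _ ≤ v B + ∑ j ∈ S, (v (B ∪ {j}) - v B) := union_le_add_sum_marginal_of_submodular v hsub B S
  _ ≤ v B + c * ∑ j ∈ S, (x j - 1) := by
    rw [mul_sum]; gcongr with j hj; exact hmarginal j hj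
  _ ≤ v B + c * (∏ j ∈ S, x j - 1) := by
    gcongr; exact S.sum_sub_one_le_prod_sub_one hx

end SetFunction

theorem prod_exp_log_add_div {ι : Type*} (s : Finset ι) {c : ℝ} (hc : 0 < c) (p : ι → ℝ)
    (w : ℝ) :
    ∏ j ∈ s, exp ((log c + p j) / w) = c ^ ((s.card : ℝ) / w) * exp ((∑ j ∈ s, p j) / w) := by
  rw [← exp_sum, rpow_def_of_pos hc, ← exp_add, ← sum_div, sum_add_distrib, sum_const,
    nsmul_eq_mul]
  ring_nf

theorem le_mul_exp_of_mul_log_div_le {c d w L : ℝ} (hc : 0 < c) (hd : 0 < d) (hw : 0 < w)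
    (h : w * log (c / d) ≤ L) : c ≤ d * exp (L / w) := by
  rw [← div_le_iff₀' hd, ← log_le_iff_le_exp (div_pos hc hd), le_div_iff₀' hw]
  exact h

section LocalOptimum

variable {J A : Type*} [DecidableEq J] (w : A → ℝ) (vb : A → Finset J → ℝ) (R : A → Finset J)
  (owner : J → A) (ε' : ℝ) (p : J → ℝ)

theorem price_nonneg (hw : ∀ i, 0 < w i) (hvb_pos : ∀ i S, 0 < vb i S)
    (hvb_mono : ∀ i S T, S ⊆ T → vb i S ≤ vb i T)
    (hp : ∀ j : J, p j = w (owner j) *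
      log (vb (owner j) (R (owner j)) / vb (owner j) ((R (owner j)).erase j))) (j : J) :
    0 ≤ p j := by
  rw [hp j]
  refine mul_nonneg (hw _).le (log_nonneg ?_)
  rw [one_le_div (hvb_pos _ _)]
  exact hvb_mono _ _ _ (erase_subset _ _)

theorem mul_log_marginal_le (hvb_pos : ∀ i S, 0 < vb i S)
    (howner : ∀ j : J, j ∈ R (owner j)) (hε' : 0 ≤ ε')
    (hloc : ∀ i k, i ≠ k → ∀ j ∈ R i,
      (vb i ((R i).erase j) / vb i (R i)) ^ (w i) *
        (vb k (R k ∪ {j}) / vb k (R k)) ^ (w k) ≤ 1 + ε')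
    (hp : ∀ j : J, p j = w (owner j) *
      log (vb (owner j) (R (owner j)) / vb (owner j) ((R (owner j)).erase j)))
    (hp_nonneg : ∀ j, 0 ≤ p j) (i : A) (j : J) :
    w i * log (vb i (R i ∪ {j}) / vb i (R i)) ≤ log (1 + ε') + p j := by
  by_cases hij : owner j = i
  · have : R i ∪ {j} = R i := union_eq_left.mpr (singleton_subset_iff.mpr (hij ▸ howner j))
    rw [this, div_self (hvb_pos i _).ne', log_one, mul_zero]
    exact add_nonneg (log_nonneg (by linarith)) (hp_nonneg j)
  · set o := owner j
    have hb := hvb_pos o (R o)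
    have ha := hvb_pos o ((R o).erase j)
    have hc := hvb_pos i (R i ∪ {j})
    have hd := hvb_pos i (R i)
    have hlog := log_le_log (by positivity) (hloc o i hij j (howner j))
    rw [log_mul (by positivity) (by positivity), log_rpow (by positivity),
      log_rpow (by positivity), ← inv_div, log_inv] at hlog
    linarith [hp j]

end LocalOptimum

theorem asymmetric_price_bound_general {J A : Type*} [Fintype J] [DecidableEq J]
    (w : A → ℝ) (hw : ∀ i, 0 < w i)
    (v : A → Finset J → ℝ)
    (hmono : ∀ i, ∀ S T : Finset J, S ⊆ T → v i S ≤ v i T)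
    (hsubmod : ∀ i, ∀ S T : Finset J, v i (S ∩ T) + v i (S ∪ T) ≤ v i S + v i T)
    (hv0 : ∀ i, v i ∅ = 0) (hvJ : ∀ i, 0 < v i (univ : Finset J))
    (ℓ : A → J) (hℓ : ∀ i, ∀ j : J, v i {j} ≤ v i {ℓ i})
    (vb : A → Finset J → ℝ) (hvb : ∀ i S, vb i S = v i {ℓ i} + v i S)
    (R : A → Finset J)
    (owner : J → A) (howner : ∀ j : J, j ∈ R (owner j))
    (ε' : ℝ) (hε' : 0 ≤ ε')
    (hloc : ∀ i k, i ≠ k → ∀ j ∈ R i,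
      (vb i ((R i).erase j) / vb i (R i)) ^ (w i) *
        (vb k (R k ∪ {j}) / vb k (R k)) ^ (w k) ≤ 1 + ε')
    (p : J → ℝ)
    (hp : ∀ j : J, p j = w (owner j) *
      Real.log (vb (owner j) (R (owner j)) / vb (owner j) ((R (owner j)).erase j))) :
    ∀ (i : A) (S : Finset J),
      v i S / max (v i (R i)) (v i {ℓ i})
        ≤ -1 + 2 * ((1 + ε') ^ ((S.card : ℝ) / w i) *
            Real.exp ((∑ j ∈ S, p j) / w i)) := by
  intro i S
  have hℓ_pos m : 0 < v m {ℓ m} :=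
    singleton_pos_of_forall_singleton_le _ (hsubmod m) (hv0 m) (hvJ m) (hℓ m)
  have hv_nonneg m T : 0 ≤ v m T := hv0 m ▸ hmono m ∅ T (empty_subset T)
  have hvb_pos m T : 0 < vb m T := hvb m T ▸ add_pos_of_pos_of_nonneg (hℓ_pos m) (hv_nonneg m T)
  have hvb_mono m S T (hST : S ⊆ T) : vb m S ≤ vb m T := by
    simpa only [hvb, add_le_add_iff_left] using hmono m S T hST
  have hp_nonneg := price_nonneg w vb R owner p hw hvb_pos hvb_mono hp
  set x := fun j => exp ((log (1 + ε') + p j) / w i)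
  have hx j : 1 ≤ x j := one_le_exp (div_nonneg (add_nonneg (log_nonneg (by linarith))
    (hp_nonneg j)) (hw i).le)
  have hmarginal j : v i (R i ∪ {j}) - v i (R i) ≤ vb i (R i) * (x j - 1) := by
    have := le_mul_exp_of_mul_log_div_le (hvb_pos _ _) (hvb_pos _ _) (hw i)
      (mul_log_marginal_le w vb R owner ε' p hvb_pos howner hε' hloc hp hp_nonneg i j)
    rw [hvb, hvb] at this
    change _ ≤ _ * (exp _ - 1)
    rw [hvb]
    linarith
  have hbound := le_add_mul_prod_sub_one_of_submodular (v i) (hmono i) (hsubmod i)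
    (hvb_pos i (R i)).le S (fun j _ => hx j) (fun j _ => hmarginal j)
  rw [← prod_exp_log_add_div S (by linarith) p, div_le_iff₀ (lt_max_of_lt_right (hℓ_pos i))]
  have hvbR : vb i (R i) ≤ 2 * max (v i (R i)) (v i {ℓ i}) := by
    rw [hvb]; linarith [le_max_left (v i (R i)) (v i {ℓ i}), le_max_right (v i (R i)) (v i {ℓ i})]
  have hprod : 0 ≤ ∏ j ∈ S, x j - 1 := sub_nonneg.mpr (Finset.one_le_prod fun j _ => hx j)
  nlinarith [mul_le_mul_of_nonneg_right hvbR hprod, le_max_left (v i (R i)) (v i {ℓ i})]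

/-- (Price bound for arbitrary sets, asymmetric case.)
For an `ε̄`-local optimum `R` with prices `p`, for every agent `i` and every `S ⊆ J`,
`v_i(S) / max{v_i(R_i), v_i(ℓ(i))} ≤ −1 + 2·(1+ε̄)^{|S|/w_i} · e^{p(S)/w_i}`. -/
theorem asymmetric_price_bound {J A : Type*} [Fintype J] [DecidableEq J]
    [Fintype A] [Nonempty A]
    (w : A → ℝ) (hw : ∀ i, 0 < w i) (hwsum : ∑ i, w i ≤ 1)
    (v : A → Finset J → ℝ)
    (hmono : ∀ i, ∀ S T : Finset J, S ⊆ T → v i S ≤ v i T)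
    (hsubmod : ∀ i, ∀ S T : Finset J, v i (S ∩ T) + v i (S ∪ T) ≤ v i S + v i T)
    (hv0 : ∀ i, v i ∅ = 0) (hvJ : ∀ i, 0 < v i (univ : Finset J))
    (ℓ : A → J) (hℓ : ∀ i, ∀ j : J, v i {j} ≤ v i {ℓ i})
    (vb : A → Finset J → ℝ) (hvb : ∀ i S, vb i S = v i {ℓ i} + v i S)
    (R : A → Finset J)
    (hdisj : ∀ i k, i ≠ k → Disjoint (R i) (R k))
    (owner : J → A) (howner : ∀ j : J, j ∈ R (owner j))
    (ε' : ℝ) (hε' : 0 ≤ ε')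
    (hloc : ∀ i k, i ≠ k → ∀ j ∈ R i,
      (vb i ((R i).erase j) / vb i (R i)) ^ (w i) *
        (vb k (R k ∪ {j}) / vb k (R k)) ^ (w k) ≤ 1 + ε')
    (p : J → ℝ)
    (hp : ∀ j : J, p j = w (owner j) *
      Real.log (vb (owner j) (R (owner j)) / vb (owner j) ((R (owner j)).erase j))) :
    ∀ (i : A) (S : Finset J),
      v i S / max (v i (R i)) (v i {ℓ i})
        ≤ -1 + 2 * ((1 + ε') ^ ((S.card : ℝ) / w i) *
            Real.exp ((∑ j ∈ S, p j) / w i)) :=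
  asymmetric_price_bound_general w hw v hmono hsubmod hv0 hvJ ℓ hℓ vb hvb R owner howner ε' hε' hloc
    p hp
end

section
/- Let ε ≥ 0, let m be a positive integer with |J| ≤ m, and set ε̄ := (1+ε)^{1/m} − 1. Let R = (R_i)_{i∈Ā} be an ε̄-local optimum with respect to the endowed valuations v̄_i. Let (S_i)_{i∈A} be any partition of J among all agents of A, and let h_i ≥ 0 (i ∈ A) be reals with Σ_{i∈A} h_i ≤ n. Then ∏_{i ∈ A∖Ā} h_i^{w_i} · ∏_{i∈Ā} ( v_i(S_i) / max{ v_i(ℓ(i)), v_i(R_i) } + h_i )^{w_i} ≤ (1+ε)·φ(n·w_max)·e, where φ(ν) := sup_{x ∈ (0,1]} 2^{1−x}·(1 + ν/x)^x. -/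
/-!
Write `y_k := v̄_k(S_k) / v̄_k(R_k)`. Since
`v_k(S_k) / max (v_k(ℓ(k))) (v_k(R_k)) ≤ 2 max y_k 1 - 1`, each factor of the left side is at most
`max y_k 1 * max 2 (1 + h_k)`.

By submodularity `y_k` is at most the product of the gains `v̄_k(R_k ∪ {j}) / v̄_k(R_k)` over the
items `j ∈ S_k \ R_k`, and local optimality bounds each such gain, raised to `w_k`, by `1 + ε̄`
times the weighted loss of the owner of `j` from giving `j` away. The endowment `v_i(ℓ(i))` caps
each owner's total log-loss by `1`, so `∏ max y_k 1 ^ w_k ≤ (1 + ε̄) ^ |J| * e ≤ (1 + ε) * e`.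

The agents with `h_k > 1`, of total weight `x`, contribute at most `(1 + n w_max / x) ^ x` by
weighted AM-GM, and the others contribute `2 ^ (1 - x)`; hence
`∏ max 2 (1 + h_k) ^ w_k ≤ φ(n w_max)`.
-/

open Finset Real

def Submodular {α : Type*} [DecidableEq α] (f : Finset α → ℝ) : Prop :=
  ∀ S T, f (S ∩ T) + f (S ∪ T) ≤ f S + f T

theorem one_add_sum_sub_one_le_prod {ι : Type*} (s : Finset ι) {x : ι → ℝ}
    (hx : ∀ i ∈ s, 1 ≤ x i) : 1 + ∑ i ∈ s, (x i - 1) ≤ ∏ i ∈ s, x i := by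
  classical
  induction s using Finset.induction_on with
  | empty => simp
  | @insert j s hj ih =>
    rw [sum_insert hj, prod_insert hj]
    have hxj := hx j (mem_insert_self j s)
    have ih := ih fun i hi => hx i (mem_insert_of_mem hi)
    nlinarith [sum_nonneg fun i hi => sub_nonneg.2 (hx i (mem_insert_of_mem hi))]

namespace Submodular

variable {α : Type*} [DecidableEq α] {f : Finset α → ℝ}

theorem const_add (hf : Submodular f) (c : ℝ) : Submodular fun T => c + f T :=
  fun S T => by linarith [hf S T]

theorem le_add_sum_insert_sub (hf : Submodular f) (R T : Finset α) :
    f (R ∪ T) ≤ f R + ∑ j ∈ T, (f (insert j R) - f R) := by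
  induction T using Finset.induction_on with
  | empty => simp
  | @insert j T hj ih =>
    have hinter : insert j R ∩ (R ∪ T) = R := by
      ext x; simp only [mem_inter, mem_insert, mem_union]; grind
    have hunion : insert j R ∪ (R ∪ T) = R ∪ insert j T := by
      ext x; simp only [mem_union, mem_insert]; tauto
    have := hf (insert j R) (R ∪ T)
    rw [hinter, hunion] at this
    rw [sum_insert hj]
    linarith

theorem sum_sub_erase_le (hf : Submodular f) {R T : Finset α} (hTR : T ⊆ R) :
    ∑ j ∈ T, (f R - f (R.erase j)) ≤ f R - f (R \ T) := by
  induction T using Finset.induction_on with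
  | empty => simp
  | @insert j T hj ih =>
    have hjR : j ∈ R := hTR (mem_insert_self j T)
    have hinter : R.erase j ∩ (R \ T) = R \ insert j T := by
      ext x; simp only [mem_inter, mem_erase, mem_sdiff, mem_insert]; tauto
    have hunion : R.erase j ∪ (R \ T) = R := by
      ext x; simp only [mem_union, mem_erase, mem_sdiff]; grind
    have := hf (R.erase j) (R \ T)
    rw [hinter, hunion] at this
    rw [sum_insert hj]
    linarith [ih ((subset_insert j T).trans hTR)]

theorem le_sum_singleton (hf : Submodular f) (h0 : f ∅ = 0) (T : Finset α) :
    f T ≤ ∑ j ∈ T, f {j} := by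
  simpa [h0] using hf.le_add_sum_insert_sub ∅ T

theorem pos_of_singleton_le [Fintype α] (hf : Submodular f) (h0 : f ∅ = 0) (huniv : 0 < f univ)
    {a : ℝ} (ha : ∀ j, f {j} ≤ a) : 0 < a := by
  have hcard : 0 < Fintype.card α * a := calc
    0 < f univ := huniv
    _ ≤ ∑ j, f {j} := hf.le_sum_singleton h0 univ
    _ ≤ ∑ _j : α, a := sum_le_sum fun j _ => ha j
    _ = Fintype.card α * a := by rw [sum_const, card_univ, nsmul_eq_mul]
  exact pos_of_mul_pos_right hcard (Nat.cast_nonneg _)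

theorem div_le_prod_div_insert (hf : Submodular f) (hmono : Monotone f) {R : Finset α}
    (hR : 0 < f R) (S : Finset α) : f S / f R ≤ ∏ j ∈ S \ R, f (insert j R) / f R := by
  have hS : f S ≤ f R + ∑ j ∈ S \ R, (f (insert j R) - f R) :=
    (hmono (by simp : S ⊆ R ∪ S \ R)).trans (hf.le_add_sum_insert_sub R (S \ R))
  calc f S / f R ≤ 1 + ∑ j ∈ S \ R, (f (insert j R) / f R - 1) := by
        rw [div_le_iff₀ hR, add_mul, one_mul, sum_mul]
        refine hS.trans_eq (congrArg _ (sum_congr rfl fun j _ => ?_))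
        rw [sub_mul, div_mul_cancel₀ _ hR.ne', one_mul]
    _ ≤ ∏ j ∈ S \ R, f (insert j R) / f R :=
        one_add_sum_sub_one_le_prod _ fun j _ => (one_le_div hR).2 (hmono (subset_insert j R))

/-- With `d_j := f R - f (R.erase j) ∈ [0, min a (f R)]`, each summand is at most
`d_j / max a (f R)`, and the `d_j` sum to at most `f R`. -/
theorem sum_log_div_erase_le_one (hf : Submodular f) (hmono : Monotone f) (h0 : f ∅ = 0)
    {a : ℝ} (ha : 0 < a) {R : Finset α} (hRa : ∀ j ∈ R, f {j} ≤ a) :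
    ∑ j ∈ R, log ((a + f R) / (a + f (R.erase j))) ≤ 1 := by
  have hnonneg : ∀ T, 0 ≤ f T := fun T => h0 ▸ hmono (empty_subset T)
  have hM : 0 < max a (f R) := lt_max_of_lt_left ha
  have hterm : ∀ j ∈ R, log ((a + f R) / (a + f (R.erase j)))
      ≤ (f R - f (R.erase j)) / max a (f R) := by
    intro j hj
    have hsub := hf {j} (R.erase j)
    rw [singleton_inter_of_notMem (notMem_erase j R), ← insert_eq, insert_erase hj, h0] at hsub
    have hpos : 0 < a + f (R.erase j) := by linarith [hnonneg (R.erase j)]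
    have hle : max a (f R) ≤ a + f (R.erase j) :=
      max_le (by linarith [hnonneg (R.erase j)]) (by linarith [hRa j hj, hnonneg {j}])
    calc log ((a + f R) / (a + f (R.erase j)))
        ≤ (a + f R) / (a + f (R.erase j)) - 1 :=
          log_le_sub_one_of_pos (div_pos (by linarith [hnonneg R]) hpos)
      _ = (f R - f (R.erase j)) / (a + f (R.erase j)) := by field_simp; ring
      _ ≤ (f R - f (R.erase j)) / max a (f R) :=
        div_le_div_of_nonneg_left (by linarith [hmono (erase_subset j R)]) hM hle
  calc ∑ j ∈ R, log ((a + f R) / (a + f (R.erase j)))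
      ≤ ∑ j ∈ R, (f R - f (R.erase j)) / max a (f R) := sum_le_sum hterm
    _ ≤ f R / max a (f R) := by
        rw [← sum_div]
        gcongr
        simpa [h0] using hf.sum_sub_erase_le (subset_refl R)
    _ ≤ 1 := div_le_one_of_le₀ (le_max_right _ _) hM.le

end Submodular

def IsLocalOptimum {ι α : Type*} [DecidableEq α] (s : Finset ι) (w : ι → ℝ)
    (f : ι → Finset α → ℝ) (R : ι → Finset α) (δ : ℝ) : Prop :=
  ∀ i ∈ s, ∀ k ∈ s, i ≠ k → ∀ j ∈ R i,
    (f i ((R i).erase j) / f i (R i)) ^ w i * (f k (R k ∪ {j}) / f k (R k)) ^ w k ≤ 1 + δ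

namespace IsLocalOptimum

variable {ι α : Type*} [DecidableEq α] {s : Finset ι} {w : ι → ℝ} {f : ι → Finset α → ℝ}
  {R : ι → Finset α} {δ : ℝ}

theorem mul_log_div_insert_le (hR : IsLocalOptimum s w f R δ) (hpos : ∀ i ∈ s, ∀ T, 0 < f i T)
    {i k : ι} (hi : i ∈ s) (hk : k ∈ s) (hik : i ≠ k) {j : α} (hj : j ∈ R i) :
    w k * log (f k (insert j (R k)) / f k (R k))
      ≤ log (1 + δ) + w i * log (f i (R i) / f i ((R i).erase j)) := by
  have hA : 0 < f i ((R i).erase j) / f i (R i) := div_pos (hpos i hi _) (hpos i hi _)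
  have hB : 0 < f k (R k ∪ {j}) / f k (R k) := div_pos (hpos k hk _) (hpos k hk _)
  have hlog := log_le_log (by positivity) (hR i hi k hk hik j hj)
  rw [log_mul (by positivity) (by positivity), log_rpow hA, log_rpow hB, union_singleton] at hlog
  rw [← inv_div (f i ((R i).erase j)), log_inv]
  linarith

theorem mul_log_max_div_le_sum (hR : IsLocalOptimum s w f R δ) (hδ : 0 ≤ δ)
    (hw : ∀ i ∈ s, 0 ≤ w i) (hpos : ∀ i ∈ s, ∀ T, 0 < f i T)
    (hmono : ∀ i ∈ s, Monotone (f i)) (hsub : ∀ i ∈ s, Submodular (f i))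
    {o : α → ι} (hos : ∀ j, o j ∈ s) (hoR : ∀ j, j ∈ R (o j)) {k : ι} (hk : k ∈ s)
    (S : Finset α) :
    w k * log (max (f k S / f k (R k)) 1) ≤ ∑ j ∈ S \ R k,
      (log (1 + δ) + w (o j) * log (f (o j) (R (o j)) / f (o j) ((R (o j)).erase j))) := by
  have hRk := hpos k hk (R k)
  rcases le_total (f k S / f k (R k)) 1 with hle | hle
  · rw [max_eq_right hle, log_one, mul_zero]
    refine sum_nonneg fun j _ => add_nonneg (log_nonneg (by linarith)) <|
      mul_nonneg (hw _ (hos j)) <| log_nonneg <|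
        (one_le_div (hpos _ (hos j) _)).2 (hmono _ (hos j) (erase_subset j _))
  rw [max_eq_left hle]
  calc w k * log (f k S / f k (R k))
      ≤ w k * ∑ j ∈ S \ R k, log (f k (insert j (R k)) / f k (R k)) := by
        refine mul_le_mul_of_nonneg_left ?_ (hw k hk)
        rw [← log_prod fun j _ => (div_pos (hpos k hk _) hRk).ne']
        exact log_le_log (div_pos (hpos k hk _) hRk)
          ((hsub k hk).div_le_prod_div_insert (hmono k hk) hRk S)
    _ ≤ _ := by
        rw [mul_sum]
        refine sum_le_sum fun j hj => ?_
        have hne : o j ≠ k := fun h => (mem_sdiff.1 hj).2 (h ▸ hoR j)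
        exact hR.mul_log_div_insert_le hpos (hos j) hk hne (hoR j)

variable [Fintype α]

theorem sum_mul_log_max_div_le (hR : IsLocalOptimum s w f R δ) (hδ : 0 ≤ δ)
    (hw : ∀ i ∈ s, 0 ≤ w i) (hws : ∑ i ∈ s, w i ≤ 1) (hpos : ∀ i ∈ s, ∀ T, 0 < f i T)
    (hmono : ∀ i ∈ s, Monotone (f i)) (hsub : ∀ i ∈ s, Submodular (f i))
    (hdisj : (s : Set ι).PairwiseDisjoint R) (hcover : s.biUnion R = univ)
    (hloss : ∀ i ∈ s, ∑ j ∈ R i, log (f i (R i) / f i ((R i).erase j)) ≤ 1)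
    {S : ι → Finset α} (hS : (s : Set ι).PairwiseDisjoint S) :
    ∑ k ∈ s, w k * log (max (f k (S k) / f k (R k)) 1)
      ≤ Fintype.card α * log (1 + δ) + 1 := by
  choose o hos hoR using fun j => mem_biUnion.1 (hcover ▸ mem_univ j)
  have howner : ∀ i ∈ s, ∀ j ∈ R i, o j = i := fun i hi j hj =>
    by_contra fun hne => disjoint_left.1 (hdisj (hos j) hi hne) (hoR j) hj
  set loss : α → ℝ := fun j => w (o j) * log (f (o j) (R (o j)) / f (o j) ((R (o j)).erase j))
  have hcost_nonneg : ∀ j, 0 ≤ log (1 + δ) + loss j := fun j =>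
    add_nonneg (log_nonneg (by linarith)) <| mul_nonneg (hw _ (hos j)) <| log_nonneg <|
      (one_le_div (hpos _ (hos j) _)).2 (hmono _ (hos j) (erase_subset j _))
  have htotal : ∑ j, loss j ≤ 1 := by
    rw [← hcover, sum_biUnion hdisj]
    calc ∑ i ∈ s, ∑ j ∈ R i, loss j
        = ∑ i ∈ s, w i * ∑ j ∈ R i, log (f i (R i) / f i ((R i).erase j)) := by
          refine sum_congr rfl fun i hi => ?_
          rw [mul_sum]
          exact sum_congr rfl fun j hj => by simp only [loss, howner i hi j hj]
      _ ≤ ∑ i ∈ s, w i := sum_le_sum fun i hi =>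
          mul_le_of_le_one_right (hw i hi) (hloss i hi)
      _ ≤ 1 := hws
  have hdisj' : (s : Set ι).PairwiseDisjoint fun k => S k \ R k :=
    hS.mono fun k => sdiff_subset
  calc ∑ k ∈ s, w k * log (max (f k (S k) / f k (R k)) 1)
      ≤ ∑ k ∈ s, ∑ j ∈ S k \ R k, (log (1 + δ) + loss j) := sum_le_sum fun k hk =>
        hR.mul_log_max_div_le_sum hδ hw hpos hmono hsub hos hoR hk (S k)
    _ = ∑ j ∈ s.biUnion fun k => S k \ R k, (log (1 + δ) + loss j) := (sum_biUnion hdisj').symm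
    _ ≤ ∑ j, (log (1 + δ) + loss j) :=
        sum_le_sum_of_subset_of_nonneg (subset_univ _) fun j _ _ => hcost_nonneg j
    _ = Fintype.card α * log (1 + δ) + ∑ j, loss j := by
        rw [sum_add_distrib, sum_const, card_univ, nsmul_eq_mul]
    _ ≤ Fintype.card α * log (1 + δ) + 1 := by linarith

theorem prod_max_div_rpow_le (hR : IsLocalOptimum s w f R δ) (hδ : 0 ≤ δ)
    (hw : ∀ i ∈ s, 0 ≤ w i) (hws : ∑ i ∈ s, w i ≤ 1) (hpos : ∀ i ∈ s, ∀ T, 0 < f i T)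
    (hmono : ∀ i ∈ s, Monotone (f i)) (hsub : ∀ i ∈ s, Submodular (f i))
    (hdisj : (s : Set ι).PairwiseDisjoint R) (hcover : s.biUnion R = univ)
    (hloss : ∀ i ∈ s, ∑ j ∈ R i, log (f i (R i) / f i ((R i).erase j)) ≤ 1)
    {S : ι → Finset α} (hS : (s : Set ι).PairwiseDisjoint S) :
    ∏ k ∈ s, max (f k (S k) / f k (R k)) 1 ^ w k ≤ (1 + δ) ^ Fintype.card α * exp 1 := by
  calc ∏ k ∈ s, max (f k (S k) / f k (R k)) 1 ^ w k
      = exp (∑ k ∈ s, w k * log (max (f k (S k) / f k (R k)) 1)) := by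
        rw [exp_sum]
        refine prod_congr rfl fun k _ => ?_
        rw [rpow_def_of_pos (lt_max_of_lt_right one_pos), mul_comm]
    _ ≤ exp (Fintype.card α * log (1 + δ) + 1) :=
        exp_le_exp.2 (hR.sum_mul_log_max_div_le hδ hw hws hpos hmono hsub hdisj hcover hloss hS)
    _ = (1 + δ) ^ Fintype.card α * exp 1 := by
        rw [exp_add, ← log_pow, exp_log (by positivity)]

theorem prod_max_add_div_add_rpow_le {v : ι → Finset α → ℝ} {a : ι → ℝ}
    (hR : IsLocalOptimum s w (fun i T => a i + v i T) R δ) (hδ : 0 ≤ δ)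
    (hw : ∀ i ∈ s, 0 ≤ w i) (hws : ∑ i ∈ s, w i ≤ 1) (hmono : ∀ i ∈ s, Monotone (v i))
    (hsub : ∀ i ∈ s, Submodular (v i)) (h0 : ∀ i ∈ s, v i ∅ = 0) (ha : ∀ i ∈ s, 0 < a i)
    (hva : ∀ i ∈ s, ∀ j, v i {j} ≤ a i)
    (hdisj : (s : Set ι).PairwiseDisjoint R) (hcover : s.biUnion R = univ)
    {S : ι → Finset α} (hS : (s : Set ι).PairwiseDisjoint S) :
    ∏ k ∈ s, max ((a k + v k (S k)) / (a k + v k (R k))) 1 ^ w k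
      ≤ (1 + δ) ^ Fintype.card α * exp 1 :=
  hR.prod_max_div_rpow_le hδ hw hws
    (fun i hi T => by linarith [ha i hi, h0 i hi ▸ hmono i hi (empty_subset T)])
    (fun i hi => (hmono i hi).const_add _) (fun i hi => (hsub i hi).const_add _) hdisj hcover
    (fun i hi => (hsub i hi).sum_log_div_erase_le_one (hmono i hi) (h0 i hi) (ha i hi)
      fun j _ => hva i hi j) hS

end IsLocalOptimum

theorem rpow_inv_natCast_pow_le {x : ℝ} (hx : 1 ≤ x) {k m : ℕ} (hkm : k ≤ m) :
    (x ^ (m⁻¹ : ℝ)) ^ k ≤ x := by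
  rw [← rpow_natCast, ← rpow_mul (by linarith), inv_mul_eq_div]
  exact rpow_le_self_of_one_le hx (div_le_one_of_le₀ (by exact_mod_cast hkm) (Nat.cast_nonneg _))

theorem prod_one_add_rpow_le {ι : Type*} {s : Finset ι} {w h : ι → ℝ} {ν : ℝ}
    (hw : ∀ i ∈ s, 0 ≤ w i) (hs : 0 < ∑ i ∈ s, w i) (hh : ∀ i ∈ s, 0 ≤ h i)
    (hwh : ∑ i ∈ s, w i * h i ≤ ν) :
    ∏ i ∈ s, (1 + h i) ^ w i ≤ (1 + ν / ∑ i ∈ s, w i) ^ ∑ i ∈ s, w i := by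
  set x := ∑ i ∈ s, w i
  have hP : 0 ≤ ∏ i ∈ s, (1 + h i) ^ w i :=
    prod_nonneg fun i hi => rpow_nonneg (by linarith [hh i hi]) _
  have hamgm := geom_mean_le_arith_mean s w (fun i => 1 + h i) hw hs
    fun i hi => by linarith [hh i hi]
  have hmean : (∑ i ∈ s, w i * (1 + h i)) / x ≤ 1 + ν / x := by
    simp only [mul_add, mul_one, sum_add_distrib]
    rw [add_div, div_self hs.ne']
    gcongr
  calc ∏ i ∈ s, (1 + h i) ^ w i = ((∏ i ∈ s, (1 + h i) ^ w i) ^ x⁻¹) ^ x :=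
        (rpow_inv_rpow hP hs.ne').symm
    _ ≤ (1 + ν / x) ^ x := by gcongr; exact hamgm.trans hmean

theorem bddAbove_two_rpow_mul_one_add_div_rpow {ν : ℝ} (hν : 0 ≤ ν) :
    BddAbove ((fun x : ℝ => (2 : ℝ) ^ (1 - x) * (1 + ν / x) ^ x) '' Set.Ioc 0 1) := by
  refine ⟨2 * exp ν, ?_⟩
  rintro _ ⟨x, ⟨hx0, hx1⟩, rfl⟩
  have htwo : (2 : ℝ) ^ (1 - x) ≤ 2 := by
    simpa using rpow_le_rpow_of_exponent_le one_le_two (by linarith : 1 - x ≤ 1)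
  have hexp : (1 + ν / x) ^ x ≤ exp ν :=
    calc (1 + ν / x) ^ x ≤ exp (ν / x) ^ x :=
          rpow_le_rpow (by positivity) (by linarith [add_one_le_exp (ν / x)]) hx0.le
      _ = exp ν := by rw [← exp_mul, div_mul_cancel₀ _ hx0.ne']
  exact mul_le_mul htwo hexp (by positivity) zero_le_two

theorem exists_prod_max_two_one_add_rpow_le {ι : Type*} [Fintype ι] {w h : ι → ℝ} {ν : ℝ}
    (hw : ∀ i, 0 ≤ w i) (hw1 : ∑ i, w i = 1) (hh : ∀ i, 0 ≤ h i)
    (hwh : ∑ i, w i * h i ≤ ν) (hν : 1 ≤ ν) :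
    ∃ x ∈ Set.Ioc (0 : ℝ) 1, ∏ i, max 2 (1 + h i) ^ w i ≤ 2 ^ (1 - x) * (1 + ν / x) ^ x := by
  classical
  set D := univ.filter fun i => 1 < h i
  set x := ∑ i ∈ D, w i
  have hx1 : x ≤ 1 := hw1 ▸ sum_le_sum_of_subset_of_nonneg (subset_univ D) fun i _ _ => hw i
  have hsplit : ∏ i, max 2 (1 + h i) ^ w i = 2 ^ (1 - x) * ∏ i ∈ D, (1 + h i) ^ w i := by
    have hcompl : ∑ i ∈ univ.filter (fun i => ¬1 < h i), w i = 1 - x :=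
      eq_sub_of_add_eq ((sum_filter_not_add_sum_filter univ _ w).trans hw1)
    rw [← prod_filter_not_mul_prod_filter univ fun i => 1 < h i, ← hcompl,
      rpow_sum_of_pos two_pos]
    congr 1 <;> refine prod_congr rfl fun i hi => ?_
    · rw [max_eq_left (by linarith [not_lt.1 (mem_filter.1 hi).2])]
    · rw [max_eq_right (by linarith [(mem_filter.1 hi).2])]
  rcases (sum_nonneg fun i _ => hw i : 0 ≤ x).eq_or_lt with hx0 | hx0
  · refine ⟨1, ⟨one_pos, le_rfl⟩, ?_⟩
    have hD : ∏ i ∈ D, (1 + h i) ^ w i = 1 := prod_eq_one fun i hi => by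
      rw [(sum_eq_zero_iff_of_nonneg fun i _ => hw i).1 hx0.symm i hi, rpow_zero]
    rw [hsplit, hD, show x = 0 from hx0.symm]
    simp only [sub_zero, sub_self, rpow_one, rpow_zero, mul_one, one_mul, div_one]
    linarith
  · refine ⟨x, ⟨hx0, hx1⟩, ?_⟩
    rw [hsplit]
    gcongr
    exact prod_one_add_rpow_le (fun i _ => hw i) hx0 (fun i _ => hh i)
      ((sum_le_sum_of_subset_of_nonneg (subset_univ D) fun i _ _ =>
        mul_nonneg (hw i) (hh i)).trans hwh)

theorem prod_max_two_one_add_rpow_le_sSup {ι : Type*} [Fintype ι] {w h : ι → ℝ} {wmax : ℝ}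
    (hw : ∀ i, 0 ≤ w i) (hw1 : ∑ i, w i = 1) (hwmax : ∀ i, w i ≤ wmax) (hh : ∀ i, 0 ≤ h i)
    (hhsum : ∑ i, h i ≤ Fintype.card ι) :
    ∏ i, max 2 (1 + h i) ^ w i ≤ sSup ((fun x : ℝ =>
      (2 : ℝ) ^ (1 - x) * (1 + Fintype.card ι * wmax / x) ^ x) '' Set.Ioc 0 1) := by
  have hν : 1 ≤ Fintype.card ι * wmax := calc
    (1 : ℝ) = ∑ i, w i := hw1.symm
    _ ≤ ∑ _i : ι, wmax := sum_le_sum fun i _ => hwmax i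
    _ = Fintype.card ι * wmax := by rw [sum_const, card_univ, nsmul_eq_mul]
  have hwmax0 : 0 ≤ wmax := (pos_of_mul_pos_right (by linarith) (Nat.cast_nonneg _)).le
  have hwh : ∑ i, w i * h i ≤ Fintype.card ι * wmax := calc
    ∑ i, w i * h i ≤ ∑ i, wmax * h i := sum_le_sum fun i _ => by gcongr; exacts [hh i, hwmax i]
    _ ≤ Fintype.card ι * wmax := by rw [← mul_sum, mul_comm]; gcongr
  obtain ⟨x, hx, hle⟩ := exists_prod_max_two_one_add_rpow_le hw hw1 hh hwh hν
  exact hle.trans (le_csSup (bddAbove_two_rpow_mul_one_add_div_rpow (by linarith)) ⟨x, hx, rfl⟩)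

theorem div_max_le_two_mul_max_sub_one {a b s : ℝ} (ha : 0 < a) (hb : 0 ≤ b) (hs : 0 ≤ s) :
    s / max a b ≤ 2 * max ((a + s) / (a + b)) 1 - 1 := by
  have hM : 0 < max a b := lt_max_of_lt_left ha
  rcases le_total s b with hsb | hbs
  · have := div_le_one_of_le₀ (hsb.trans (le_max_right a b)) hM.le
    linarith [le_max_right ((a + s) / (a + b)) 1]
  have hab : 0 < a + b := by linarith
  have key : s / max a b ≤ (a + 2 * s - b) / (a + b) := by
    rw [div_le_div_iff₀ hM hab]
    rcases le_total a b with h | h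
    · rw [max_eq_right h]; nlinarith
    · rw [max_eq_left h]; nlinarith
  have hrw : (a + 2 * s - b) / (a + b) = 2 * ((a + s) / (a + b)) - 1 := by field_simp; ring
  linarith [le_max_left ((a + s) / (a + b)) 1]

theorem div_max_add_le_max_mul_max {a b s h : ℝ} (ha : 0 < a) (hb : 0 ≤ b) (hs : 0 ≤ s) :
    s / max a b + h ≤ max ((a + s) / (a + b)) 1 * max 2 (1 + h) := by
  have hs' := div_max_le_two_mul_max_sub_one ha hb hs
  have hu := le_max_right ((a + s) / (a + b)) 1
  rcases le_total h 1 with h1 | h1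
  · rw [max_eq_left (by linarith : 1 + h ≤ 2)]; nlinarith
  · rw [max_eq_right (by linarith : 2 ≤ 1 + h)]; nlinarith

theorem prod_sdiff_rpow_mul_prod_rpow_le {ι : Type*} [Fintype ι] [DecidableEq ι] {s : Finset ι}
    {w t g u c : ι → ℝ} (hw : ∀ i, 0 ≤ w i) (ht : ∀ i ∉ s, 0 ≤ t i ∧ t i ≤ c i)
    (hg : ∀ i ∈ s, 0 ≤ g i ∧ g i ≤ u i * c i) (hu : ∀ i ∈ s, 0 ≤ u i) (hc : ∀ i, 0 ≤ c i) :
    (∏ i ∈ univ \ s, t i ^ w i) * ∏ i ∈ s, g i ^ w i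
      ≤ (∏ i ∈ s, u i ^ w i) * ∏ i, c i ^ w i := by
  calc (∏ i ∈ univ \ s, t i ^ w i) * ∏ i ∈ s, g i ^ w i
      ≤ (∏ i ∈ univ \ s, c i ^ w i) * ∏ i ∈ s, (u i * c i) ^ w i := by
        have ht' : ∀ i ∈ univ \ s, 0 ≤ t i ∧ t i ≤ c i := fun i hi => ht i (mem_sdiff.1 hi).2
        refine mul_le_mul (prod_le_prod (fun i hi => rpow_nonneg (ht' i hi).1 _)
          fun i hi => rpow_le_rpow (ht' i hi).1 (ht' i hi).2 (hw i))
          (prod_le_prod (fun i hi => rpow_nonneg (hg i hi).1 _)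
          fun i hi => rpow_le_rpow (hg i hi).1 (hg i hi).2 (hw i))
          (prod_nonneg fun i hi => rpow_nonneg (hg i hi).1 _)
          (prod_nonneg fun i _ => rpow_nonneg (hc i) _)
    _ = (∏ i ∈ s, u i ^ w i) * ∏ i, c i ^ w i := by
        rw [← prod_sdiff (subset_univ s) (f := fun i => c i ^ w i), prod_congr rfl
          fun i hi => mul_rpow (hu i hi) (hc i), prod_mul_distrib]
        ring

theorem ratio_bound_asymmetric_phi_general {J A : Type*} [Fintype J] [DecidableEq J]
    [Fintype A] [DecidableEq A]
    (n : ℕ) (hn : n = Fintype.card A)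
    (w : A → ℝ) (hw : ∀ i, 0 < w i) (hwsum : ∑ i, w i = 1)
    (wmax : ℝ) (hwmax : ∀ i, w i ≤ wmax)
    (v : A → Finset J → ℝ)
    (hmono : ∀ i, ∀ S T : Finset J, S ⊆ T → v i S ≤ v i T)
    (hsubmod : ∀ i, ∀ S T : Finset J, v i (S ∩ T) + v i (S ∪ T) ≤ v i S + v i T)
    (hv0 : ∀ i, v i ∅ = 0)
    (Abar : Finset A) (hAbar : Abar = univ.filter (fun i => 0 < v i (univ : Finset J)))
    (ℓ : A → J) (hℓ : ∀ i ∈ Abar, ∀ j : J, v i {j} ≤ v i {ℓ i})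
    (vb : A → Finset J → ℝ) (hvb : ∀ i S, vb i S = v i {ℓ i} + v i S)
    (ε : ℝ) (hε : 0 ≤ ε) (m : ℕ) (hJm : Fintype.card J ≤ m)
    (ε' : ℝ) (hε' : ε' = (1 + ε) ^ ((m : ℝ)⁻¹) - 1)
    (R : A → Finset J)
    (hRdisj : ∀ i k, i ≠ k → Disjoint (R i) (R k))
    (hRcover : Abar.biUnion R = (univ : Finset J))
    (hloc : ∀ i ∈ Abar, ∀ k ∈ Abar, i ≠ k → ∀ j ∈ R i,
      (vb i ((R i).erase j) / vb i (R i)) ^ (w i) *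
        (vb k (R k ∪ {j}) / vb k (R k)) ^ (w k) ≤ 1 + ε')
    (S : A → Finset J)
    (hSdisj : ∀ i k, i ≠ k → Disjoint (S i) (S k))
    (h : A → ℝ) (hh : ∀ i, 0 ≤ h i) (hhsum : ∑ i, h i ≤ (n : ℝ))
    (φ : ℝ → ℝ)
    (hφ : ∀ ν : ℝ, φ ν =
      sSup ((fun x : ℝ => (2 : ℝ) ^ (1 - x) * (1 + ν / x) ^ x) '' Set.Ioc 0 1)) :
    (∏ i ∈ univ \ Abar, h i ^ (w i)) *
      ∏ i ∈ Abar, (v i (S i) / max (v i {ℓ i}) (v i (R i)) + h i) ^ (w i)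
        ≤ (1 + ε) * φ (n * wmax) * Real.exp 1 := by
  have hlocal : IsLocalOptimum Abar w vb R ε' := hloc
  obtain rfl : vb = fun i T => v i {ℓ i} + v i T := funext fun i => funext (hvb i)
  have hv_nonneg : ∀ i T, 0 ≤ v i T := fun i T => hv0 i ▸ hmono i ∅ T (empty_subset T)
  have hℓ_pos : ∀ i ∈ Abar, 0 < v i {ℓ i} := fun i hi =>
    Submodular.pos_of_singleton_le (hsubmod i) (hv0 i)
      (by rw [hAbar] at hi; exact (mem_filter.1 hi).2) (hℓ i hi)
  have hε'0 : 0 ≤ ε' := by rw [hε', sub_nonneg]; exact one_le_rpow (by linarith) (by positivity)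
  have hpow : (1 + ε') ^ Fintype.card J ≤ 1 + ε := by
    rw [hε', add_sub_cancel]; exact rpow_inv_natCast_pow_le (by linarith) hJm
  have hgain := hlocal.prod_max_add_div_add_rpow_le hε'0 (fun i _ => (hw i).le)
    (hwsum ▸ sum_le_sum_of_subset_of_nonneg (subset_univ _) fun i _ _ => (hw i).le)
    (fun i _ S T => hmono i S T) (fun i _ => hsubmod i) (fun i _ => hv0 i) hℓ_pos hℓ
    (fun i _ k _ => hRdisj i k) hRcover (S := S) fun i _ k _ => hSdisj i k
  calc (∏ i ∈ univ \ Abar, h i ^ (w i)) *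
        ∏ i ∈ Abar, (v i (S i) / max (v i {ℓ i}) (v i (R i)) + h i) ^ (w i)
      ≤ (∏ i ∈ Abar, max ((v i {ℓ i} + v i (S i)) / (v i {ℓ i} + v i (R i))) 1 ^ w i) *
          ∏ i, max 2 (1 + h i) ^ w i :=
        prod_sdiff_rpow_mul_prod_rpow_le (fun i => (hw i).le)
          (fun i _ => ⟨hh i, by linarith [le_max_right 2 (1 + h i)]⟩)
          (fun i hi => ⟨add_nonneg (div_nonneg (hv_nonneg i _)
              ((hv_nonneg i _).trans (le_max_right _ _))) (hh i),
            div_max_add_le_max_mul_max (hℓ_pos i hi) (hv_nonneg i _) (hv_nonneg i _)⟩)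
          (fun i _ => zero_le_one.trans (le_max_right _ _))
          (fun i => zero_le_two.trans (le_max_left _ _))
    _ ≤ ((1 + ε) * exp 1) * φ (n * wmax) := by
        gcongr
        · exact hgain.trans (by gcongr)
        · rw [hφ, hn]
          exact prod_max_two_one_add_rpow_le_sSup (fun i => (hw i).le) hwsum hwmax hh (hn ▸ hhsum)
    _ = (1 + ε) * φ (n * wmax) * exp 1 := by ring

/-- (Improved ratio bound, asymmetric case.)
Let `ε ≥ 0`, `|J| ≤ m`, `ε̄ := (1+ε)^{1/m} − 1`, and let `R` be an `ε̄`-local optimum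
with respect to the endowed valuations `v̄_i`. For any partition `(S_i)_{i∈A}` of `J` and
reals `h_i ≥ 0` with `Σ h_i ≤ n`,
`∏_{i∈A∖Ā} h_i^{w_i} · ∏_{i∈Ā} (v_i(S_i)/max{v_i(ℓ(i)),v_i(R_i)} + h_i)^{w_i}
  ≤ (1+ε)·φ(n·w_max)·e`, where `φ(ν) := sup_{x∈(0,1]} 2^{1−x}·(1+ν/x)^x`. -/
theorem ratio_bound_asymmetric_phi {J A : Type*} [Fintype J] [DecidableEq J]
    [Fintype A] [DecidableEq A] [Nonempty A]
    (n : ℕ) (hn : n = Fintype.card A)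
    (w : A → ℝ) (hw : ∀ i, 0 < w i) (hwsum : ∑ i, w i = 1)
    (wmax : ℝ) (hwmax : ∀ i, w i ≤ wmax) (hwmax' : ∃ i, w i = wmax)
    (v : A → Finset J → ℝ)
    (hmono : ∀ i, ∀ S T : Finset J, S ⊆ T → v i S ≤ v i T)
    (hsubmod : ∀ i, ∀ S T : Finset J, v i (S ∩ T) + v i (S ∪ T) ≤ v i S + v i T)
    (hv0 : ∀ i, v i ∅ = 0)
    (Abar : Finset A) (hAbar : Abar = univ.filter (fun i => 0 < v i (univ : Finset J)))
    (hAbarne : Abar.Nonempty)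
    (ℓ : A → J) (hℓ : ∀ i ∈ Abar, ∀ j : J, v i {j} ≤ v i {ℓ i})
    (vb : A → Finset J → ℝ) (hvb : ∀ i S, vb i S = v i {ℓ i} + v i S)
    (ε : ℝ) (hε : 0 ≤ ε) (m : ℕ) (hm : 0 < m) (hJm : Fintype.card J ≤ m)
    (ε' : ℝ) (hε' : ε' = (1 + ε) ^ ((m : ℝ)⁻¹) - 1)
    (R : A → Finset J)
    (hRout : ∀ i ∉ Abar, R i = ∅)
    (hRdisj : ∀ i k, i ≠ k → Disjoint (R i) (R k))
    (hRcover : Abar.biUnion R = (univ : Finset J))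
    (hloc : ∀ i ∈ Abar, ∀ k ∈ Abar, i ≠ k → ∀ j ∈ R i,
      (vb i ((R i).erase j) / vb i (R i)) ^ (w i) *
        (vb k (R k ∪ {j}) / vb k (R k)) ^ (w k) ≤ 1 + ε')
    (S : A → Finset J)
    (hSdisj : ∀ i k, i ≠ k → Disjoint (S i) (S k))
    (hScover : Finset.univ.biUnion S = (univ : Finset J))
    (h : A → ℝ) (hh : ∀ i, 0 ≤ h i) (hhsum : ∑ i, h i ≤ (n : ℝ))
    (φ : ℝ → ℝ)
    (hφ : ∀ ν : ℝ, φ ν =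
      sSup ((fun x : ℝ => (2 : ℝ) ^ (1 - x) * (1 + ν / x) ^ x) '' Set.Ioc 0 1)) :
    (∏ i ∈ univ \ Abar, h i ^ (w i)) *
      ∏ i ∈ Abar, (v i (S i) / max (v i {ℓ i}) (v i (R i)) + h i) ^ (w i)
        ≤ (1 + ε) * φ (n * wmax) * Real.exp 1 :=
  ratio_bound_asymmetric_phi_general n hn w hw hwsum wmax hwmax v hmono hsubmod hv0 Abar hAbar ℓ hℓ
    vb hvb ε hε m hJm ε' hε' R hRdisj hRcover hloc S hSdisj h hh hhsum φ hφ
end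

section
/- Let T = (T_i)_{i∈A} be a partial allocation, and for each agent i let M_i := max over all k ∈ A and j ∈ T_k of v_i(T_k ∖ {j}) (taking M_i = 0 if all bundles are empty). Say that (i, T_k) is an edge of the ½-EFX feasibility graph if either (k = i and v_i(T_i) ≥ ½·M_i), or (v_i(T_k) > 2·v_i(T_i) and v_i(T_k) ≥ M_i). Suppose ρ : A → A is a bijection such that (i, T_{ρ(i)}) is an edge for every agent i. Then the allocation (T_{ρ(i)})_{i∈A} is ½-EFX, i.e., v_i(T_{ρ(i)}) ≥ ½·v_i(T_{ρ(k)} ∖ {j}) for all agents i, k and all j ∈ T_{ρ(k)}. -/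
open Finset

/-- (Perfect matchings in the ½-EFX feasibility graph give ½-EFX
allocations.) Given a partial allocation `T`, let `M_i` be the maximum of
`v_i(T_k ∖ {j})` over all `k` and `j ∈ T_k` (with `M_i = 0` if all bundles are empty).
If `ρ : A → A` is a bijection such that `(i, T_{ρ(i)})` is an edge of the ½-EFX
feasibility graph for every `i`, then `(T_{ρ(i)})_{i∈A}` is ½-EFX. -/
theorem perfect_matching_gives_half_EFX {G A : Type*} [Fintype G] [DecidableEq G]
    [Fintype A]
    (v : A → Finset G → ℝ)
    (hmono : ∀ i, ∀ S T : Finset G, S ⊆ T → v i S ≤ v i T)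
    (hv0 : ∀ i, v i ∅ = 0)
    (T : A → Finset G)
    (hTdisj : ∀ i k, i ≠ k → Disjoint (T i) (T k))
    (M : A → ℝ)
    (hM : ∀ i, M i = sSup ({0} ∪ {x : ℝ | ∃ k, ∃ j ∈ T k, x = v i ((T k).erase j)}))
    (ρ : A → A) (hρ : Function.Bijective ρ)
    (hedge : ∀ i : A,
      (ρ i = i ∧ (1 / 2 : ℝ) * M i ≤ v i (T i)) ∨
      (2 * v i (T i) < v i (T (ρ i)) ∧ M i ≤ v i (T (ρ i)))) :
    ∀ i k : A, ∀ j ∈ T (ρ k),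
      (1 / 2 : ℝ) * v i ((T (ρ k)).erase j) ≤ v i (T (ρ i)) := by
  intro i k j hj
  have hfin : (({0} ∪ {x : ℝ | ∃ k, ∃ j ∈ T k, x = v i ((T k).erase j)}) : Set ℝ).Finite := by
    apply Set.Finite.union (Set.finite_singleton 0)
    have hs : {x : ℝ | ∃ k, ∃ j ∈ T k, x = v i ((T k).erase j)} ⊆
        (fun p : A × G => v i ((T p.1).erase p.2)) '' Set.univ := by
      rintro x ⟨k, j, hj, rfl⟩; exact ⟨(k, j), trivial, rfl⟩
    exact (Set.finite_univ.image _).subset hs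
  have hbdd := hfin.bddAbove
  have hle : v i ((T (ρ k)).erase j) ≤ M i := by
    rw [hM]; exact le_csSup hbdd (Or.inr ⟨ρ k, j, hj, rfl⟩)
  have h0 : 0 ≤ v i (T (ρ i)) := by
    have := hmono i ∅ (T (ρ i)) (Finset.empty_subset _)
    linarith [hv0 i]
  rcases hedge i with ⟨hfix, h⟩ | ⟨_, h⟩
  · rw [hfix]; linarith
  · linarith
end

section
/- (Fair or efficient) Let A be a set of n agents with monotone subadditive valuations v_i : 2^G → ℝ, v_i(∅) = 0, over a finite item set G. For every partial allocation T = (T_i)_{i∈A} there exists a partial allocation R = (R_i)_{i∈A} such that either (i) NSW(R) ≥ NSW(T) and ∪_{i∈A} R_i is a proper subset of ∪_{i∈A} T_i, or (ii) NSW(R) ≥ ½·NSW(T) and R is ½-EFX. -/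
open Finset

section FairOrEfficient

variable {G A : Type*} [Fintype G] [DecidableEq G] [Fintype A] [DecidableEq A]

/-- Key certificate lemma: in a state `X` with the ledger and witness invariants,
any subset `S` of a current bundle `X k` which some other agent `d₀` values more than
twice its own current bundle must satisfy `2 v_k(T_k \ S) < v_k(T_k)`. -/
private lemma ledger_lemma
    (v : A → Finset G → ℝ)
    (hmono : ∀ i, ∀ S T : Finset G, S ⊆ T → v i S ≤ v i T)
    (hv0 : ∀ i, v i ∅ = 0)
    (T : A → Finset G)
    (hTdisj : ∀ i k, i ≠ k → Disjoint (T i) (T k))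
    (hni : ∀ R : A → Finset G, (∀ i k, i ≠ k → Disjoint (R i) (R k)) →
      Finset.univ.biUnion R ⊂ Finset.univ.biUnion T → ∏ i, v i (R i) < ∏ i, v i (T i))
    (hpos : ∀ i, 0 < v i (T i))
    (X : A → Finset G)
    (h1 : ∀ a, X a ⊆ T a)
    (h2 : ∀ a, v a (T a) ≤ 2 * v a (X a))
    (h3 : ∀ a, X a ≠ T a → ∃ d, d ≠ a ∧ 2 * v d (X d) < v d (X a))
    (k : A) (S : Finset G) (hSX : S ⊆ X k)
    (d₀ : A) (hd₀ : d₀ ≠ k) (henv : 2 * v d₀ (X d₀) < v d₀ S) :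
    2 * v k (T k \ S) < v k (T k) := by
  classical
  have hvnn : ∀ i (W : Finset G), 0 ≤ v i W := fun i W => by
    have := hmono i ∅ W (Finset.empty_subset W); rwa [hv0 i] at this
  -- trivial case : T k \ S = ∅
  by_cases hTS : T k \ S = ∅
  · rw [hTS, hv0]; simpa using hpos k
  have hTSne : (T k \ S).Nonempty := Finset.nonempty_iff_ne_empty.2 hTS
  have hTne : ∀ i, (T i).Nonempty := by
    intro i
    rcases Finset.eq_empty_or_nonempty (T i) with h | h
    · exfalso; have := hpos i; rw [h, hv0] at this; exact lt_irrefl _ this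
    · exact h
  -- helper for disjointness through original bundles
  have hdisj2 : ∀ {i j : A}, i ≠ j → ∀ {P Q : Finset G}, P ⊆ T i → Q ⊆ T j →
      Disjoint P Q := by
    intro i j hij P Q hP hQ
    exact (hTdisj i j hij).mono hP hQ
  -- the witness function
  let w : A → A := fun b => if h : ∃ d, d ≠ b ∧ 2 * v d (X d) < v d (X b) then h.choose else b
  have hwspec : ∀ b, X b ≠ T b → w b ≠ b ∧ 2 * v (w b) (X (w b)) < v (w b) (X b) := by
    intro b hb
    have h := h3 b hb
    simp only [w]
    rw [dif_pos h]
    exact ⟨h.choose_spec.1, h.choose_spec.2⟩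
  -- the walk
  let a : ℕ → A := fun t => w^[t] d₀
  have ha0 : a 0 = d₀ := rfl
  have hastep : ∀ t, a (t + 1) = w (a t) := fun t => Function.iterate_succ_apply' w t d₀
  -- stopping predicate
  have hstopex : ∃ t, (X (a t) = T (a t) ∨ (∃ s, s < t ∧ a s = a t) ∨ a t = k) := by
    by_contra hcon
    push_neg at hcon
    have hinj : Function.Injective fun t : Fin (Fintype.card A + 1) => a ↑t := by
      intro s t hst
      simp only at hst
      by_contra hne
      have hne' : (s : ℕ) ≠ (t : ℕ) := fun h => hne (Fin.ext h)
      rcases Nat.lt_or_ge (s : ℕ) (t : ℕ) with h | h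
      · exact (hcon (t : ℕ)).2.1 s h hst
      · have h' : (t : ℕ) < (s : ℕ) := lt_of_le_of_ne h (Ne.symm hne')
        exact (hcon (s : ℕ)).2.1 t h' hst.symm
    have hcard := Fintype.card_le_of_injective _ hinj
    simp only [Fintype.card_fin] at hcard
    omega
  haveI : DecidablePred fun t =>
      (X (a t) = T (a t) ∨ (∃ s, s < t ∧ a s = a t) ∨ a t = k) := Classical.decPred _
  set t₀ := Nat.find hstopex with ht₀def
  have hspec := Nat.find_spec hstopex
  have hminQ : ∀ s, s < t₀ →
      X (a s) ≠ T (a s) ∧ (∀ r, r < s → a r ≠ a s) ∧ a s ≠ k := by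
    intro s hs
    have := Nat.find_min hstopex hs
    push_neg at this
    exact this
  have hlink : ∀ t, t < t₀ →
      2 * v (a (t + 1)) (X (a (t + 1))) < v (a (t + 1)) (X (a t)) := by
    intro t ht
    have := hwspec (a t) (hminQ t ht).1
    rw [hastep t]
    exact this.2
  -- injectivity below t₀ :
  have hinjlt : ∀ s t, s < t → t < t₀ → a s ≠ a t := fun s t hst ht => (hminQ t ht).2.1 s hst
  -- Case B (repeat at t₀) : contradiction
  have hnorep : ∀ s, s < t₀ → a s ≠ a t₀ := by
    intro s₀ hs₀ hrep
    -- window certificate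
    set R' : A → Finset G := fun b =>
      if hb : ∃ t, s₀ < t ∧ t ≤ t₀ ∧ a t = b then X (a (hb.choose - 1)) else T b with hR'def
    have hwin_uniq : ∀ s t, s₀ < s → s ≤ t₀ → s₀ < t → t ≤ t₀ → a s = a t → s = t := by
      intro s t hs1 hs2 ht1 ht2 hst
      by_contra hne
      rcases Nat.lt_or_ge s t with h | h
      · rcases Nat.lt_or_ge t t₀ with h' | h'
        · exact hinjlt s t h h' hst
        · have : t = t₀ := le_antisymm ht2 h'
          subst this
          rw [← hrep] at hst
          rcases Nat.lt_or_ge s₀ s with h'' | h''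
          · exact hinjlt s₀ s hs1 (lt_of_lt_of_le (by omega) ht2) hst.symm
          · omega
      · have h' : t < s := lt_of_le_of_ne h (fun hh => hne hh.symm)
        rcases Nat.lt_or_ge s t₀ with h'' | h''
        · exact hinjlt t s h' h'' hst.symm
        · have : s = t₀ := le_antisymm hs2 h''
          subst this
          rw [← hrep] at hst
          rcases Nat.lt_or_ge s₀ t with h3' | h3'
          · exact hinjlt s₀ t ht1 (by omega) hst
          · omega
    have hR'win : ∀ t, s₀ < t → t ≤ t₀ → R' (a t) = X (a (t - 1)) := by
      intro t h1t h2t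
      have hb : ∃ r, s₀ < r ∧ r ≤ t₀ ∧ a r = a t := ⟨t, h1t, h2t, rfl⟩
      have hc := hb.choose_spec
      have : hb.choose = t := hwin_uniq _ _ hc.1 hc.2.1 h1t h2t hc.2.2
      rw [hR'def]; simp only []
      rw [dif_pos hb, this]
    have hR'out : ∀ b, (∀ t, s₀ < t → t ≤ t₀ → a t ≠ b) → R' b = T b := by
      intro b hb
      rw [hR'def]; simp only []
      rw [dif_neg]
      rintro ⟨t, h1t, h2t, h3t⟩
      exact hb t h1t h2t h3t
    -- source of R' b
    have hsrc : ∀ b, (∃ t, s₀ ≤ t ∧ t < t₀ ∧ R' b ⊆ X (a t) ∧ b = a (t+1)) ∨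
        (R' b = T b ∧ ∀ t, s₀ ≤ t → t < t₀ → b ≠ a (t+1)) := by
      intro b
      by_cases hb : ∃ t, s₀ < t ∧ t ≤ t₀ ∧ a t = b
      · obtain ⟨t, h1t, h2t, h3t⟩ := hb
        left
        refine ⟨t - 1, by omega, by omega, ?_, ?_⟩
        · rw [← h3t, hR'win t h1t h2t]
        · rw [← h3t]; congr 1; omega
      · right
        constructor
        · apply hR'out; intro t h1t h2t h3t; exact hb ⟨t, h1t, h2t, h3t⟩
        · intro t h1t h2t hbt
          exact hb ⟨t + 1, by omega, by omega, hbt.symm⟩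
    -- pointwise : v b (T b) ≤ v b (R' b)
    have hpw : ∀ b, v b (T b) ≤ v b (R' b) := by
      intro b
      rcases hsrc b with ⟨t, h1t, h2t, hsub, rfl⟩ | ⟨heq, _⟩
      · have hl := hlink t h2t
        have h2' := h2 (a (t + 1))
        have : R' (a (t + 1)) = X (a t) := by
          have := hR'win (t + 1) (by omega) (by omega)
          simpa using this
        rw [this]
        nlinarith [hvnn (a (t+1)) (X (a (t+1)))]
      · rw [heq]
    -- disjointness
    have hR'sub : ∀ b, (∃ t, s₀ ≤ t ∧ t < t₀ ∧ R' b ⊆ T (a t) ∧ b = a (t+1)) ∨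
        (R' b = T b ∧ ∀ t, s₀ ≤ t → t < t₀ → b ≠ a (t+1)) := by
      intro b
      rcases hsrc b with ⟨t, h1t, h2t, hsub, hb⟩ | h
      · exact Or.inl ⟨t, h1t, h2t, hsub.trans (h1 _), hb⟩
      · exact Or.inr h
    have hdisjR' : ∀ i j, i ≠ j → Disjoint (R' i) (R' j) := by
      intro i j hij
      rcases hR'sub i with ⟨t, h1t, h2t, hsubi, hi⟩ | ⟨heqi, houti⟩ <;>
        rcases hR'sub j with ⟨s, h1s, h2s, hsubj, hj⟩ | ⟨heqj, houtj⟩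
      · -- both in window : sources a t, a s distinct
        have hts : t ≠ s := by
          intro h; subst h; exact hij (hi.trans hj.symm)
        have : a t ≠ a s := by
          rcases Nat.lt_or_ge t s with h | h
          · exact hinjlt t s h h2s
          · exact (hinjlt s t (lt_of_le_of_ne h (fun hh => hts hh.symm)) h2t).symm
        exact hdisj2 this hsubi hsubj
      · -- i window, j outside
        have : a t ≠ j := by
          intro h
          rcases Nat.lt_or_ge s₀ t with h' | h'
          · exact houtj (t - 1) (by omega) (by omega) (by rw [← h]; congr 1; omega)
          · have : t = s₀ := by omega
            subst this
            exact houtj (t₀ - 1) (by omega) (by omega)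
              (by rw [← h, hrep]; congr 1; omega)
        rw [heqj]
        exact hdisj2 this hsubi (le_refl _)
      · have : a s ≠ i := by
          intro h
          rcases Nat.lt_or_ge s₀ s with h' | h'
          · exact houti (s - 1) (by omega) (by omega) (by rw [← h]; congr 1; omega)
          · have : s = s₀ := by omega
            subst this
            exact houti (t₀ - 1) (by omega) (by omega)
              (by rw [← h, hrep]; congr 1; omega)
        rw [heqi]
        exact (hdisj2 this hsubj (le_refl _)).symm
      · rw [heqi, heqj]; exact hTdisj i j hij
    -- support
    have hsupsub : Finset.univ.biUnion R' ⊆ Finset.univ.biUnion T := by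
      intro x hx
      rw [Finset.mem_biUnion] at hx ⊢
      obtain ⟨b, _, hxb⟩ := hx
      rcases hR'sub b with ⟨t, _, _, hsub, _⟩ | ⟨heq, _⟩
      · exact ⟨a t, Finset.mem_univ _, hsub hxb⟩
      · exact ⟨b, Finset.mem_univ _, heq ▸ hxb⟩
    have hshr : X (a s₀) ⊂ T (a s₀) := by
      refine (Finset.ssubset_iff_of_subset (h1 _)).2 ?_
      have hne := (hminQ s₀ hs₀).1
      by_contra hcon
      push_neg at hcon
      exact hne (Finset.Subset.antisymm (h1 _) hcon)
    obtain ⟨x, hxT, hxX⟩ := Finset.exists_of_ssubset hshr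
    have hxnot : ∀ b, x ∉ R' b := by
      intro b hxb
      rcases hsrc b with ⟨t, h1t, h2t, hsub, _⟩ | ⟨heq, hout⟩
      · -- x ∈ X (a t) ⊆ T (a t); x ∈ T (a s₀)
        by_cases hts : a t = a s₀
        · rw [hts] at hsub; exact hxX (hsub hxb)
        · have := hdisj2 hts (hsub.trans (h1 _)) (le_refl (T (a s₀)))
          exact (Finset.disjoint_left.1 this) hxb hxT
      · rw [heq] at hxb
        by_cases hbs : b = a s₀
        · subst hbs
          exact hout (t₀ - 1) (by omega) (by omega) (by rw [hrep]; congr 1; omega)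
        · exact (Finset.disjoint_left.1 (hdisj2 hbs (le_refl _) (le_refl _))) hxb hxT
    have hss : Finset.univ.biUnion R' ⊂ Finset.univ.biUnion T := by
      refine (Finset.ssubset_iff_of_subset hsupsub).2 ⟨x, ?_, ?_⟩
      · rw [Finset.mem_biUnion]; exact ⟨a s₀, Finset.mem_univ _, hxT⟩
      · rw [Finset.mem_biUnion]; push_neg; intro b _; exact hxnot b
    have hltP := hni R' hdisjR' hss
    have hgeP : ∏ i, v i (T i) ≤ ∏ i, v i (R' i) :=
      Finset.prod_le_prod (fun i _ => hvnn i (T i)) (fun i _ => hpw i)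
    exact absurd hltP (not_lt.2 hgeP)
  -- Case C (a t₀ = k) and Case A share the certificate construction
  -- injectivity on [0, t₀] :
  have hinj : ∀ s t, s ≤ t₀ → t ≤ t₀ → a s = a t → s = t := by
    intro s t hs ht hst
    by_contra hne
    rcases Nat.lt_or_ge s t with h | h
    · rcases Nat.lt_or_ge t t₀ with h' | h'
      · exact hinjlt s t h h' hst
      · have : t = t₀ := le_antisymm ht h'
        subst this
        exact hnorep s h hst
    · have h' : t < s := lt_of_le_of_ne h (fun hh => hne hh.symm)
      rcases Nat.lt_or_ge s t₀ with h'' | h''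
      · exact hinjlt t s h' h'' hst.symm
      · have : s = t₀ := le_antisymm hs h''
        subst this
        exact hnorep t h' hst.symm
  -- the A/C certificate
  set R' : A → Finset G := fun b =>
    if hb : ∃ t, t ≤ t₀ ∧ a t = b then
      (if hb.choose = 0 then S else X (a (hb.choose - 1)))
    else if b = k then T k \ S else T b with hR'def
  have hR'path : ∀ t, t ≤ t₀ → R' (a t) = if t = 0 then S else X (a (t - 1)) := by
    intro t ht
    have hb : ∃ r, r ≤ t₀ ∧ a r = a t := ⟨t, ht, rfl⟩
    have hc := hb.choose_spec
    have : hb.choose = t := hinj _ _ hc.1 ht hc.2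
    rw [hR'def]; simp only []
    rw [dif_pos hb, this]
  have hR'out : ∀ b, (∀ t, t ≤ t₀ → a t ≠ b) → b ≠ k → R' b = T b := by
    intro b hb hbk
    rw [hR'def]; simp only []
    rw [dif_neg, if_neg hbk]
    rintro ⟨t, h1t, h2t⟩
    exact hb t h1t h2t
  have hR'k : (∀ t, t ≤ t₀ → a t ≠ k) → R' k = T k \ S := by
    intro hk
    rw [hR'def]; simp only []
    rw [dif_neg (show ¬∃ t, t ≤ t₀ ∧ a t = k by
      rintro ⟨t, h1t, h2t⟩; exact hk t h1t h2t)]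
    simp
  -- sources for R' (A/C)
  have hsrc : ∀ b,
      (b = a 0 ∧ R' b = S) ∨
      (∃ t, t < t₀ ∧ b = a (t+1) ∧ R' b = X (a t)) ∨
      ((∀ t, t ≤ t₀ → a t ≠ b) ∧ ((b = k ∧ R' b = T k \ S) ∨ (b ≠ k ∧ R' b = T b))) := by
    intro b
    by_cases hb : ∃ t, t ≤ t₀ ∧ a t = b
    · obtain ⟨t, h1t, h2t⟩ := hb
      rcases Nat.eq_zero_or_pos t with rfl | htpos
      · left; exact ⟨h2t.symm, by rw [← h2t, hR'path 0 h1t]; simp⟩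
      · right; left
        refine ⟨t - 1, by omega, by rw [← h2t]; congr 1; omega, ?_⟩
        rw [← h2t, hR'path t h1t, if_neg (by omega)]
    · right; right
      have hnb : ∀ t, t ≤ t₀ → a t ≠ b := fun t ht hab => hb ⟨t, ht, hab⟩
      refine ⟨hnb, ?_⟩
      by_cases hbk : b = k
      · left; exact ⟨hbk, by rw [hbk]; exact hR'k (by rw [← hbk]; exact hnb)⟩
      · right; exact ⟨hbk, hR'out b hnb hbk⟩
  -- each R' b is contained in an original bundle:
  have hsub' : ∀ b, (b = a 0 ∧ R' b ⊆ T k) ∨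
      (∃ t, t < t₀ ∧ b = a (t+1) ∧ R' b ⊆ T (a t)) ∨
      ((∀ t, t ≤ t₀ → a t ≠ b) ∧ R' b ⊆ T b ∧ (b ≠ k → R' b = T b)) := by
    intro b
    rcases hsrc b with ⟨hb, hR⟩ | ⟨t, h1t, hb, hR⟩ | ⟨hnb, h⟩
    · left; exact ⟨hb, hR ▸ (hSX.trans (h1 k))⟩
    · right; left; exact ⟨t, h1t, hb, hR ▸ (h1 (a t))⟩
    · right; right
      rcases h with ⟨hbk, hR⟩ | ⟨hbk, hR⟩
      · exact ⟨hnb, by rw [hR, hbk]; exact Finset.sdiff_subset, fun h => absurd hbk h⟩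
      · exact ⟨hnb, hR ▸ le_refl _, fun _ => hR⟩
  -- path sources `a t` with `t < t₀` are never `k`
  have hpathnk : ∀ t, t < t₀ → a t ≠ k := fun t ht => (hminQ t ht).2.2
  -- disjointness of the A/C certificate
  have hdisjR' : ∀ i j, i ≠ j → Disjoint (R' i) (R' j) := by
    intro i j hij
    rcases hsub' i with ⟨hi, hsubi⟩ | ⟨t, h1t, hi, hsubi⟩ | ⟨houti, hsubi, heqi⟩ <;>
      rcases hsub' j with ⟨hj, hsubj⟩ | ⟨s, h1s, hj, hsubj⟩ | ⟨houtj, hsubj, heqj⟩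
    · exact absurd (hi.trans hj.symm) hij
    · exact hdisj2 (Ne.symm (hpathnk s h1s)) hsubi hsubj
    · -- i = a 0 (gets S ⊆ T k), j outside
      by_cases hjk : j = k
      · have hRi : R' i = S := by
          rcases hsrc i with ⟨_, h⟩ | ⟨t, h1t, hit, _⟩ | ⟨hout, _⟩
          · exact h
          · exfalso; rw [hi] at hit
            have := hinj 0 (t+1) (by omega) (by omega) hit
            omega
          · exact absurd hi.symm (hout 0 (by omega))
        have hRj : R' j = T k \ S := by
          rcases hsrc j with ⟨hj0, _⟩ | ⟨t, h1t, hjt, _⟩ | ⟨_, ⟨_, h⟩ | ⟨hne, _⟩⟩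
          · exact absurd hj0.symm (houtj 0 (by omega))
          · exact absurd hjt.symm (houtj (t+1) (by omega))
          · exact h
          · exact absurd hjk hne
        rw [hRi, hRj]
        exact Finset.disjoint_sdiff
      · rw [heqj hjk]
        exact hdisj2 (Ne.symm hjk) hsubi (le_refl _)
    · exact hdisj2 (hpathnk t h1t) hsubi hsubj
    · have hts : t ≠ s := by
        intro h; subst h; exact hij (hi.trans hj.symm)
      have : a t ≠ a s := by
        rcases Nat.lt_or_ge t s with h | h
        · exact hinjlt t s h h1s
        · exact (hinjlt s t (lt_of_le_of_ne h (fun hh => hts hh.symm)) h1t).symm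
      exact hdisj2 this hsubi hsubj
    · -- i = a (t+1), j outside
      have hx : a t ≠ j := fun h => houtj t (by omega) h
      by_cases hjk : j = k
      · subst hjk; exact hdisj2 (hpathnk t h1t) hsubi hsubj
      · rw [heqj hjk]; exact hdisj2 hx hsubi (le_refl _)
    · -- i outside, j = a 0
      by_cases hik : i = k
      · have hRj : R' j = S := by
          rcases hsrc j with ⟨_, h⟩ | ⟨t, h1t, hjt, _⟩ | ⟨hout, _⟩
          · exact h
          · exfalso; rw [hj] at hjt
            have := hinj 0 (t+1) (by omega) (by omega) hjt
            omega
          · exact absurd hj.symm (hout 0 (by omega))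
        have hRi : R' i = T k \ S := by
          rcases hsrc i with ⟨hi0, _⟩ | ⟨t, h1t, hit, _⟩ | ⟨_, ⟨_, h⟩ | ⟨hne, _⟩⟩
          · exact absurd hi0.symm (houti 0 (by omega))
          · exact absurd hit.symm (houti (t+1) (by omega))
          · exact h
          · exact absurd hik hne
        rw [hRj, hRi]
        exact Finset.disjoint_sdiff.symm
      · rw [heqi hik]
        exact (hdisj2 (Ne.symm hik) hsubj (le_refl _)).symm
    · have hx : a s ≠ i := fun h => houti s (by omega) h
      by_cases hik : i = k
      · subst hik; exact (hdisj2 (hpathnk s h1s) hsubj hsubi).symm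
      · rw [heqi hik]; exact (hdisj2 hx hsubj (le_refl _)).symm
    · exact hdisj2 hij hsubi hsubj
  -- support of the A/C certificate
  have hsupsub : Finset.univ.biUnion R' ⊆ Finset.univ.biUnion T := by
    intro x hx
    rw [Finset.mem_biUnion] at hx ⊢
    obtain ⟨b, _, hxb⟩ := hx
    rcases hsub' b with ⟨_, hsub⟩ | ⟨t, _, _, hsub⟩ | ⟨_, hsub, _⟩
    · exact ⟨k, Finset.mem_univ _, hsub hxb⟩
    · exact ⟨a t, Finset.mem_univ _, hsub hxb⟩
    · exact ⟨b, Finset.mem_univ _, hsub hxb⟩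
  -- pointwise bound on the path
  have hpw : ∀ b, (∃ t, t ≤ t₀ ∧ a t = b) → v b (T b) ≤ v b (R' b) := by
    rintro b ⟨t, h1t, rfl⟩
    rcases Nat.eq_zero_or_pos t with rfl | htpos
    · rw [hR'path 0 (by omega)]
      norm_num
      have h2' := h2 (a 0)
      rw [ha0] at h2' ⊢
      linarith [h2', henv]
    · rw [hR'path t h1t, if_neg (by omega)]
      have hl := hlink (t-1) (by omega)
      have ht' : t - 1 + 1 = t := by omega
      rw [ht'] at hl
      have h2' := h2 (a t)
      nlinarith [hvnn (a t) (X (a t))]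
  -- now split on whether k lies on the path
  by_cases hkpath : ∃ t, t ≤ t₀ ∧ a t = k
  · -- Case C : contradiction
    exfalso
    obtain ⟨tk, htk, hak⟩ := hkpath
    obtain ⟨x, hxmem⟩ := hTSne
    have hxT : x ∈ T k := (Finset.mem_sdiff.1 hxmem).1
    have hxS : x ∉ S := (Finset.mem_sdiff.1 hxmem).2
    have hxnot : ∀ b, x ∉ R' b := by
      intro b hxb
      rcases hsrc b with ⟨_, hR⟩ | ⟨t, h1t, _, hR⟩ | ⟨hout, hcase⟩
      · rw [hR] at hxb; exact hxS hxb
      · rw [hR] at hxb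
        exact (Finset.disjoint_left.1 (hdisj2 (hpathnk t h1t) (h1 (a t)) (le_refl _)))
          hxb hxT
      · rcases hcase with ⟨hbk, _⟩ | ⟨hbk, hR⟩
        · exact (hout tk htk) (hbk ▸ hak)
        · rw [hR] at hxb
          exact (Finset.disjoint_left.1 (hdisj2 hbk (le_refl _) (le_refl _))) hxb hxT
    have hss : Finset.univ.biUnion R' ⊂ Finset.univ.biUnion T := by
      refine (Finset.ssubset_iff_of_subset hsupsub).2 ⟨x, ?_, ?_⟩
      · rw [Finset.mem_biUnion]; exact ⟨k, Finset.mem_univ _, hxT⟩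
      · rw [Finset.mem_biUnion]; push_neg; intro b _; exact hxnot b
    have hltP := hni R' hdisjR' hss
    have hgeP : ∏ i, v i (T i) ≤ ∏ i, v i (R' i) := by
      refine Finset.prod_le_prod (fun i _ => hvnn i (T i)) (fun b _ => ?_)
      by_cases hb : ∃ t, t ≤ t₀ ∧ a t = b
      · exact hpw b hb
      · rcases hsrc b with ⟨hb0, _⟩ | ⟨t, h1t, hbt, _⟩ | ⟨_, hcase⟩
        · exact absurd ⟨0, by omega, hb0.symm⟩ hb
        · exact absurd ⟨t+1, by omega, hbt.symm⟩ hb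
        · rcases hcase with ⟨hbk, _⟩ | ⟨_, hR⟩
          · exact absurd ⟨tk, htk, hbk ▸ hak⟩ hb
          · rw [hR]
    exact absurd hltP (not_lt.2 hgeP)
  · -- Case A : the main computation
    have hknotpath : ∀ t, t ≤ t₀ → a t ≠ k := by
      intro t ht hak; exact hkpath ⟨t, ht, hak⟩
    have hterm : X (a t₀) = T (a t₀) := by
      rcases hspec with h | ⟨s, hs, hrep⟩ | h
      · exact h
      · exact absurd hrep (hnorep s hs)
      · exact absurd h (hknotpath t₀ (le_refl _))
    have hRk : R' k = T k \ S := hR'k hknotpath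
    have h2fac : 2 * v (a t₀) (T (a t₀)) ≤ v (a t₀) (R' (a t₀)) := by
      rcases Nat.eq_zero_or_pos t₀ with h0 | hpos'
      · rw [hR'path t₀ (le_refl _), if_pos h0, h0, ha0]
        have hterm' := hterm
        rw [h0, ha0] at hterm'
        rw [← hterm']
        exact le_of_lt henv
      · rw [hR'path t₀ (le_refl _), if_neg (by omega)]
        have hl := hlink (t₀-1) (by omega)
        have ht' : t₀ - 1 + 1 = t₀ := by omega
        rw [ht'] at hl
        rw [← hterm]
        exact le_of_lt hl
    obtain ⟨x, hxT⟩ := hTne (a t₀)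
    have hat₀k : a t₀ ≠ k := hknotpath t₀ (le_refl _)
    have hxnot : ∀ b, x ∉ R' b := by
      intro b hxb
      rcases hsrc b with ⟨_, hR⟩ | ⟨t, h1t, _, hR⟩ | ⟨hout, hcase⟩
      · rw [hR] at hxb
        exact (Finset.disjoint_left.1 (hdisj2 hat₀k (le_refl _) (hSX.trans (h1 k))))
          hxT hxb
      · rw [hR] at hxb
        have hne : a t₀ ≠ a t := by
          intro h
          have := hinj t₀ t (le_refl _) (by omega) h
          omega
        exact (Finset.disjoint_left.1 (hdisj2 hne (le_refl _) (h1 (a t)))) hxT hxb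
      · rcases hcase with ⟨hbk, hR⟩ | ⟨_, hR⟩
        · rw [hR] at hxb
          exact (Finset.disjoint_left.1 (hdisj2 hat₀k (le_refl _)
            (Finset.sdiff_subset : T k \ S ⊆ T k))) hxT hxb
        · rw [hR] at hxb
          have hne : a t₀ ≠ b := hout t₀ (le_refl _)
          exact (Finset.disjoint_left.1 (hdisj2 hne (le_refl _) (le_refl _))) hxT hxb
    have hss : Finset.univ.biUnion R' ⊂ Finset.univ.biUnion T := by
      refine (Finset.ssubset_iff_of_subset hsupsub).2 ⟨x, ?_, ?_⟩
      · rw [Finset.mem_biUnion]; exact ⟨a t₀, Finset.mem_univ _, hxT⟩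
      · rw [Finset.mem_biUnion]; push_neg; intro b _; exact hxnot b
    have hltP := hni R' hdisjR' hss
    have hmem2 : a t₀ ∈ (Finset.univ : Finset A).erase k := by
      rw [Finset.mem_erase]; exact ⟨hat₀k, Finset.mem_univ _⟩
    set E := ((Finset.univ : Finset A).erase k).erase (a t₀) with hE
    have hPE : (0:ℝ) < ∏ b ∈ E, v b (T b) :=
      Finset.prod_pos (fun b _ => hpos b)
    have hpwE : ∀ b ∈ E, v b (T b) ≤ v b (R' b) := by
      intro b hb
      by_cases hbp : ∃ t, t ≤ t₀ ∧ a t = b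
      · exact hpw b hbp
      · rcases hsrc b with ⟨hb0, _⟩ | ⟨t, h1t, hbt, _⟩ | ⟨_, hcase⟩
        · exact absurd ⟨0, by omega, hb0.symm⟩ hbp
        · exact absurd ⟨t+1, by omega, hbt.symm⟩ hbp
        · rcases hcase with ⟨hbk, _⟩ | ⟨_, hR⟩
          · exfalso; rw [hE] at hb; rw [hbk] at hb
            exact (Finset.mem_erase.1 (Finset.mem_of_mem_erase hb)).1 rfl
          · rw [hR]
    have hprodE : ∏ b ∈ E, v b (T b) ≤ ∏ b ∈ E, v b (R' b) :=
      Finset.prod_le_prod (fun b _ => hvnn b (T b)) hpwE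
    have eR : ∏ b, v b (R' b) =
        v k (R' k) * (v (a t₀) (R' (a t₀)) * ∏ b ∈ E, v b (R' b)) := by
      rw [← Finset.mul_prod_erase _ _ (Finset.mem_univ k),
        ← Finset.mul_prod_erase _ _ hmem2, ← hE]
    have eT : ∏ b, v b (T b) =
        v k (T k) * (v (a t₀) (T (a t₀)) * ∏ b ∈ E, v b (T b)) := by
      rw [← Finset.mul_prod_erase _ _ (Finset.mem_univ k),
        ← Finset.mul_prod_erase _ _ hmem2, ← hE]
    have hchain : v k (T k \ S) * (2 * v (a t₀) (T (a t₀)) * ∏ b ∈ E, v b (T b)) <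
        v k (T k) * (v (a t₀) (T (a t₀)) * ∏ b ∈ E, v b (T b)) := by
      calc v k (T k \ S) * (2 * v (a t₀) (T (a t₀)) * ∏ b ∈ E, v b (T b))
          ≤ v k (R' k) * (v (a t₀) (R' (a t₀)) * ∏ b ∈ E, v b (R' b)) := by
            rw [hRk]
            refine mul_le_mul_of_nonneg_left ?_ (hvnn k (T k \ S))
            exact mul_le_mul h2fac hprodE (le_of_lt hPE) (hvnn (a t₀) (R' (a t₀)))
        _ = ∏ b, v b (R' b) := eR.symm
        _ < ∏ b, v b (T b) := hltP
        _ = _ := eT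
    have hposA : (0:ℝ) < v (a t₀) (T (a t₀)) * ∏ b ∈ E, v b (T b) :=
      mul_pos (hpos _) hPE
    nlinarith [hchain, hposA, hvnn k (T k \ S)]

end FairOrEfficient

/-- (Fair or efficient.) For agents with monotone subadditive
valuations and any partial allocation `T`, there exists a partial allocation `R` such
that either (i) `NSW(R) ≥ NSW(T)` and `∪ R_i ⊊ ∪ T_i`, or (ii) `NSW(R) ≥ ½·NSW(T)`
and `R` is ½-EFX. -/
theorem fair_or_efficient {G A : Type*} [Fintype G] [DecidableEq G]
    [Fintype A] [DecidableEq A] [Nonempty A]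
    (n : ℕ) (hn : n = Fintype.card A)
    (v : A → Finset G → ℝ)
    (hmono : ∀ i, ∀ S T : Finset G, S ⊆ T → v i S ≤ v i T)
    (hsubadd : ∀ i, ∀ S T : Finset G, v i (S ∪ T) ≤ v i S + v i T)
    (hv0 : ∀ i, v i ∅ = 0)
    (T : A → Finset G)
    (hTdisj : ∀ i k, i ≠ k → Disjoint (T i) (T k)) :
    ∃ R : A → Finset G,
      (∀ i k, i ≠ k → Disjoint (R i) (R k)) ∧
      ((∏ i, v i (T i) ^ ((n : ℝ)⁻¹) ≤ ∏ i, v i (R i) ^ ((n : ℝ)⁻¹) ∧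
          Finset.univ.biUnion R ⊂ Finset.univ.biUnion T) ∨
        ((1 / 2 : ℝ) * ∏ i, v i (T i) ^ ((n : ℝ)⁻¹) ≤ ∏ i, v i (R i) ^ ((n : ℝ)⁻¹) ∧
          ∀ i k : A, ∀ j ∈ R k, (1 / 2 : ℝ) * v i ((R k).erase j) ≤ v i (R i))) := by
  classical
  have hvnn : ∀ i (W : Finset G), 0 ≤ v i W := fun i W => by
    have := hmono i ∅ W (Finset.empty_subset W); rwa [hv0 i] at this
  have hnpos : 0 < n := by rw [hn]; exact Fintype.card_pos
  have hnR : (0:ℝ) < (n:ℝ)⁻¹ := by positivity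
  by_cases hb1 : ∃ R : A → Finset G, (∀ i k, i ≠ k → Disjoint (R i) (R k)) ∧
      (∏ i, v i (T i) ^ ((n : ℝ)⁻¹) ≤ ∏ i, v i (R i) ^ ((n : ℝ)⁻¹)) ∧
      Finset.univ.biUnion R ⊂ Finset.univ.biUnion T
  · obtain ⟨R, hh1, hh2, hh3⟩ := hb1
    exact ⟨R, hh1, Or.inl ⟨hh2, hh3⟩⟩
  by_cases hz : ∃ i, v i (T i) = 0
  · obtain ⟨i₀, hi₀⟩ := hz
    refine ⟨fun _ => ∅, fun i k _ => Finset.disjoint_left.2 (by simp), Or.inr ⟨?_, ?_⟩⟩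
    · have hT0 : ∏ i, v i (T i) ^ ((n : ℝ)⁻¹) = 0 := by
        apply Finset.prod_eq_zero (Finset.mem_univ i₀)
        rw [hi₀]
        exact Real.zero_rpow (ne_of_gt hnR)
      have hR0 : ∏ _i : A, v (_i) (∅ : Finset G) ^ ((n : ℝ)⁻¹) = 0 := by
        apply Finset.prod_eq_zero (Finset.mem_univ (Classical.arbitrary A))
        rw [hv0]
        exact Real.zero_rpow (ne_of_gt hnR)
      rw [hT0, hR0]
      norm_num
    · intro i k j hj
      simp at hj
  push_neg at hz
  have hpos : ∀ i, 0 < v i (T i) := fun i => lt_of_le_of_ne (hvnn i (T i)) (Ne.symm (hz i))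
  -- plain-product version of the failure of branch (i)
  have hni : ∀ R : A → Finset G, (∀ i k, i ≠ k → Disjoint (R i) (R k)) →
      Finset.univ.biUnion R ⊂ Finset.univ.biUnion T →
      ∏ i, v i (R i) < ∏ i, v i (T i) := by
    intro R hd hss
    by_contra hcon
    push_neg at hcon
    apply hb1
    refine ⟨R, hd, ?_, hss⟩
    rw [Real.finset_prod_rpow _ _ (fun i _ => hvnn i (T i)),
        Real.finset_prod_rpow _ _ (fun i _ => hvnn i (R i))]
    exact Real.rpow_le_rpow (Finset.prod_nonneg (fun i _ => hvnn i (T i))) hcon (le_of_lt hnR)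
  -- main induction : repeatedly remove an item from a violated bundle
  have MAIN : ∀ N (X : A → Finset G), (∀ a, X a ⊆ T a) →
      (∀ a, v a (T a) ≤ 2 * v a (X a)) →
      (∀ a, X a ≠ T a → ∃ d, d ≠ a ∧ 2 * v d (X d) < v d (X a)) →
      (∑ a, (X a).card = N) →
      ∃ Z : A → Finset G, (∀ a, Z a ⊆ T a) ∧ (∀ a, v a (T a) ≤ 2 * v a (Z a)) ∧
        (∀ i k : A, ∀ j ∈ Z k, (1 / 2 : ℝ) * v i ((Z k).erase j) ≤ v i (Z i)) := by
    intro N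
    induction N using Nat.strong_induction_on with
    | _ N IH =>
      intro X h1 h2 h3 hN
      by_cases hEFX : ∀ i k : A, ∀ j ∈ X k, (1 / 2 : ℝ) * v i ((X k).erase j) ≤ v i (X i)
      · exact ⟨X, h1, h2, hEFX⟩
      · push_neg at hEFX
        obtain ⟨c, m, j, hj, hlt⟩ := hEFX
        have henv : 2 * v c (X c) < v c ((X m).erase j) := by linarith
        have hcm : c ≠ m := by
          intro h; subst h
          have := hmono c ((X c).erase j) (X c) (Finset.erase_subset _ _)
          linarith [hvnn c (X c)]
        have hkey := ledger_lemma v hmono hv0 T hTdisj hni hpos X h1 h2 h3 m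
          ((X m).erase j) (Finset.erase_subset _ _) c hcm henv
        have hSsub : (X m).erase j ⊆ T m := (Finset.erase_subset _ _).trans (h1 m)
        have hcover : T m ⊆ (X m).erase j ∪ (T m \ (X m).erase j) := by
          intro x hx
          by_cases h : x ∈ (X m).erase j <;> simp [h, hx]
        have hsub2 := hsubadd m ((X m).erase j) (T m \ (X m).erase j)
        have hmono2 := hmono m (T m) ((X m).erase j ∪ (T m \ (X m).erase j)) hcover
        have hledger : v m (T m) ≤ 2 * v m ((X m).erase j) := by linarith
        set X' := Function.update X m ((X m).erase j) with hX'
        have hX'm : X' m = (X m).erase j := Function.update_self m _ X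
        have hX'o : ∀ b, b ≠ m → X' b = X b := fun b hb => Function.update_of_ne hb _ X
        have h1' : ∀ b, X' b ⊆ T b := by
          intro b
          by_cases hb : b = m
          · subst hb; rw [hX'm]; exact hSsub
          · rw [hX'o b hb]; exact h1 b
        have h2' : ∀ b, v b (T b) ≤ 2 * v b (X' b) := by
          intro b
          by_cases hb : b = m
          · subst hb; rw [hX'm]; exact hledger
          · rw [hX'o b hb]; exact h2 b
        have h3' : ∀ b, X' b ≠ T b → ∃ d, d ≠ b ∧ 2 * v d (X' d) < v d (X' b) := by
          intro b hb
          by_cases hbm : b = m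
          · subst hbm
            refine ⟨c, hcm, ?_⟩
            rw [hX'm, hX'o c hcm]
            exact henv
          · rw [hX'o b hbm] at hb ⊢
            obtain ⟨d, hd, hdlt⟩ := h3 b hb
            refine ⟨d, hd, ?_⟩
            by_cases hdm : d = m
            · subst hdm
              have hmle : v d (X' d) ≤ v d (X d) := by
                rw [hX'm]; exact hmono d _ _ (Finset.erase_subset _ _)
              linarith
            · rw [hX'o d hdm]; exact hdlt
        have hcardm : (X' m).card = (X m).card - 1 := by
          rw [hX'm]; exact Finset.card_erase_of_mem hj
        have hjpos : 1 ≤ (X m).card := Finset.card_pos.2 ⟨j, hj⟩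
        have hsum' : ∑ a, (X' a).card < N := by
          have e1 : ∑ a, (X' a).card =
              (X' m).card + ∑ a ∈ Finset.univ.erase m, (X' a).card :=
            (Finset.add_sum_erase _ _ (Finset.mem_univ m)).symm
          have e2 : ∑ a, (X a).card =
              (X m).card + ∑ a ∈ Finset.univ.erase m, (X a).card :=
            (Finset.add_sum_erase _ _ (Finset.mem_univ m)).symm
          have e3 : ∑ a ∈ Finset.univ.erase m, (X' a).card =
              ∑ a ∈ Finset.univ.erase m, (X a).card :=
            Finset.sum_congr rfl (fun b hb => by
              rw [hX'o b (Finset.mem_erase.1 hb).1])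
          omega
        exact IH _ hsum' X' h1' h2' h3' rfl
  obtain ⟨Z, hZ1, hZ2, hZ3⟩ := MAIN (∑ a, (T a).card) T (fun a => le_refl _)
      (fun a => by linarith [hvnn a (T a)]) (fun a h => absurd rfl h) rfl
  refine ⟨Z, ?_, Or.inr ⟨?_, hZ3⟩⟩
  · intro i k hik; exact (hTdisj i k hik).mono (hZ1 i) (hZ1 k)
  · have hstep : ∀ i, v i (T i) ^ ((n:ℝ)⁻¹) ≤ (2 * v i (Z i)) ^ ((n:ℝ)⁻¹) := fun i =>
      Real.rpow_le_rpow (hvnn i (T i)) (hZ2 i) (le_of_lt hnR)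
    have hprod2 : ∏ i, (2 * v i (Z i)) ^ ((n:ℝ)⁻¹) =
        2 * ∏ i, v i (Z i) ^ ((n:ℝ)⁻¹) := by
      have e1 : ∀ i : A, (2 * v i (Z i)) ^ ((n:ℝ)⁻¹) =
          (2:ℝ) ^ ((n:ℝ)⁻¹) * v i (Z i) ^ ((n:ℝ)⁻¹) := fun i =>
        Real.mul_rpow (by norm_num) (hvnn i (Z i))
      rw [Finset.prod_congr rfl (fun i _ => e1 i), Finset.prod_mul_distrib,
        Finset.prod_const, Finset.card_univ, ← hn]
      congr 1
      rw [← Real.rpow_natCast ((2:ℝ) ^ ((n:ℝ)⁻¹)) n, ← Real.rpow_mul (by norm_num)]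
      rw [inv_mul_cancel₀ (by positivity : (n:ℝ) ≠ 0), Real.rpow_one]
    have hle : ∏ i, v i (T i) ^ ((n:ℝ)⁻¹) ≤ 2 * ∏ i, v i (Z i) ^ ((n:ℝ)⁻¹) := by
      rw [← hprod2]
      exact Finset.prod_le_prod (fun i _ => Real.rpow_nonneg (hvnn _ _) _)
        (fun i _ => hstep i)
    linarith
end

section
/- Let A be a set of n agents with monotone subadditive valuations v_i : 2^G → ℝ, v_i(∅) = 0, over a finite item set G. For every partial allocation S = (S_i)_{i∈A} of the items, there exists a complete allocation T = (T_i)_{i∈A} (a partition of G) such that T is ½-EFX and NSW(T) ≥ ½·NSW(S). -/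
/-!
Let `O` maximise the Nash product over partial allocations; if some agent values its `O`-bundle
at `0`, the welfare bound is void. Otherwise cut bundles down one item at a time: whenever `i`
values `X k` minus an item above `2 v_i(X_i)`, remove that item from `X k`. Every cut bundle is
certified by a chain of distinct agents, each strongly envying the set recorded for its
predecessor and ending in a whole `O`-bundle. Handing every recorded set on to the next agent of
such a chain, and the last one to the first, yields a partial allocation, so optimality of `O`
shows that the cut agent keeps at least half of its `O`-bundle, and that a chain never runs into
an agent whose set its head envies. The result is ½-EFX with `v_a(O_a) ≤ 2 v_a(X_a)`.

It is completed by envy-cycle elimination: a Pareto-maximal ½-EFX extension leaves a pool that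
nobody values above their own bundle and has an unenvied agent, who takes the whole pool;
subadditivity keeps the result ½-EFX. Hence `NSW(T) ≥ NSW(O)/2 ≥ NSW(S)/2`.
-/

open Finset Function

namespace FairDivision

variable {A G : Type*}

def IsHalfEFX [DecidableEq G] (v : A → Finset G → ℝ) (X : A → Finset G) : Prop :=
  ∀ i k, ∀ j ∈ X k, v i ((X k).erase j) ≤ 2 * v i (X i)

def StronglyEnvies (v : A → Finset G → ℝ) (D : A → Finset G) (y x : A) : Prop :=
  2 * v y (D y) < v y (D x)

def IsNashOptimal [Fintype A] (v : A → Finset G → ℝ) (O : A → Finset G) : Prop :=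
  Pairwise (Disjoint on O) ∧
    ∀ W : A → Finset G, Pairwise (Disjoint on W) → ∏ a, v a (W a) ≤ ∏ a, v a (O a)

theorem le_sdiff_add [DecidableEq G] {f : Finset G → ℝ} (hmono : Monotone f)
    (hsub : ∀ S T, f (S ∪ T) ≤ f S + f T) (S T : Finset G) : f S ≤ f (S \ T) + f T :=
  (hmono (by rw [sdiff_union_self_eq_union]; exact subset_union_left)).trans (hsub _ _)

theorem pairwise_disjoint_update [DecidableEq A] {X : A → Finset G}
    (hX : Pairwise (Disjoint on X)) {l : A} {Z : Finset G} (hZ : ∀ a, a ≠ l → Disjoint Z (X a)) :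
    Pairwise (Disjoint on update X l Z) := by
  intro a b hab
  simp only [onFun, update_apply]
  split_ifs with ha hb hb
  · exact absurd (ha.trans hb.symm) hab
  · exact hZ b hb
  · exact (hZ a ha).symm
  · exact hX hab

theorem prod_rpow_inv_card_le_mul {ι : Type*} [Fintype ι] [Nonempty ι] {s t : ι → ℝ} {c : ℝ}
    (hs : ∀ i, 0 ≤ s i) (ht : ∀ i, 0 ≤ t i) (hc : 0 ≤ c) (h : ∏ i, s i ≤ ∏ i, c * t i) :
    ∏ i, s i ^ (Fintype.card ι : ℝ)⁻¹ ≤ c * ∏ i, t i ^ (Fintype.card ι : ℝ)⁻¹ := by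
  have hn : Fintype.card ι ≠ 0 := Fintype.card_ne_zero
  rw [Real.finsetProd_rpow _ _ (fun i _ => hs i), Real.finsetProd_rpow _ _ (fun i _ => ht i)]
  calc (∏ i, s i) ^ (Fintype.card ι : ℝ)⁻¹
      ≤ (c ^ Fintype.card ι * ∏ i, t i) ^ (Fintype.card ι : ℝ)⁻¹ := by
        rw [← Finset.card_univ, ← prod_const, ← prod_mul_distrib]
        exact Real.rpow_le_rpow (prod_nonneg fun i _ => hs i) h (by positivity)
    _ = c * (∏ i, t i) ^ (Fintype.card ι : ℝ)⁻¹ := by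
        rw [Real.mul_rpow (by positivity) (prod_nonneg fun i _ => ht i),
          Real.pow_rpow_inv_natCast hc hn]

theorem mul_le_of_prod_le_prod {ι : Type*} [Fintype ι] [DecidableEq ι] {w o : ι → ℝ}
    (ho : ∀ i, 0 < o i) (hw : ∀ i, 0 ≤ w i) (h : ∏ i, w i ≤ ∏ i, o i) {a c : ι} (hac : a ≠ c)
    {t : ℝ} (hc : t * o c ≤ w c) (hrest : ∀ i, i ≠ a → i ≠ c → o i ≤ w i) : t * w a ≤ o a := by
  set s := (univ.erase a).erase c
  have hsplit : ∀ f : ι → ℝ, ∏ i, f i = f a * (f c * ∏ i ∈ s, f i) := fun f => by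
    rw [mul_prod_erase _ _ (mem_erase.2 ⟨hac.symm, mem_univ c⟩), mul_prod_erase _ _ (mem_univ a)]
  have hs : ∏ i ∈ s, o i ≤ ∏ i ∈ s, w i := prod_le_prod (fun i _ => (ho i).le) fun i hi =>
    hrest i (ne_of_mem_erase (mem_of_mem_erase hi)) (ne_of_mem_erase hi)
  have hpos : 0 < o c * ∏ i ∈ s, o i := mul_pos (ho c) (prod_pos fun i _ => ho i)
  refine le_of_mul_le_mul_right ?_ hpos
  calc t * w a * (o c * ∏ i ∈ s, o i) = w a * (t * o c * ∏ i ∈ s, o i) := by ring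
    _ ≤ w a * (w c * ∏ i ∈ s, w i) :=
        mul_le_mul_of_nonneg_left
          (mul_le_mul hc hs (prod_nonneg fun i _ => (ho i).le) (hw c)) (hw a)
    _ = ∏ i, w i := (hsplit w).symm
    _ ≤ ∏ i, o i := h
    _ = o a * (o c * ∏ i ∈ s, o i) := hsplit o

theorem _root_.List.rel_formPerm_symm_apply {α : Type*} [DecidableEq α] {R : α → α → Prop} {a : α}
    {l : List α} (hnd : (a :: l).Nodup) (hR : (a :: l).IsChain R) {y : α} (hy : y ∈ l) :
    R ((a :: l).formPerm.symm y) y := by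
  obtain ⟨i, hi, rfl⟩ := List.getElem_of_mem hy
  have hlt : i + 1 < (a :: l).length := by simp [hi]
  rw [show (a :: l).formPerm.symm l[i] = (a :: l)[i] from
    (Equiv.symm_apply_eq _).2 (List.formPerm_apply_lt_getElem _ hnd i hlt).symm]
  exact hR.getElem i hlt

/-- Agent `a` hands `D a ⊆ O a` over to agent `σ a`. -/
def rotate [DecidableEq G] (O D : A → Finset G) (σ : Equiv.Perm A) (a : A) : Finset G :=
  O a \ D a ∪ D (σ.symm a)

theorem pairwise_disjoint_rotate [DecidableEq G] {O D : A → Finset G} (σ : Equiv.Perm A)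
    (hO : Pairwise (Disjoint on O)) (hD : ∀ a, D a ⊆ O a) :
    Pairwise (Disjoint on rotate O D σ) := by
  have hkept : ∀ a c, Disjoint (O a \ D a) (D c) := by
    intro a c
    by_cases hca : c = a
    · subst hca; exact sdiff_disjoint
    · exact (hO (Ne.symm hca)).mono sdiff_subset (hD c)
  intro a b hab
  exact disjoint_union_left.2
    ⟨disjoint_union_right.2 ⟨(hO hab).mono sdiff_subset sdiff_subset, hkept a _⟩,
      disjoint_union_right.2 ⟨(hkept b _).symm, (hO (σ.symm.injective.ne hab)).mono (hD _) (hD _)⟩⟩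

section Chains

variable [DecidableEq G] {v : A → Finset G → ℝ} {O D : A → Finset G}

theorem le_rotate_formPerm_of_notMem [DecidableEq A] (hmono : ∀ a, Monotone (v a)) {l : List A}
    {y : A} (hy : y ∉ l) : v y (O y) ≤ v y (rotate O D l.formPerm y) := by
  have hfix : l.formPerm.symm y = y := by
    rw [Equiv.symm_apply_eq, List.formPerm_apply_of_notMem hy]
  refine hmono y ?_
  rw [rotate, hfix, sdiff_union_self_eq_union]
  exact subset_union_left

theorem lt_rotate_of_stronglyEnvies (hmono : ∀ a, Monotone (v a)) {σ : Equiv.Perm A} {y : A}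
    (henvy : StronglyEnvies v D y (σ.symm y)) (hhalf : v y (O y) ≤ 2 * v y (D y)) :
    v y (O y) < v y (rotate O D σ y) :=
  calc v y (O y) ≤ 2 * v y (D y) := hhalf
    _ < v y (D (σ.symm y)) := henvy
    _ ≤ v y (rotate O D σ y) := hmono y subset_union_right

variable [Fintype A]

/-- Handing every recorded set on to the next agent of a closed envy chain would improve every
agent on it. -/
theorem IsNashOptimal.not_isChain_cycle (hO : IsNashOptimal v O) (hpos : ∀ a, 0 < v a (O a))
    (hmono : ∀ a, Monotone (v a)) (hD : ∀ a, D a ⊆ O a) {a : A} {l : List A}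
    (hnd : (a :: l).Nodup) (hchain : (a :: l).IsChain fun x y => StronglyEnvies v D y x)
    (hclose : StronglyEnvies v D a ((a :: l).getLast (List.cons_ne_nil a l)))
    (hhalf : ∀ x ∈ a :: l, v x (O x) ≤ 2 * v x (D x)) : False := by
  classical
  set σ := (a :: l).formPerm
  have hlt : ∀ y ∈ a :: l, v y (O y) < v y (rotate O D σ y) := by
    intro y hy
    refine lt_rotate_of_stronglyEnvies hmono ?_ (hhalf y hy)
    rcases List.mem_cons.1 hy with rfl | hy
    · rwa [(Equiv.symm_apply_eq _).2 (List.formPerm_apply_getLast y l).symm]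
    · exact List.rel_formPerm_symm_apply hnd hchain hy
  have hle : ∀ y, v y (O y) ≤ v y (rotate O D σ y) := fun y =>
    if hy : y ∈ a :: l then (hlt y hy).le else le_rotate_formPerm_of_notMem hmono hy
  exact (hO.2 _ (pairwise_disjoint_rotate σ hO.1 hD)).not_gt
    (prod_lt_prod (fun y _ => hpos y) (fun y _ => hle y) ⟨a, mem_univ a, hlt a List.mem_cons_self⟩)

theorem IsNashOptimal.le_two_mul_of_isChain (hO : IsNashOptimal v O)
    (hpos : ∀ a, 0 < v a (O a)) (hmono : ∀ a, Monotone (v a))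
    (hsub : ∀ a S T, v a (S ∪ T) ≤ v a S + v a T) (hnn : ∀ a S, 0 ≤ v a S)
    (hD : ∀ a, D a ⊆ O a) {a : A} {l : List A} (hne : l ≠ []) (hnd : (a :: l).Nodup)
    (hchain : (a :: l).IsChain fun x y => StronglyEnvies v D y x)
    (hlast : D (l.getLast hne) = O (l.getLast hne))
    (hhalf : ∀ x ∈ l, v x (O x) ≤ 2 * v x (D x)) : v a (O a) ≤ 2 * v a (D a) := by
  classical
  set σ := (a :: l).formPerm
  set c := l.getLast hne
  have hc : c ∈ l := List.getLast_mem hne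
  have hac : a ≠ c := fun h => (List.nodup_cons.1 hnd).1 (h ▸ hc)
  have hcut : v a (O a) ≤ v a (rotate O D σ a) + v a (D a) :=
    (le_sdiff_add (hmono a) (hsub a) _ _).trans
      (add_le_add_left (hmono a subset_union_left) _)
  have hgain : 2 * v c (O c) ≤ v c (rotate O D σ c) :=
    calc 2 * v c (O c) = 2 * v c (D c) := by rw [hlast]
      _ ≤ v c (D (σ.symm c)) := (List.rel_formPerm_symm_apply hnd hchain hc).le
      _ ≤ v c (rotate O D σ c) := hmono c subset_union_right
  have key := mul_le_of_prod_le_prod (w := fun y => v y (rotate O D σ y)) hpos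
    (fun y => hnn y _) (hO.2 _ (pairwise_disjoint_rotate σ hO.1 hD)) hac hgain fun y hya _ => by
      by_cases hy : y ∈ l
      · exact (lt_rotate_of_stronglyEnvies hmono (List.rel_formPerm_symm_apply hnd hchain hy)
          (hhalf y hy)).le
      · exact le_rotate_formPerm_of_notMem hmono (by simp [hya, hy])
  linarith

theorem IsNashOptimal.not_stronglyEnvies_of_mem (hO : IsNashOptimal v O)
    (hpos : ∀ a, 0 < v a (O a)) (hmono : ∀ a, Monotone (v a)) (hD : ∀ a, D a ⊆ O a) {a : A}
    {l : List A} (hnd : (a :: l).Nodup)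
    (hchain : (a :: l).IsChain fun x y => StronglyEnvies v D y x)
    (hhalf : ∀ x ∈ a :: l, v x (O x) ≤ 2 * v x (D x)) {k : A} (hk : k ∈ a :: l) :
    ¬StronglyEnvies v D a k := by
  intro henvy
  obtain ⟨s, t, hst⟩ := List.append_of_mem hk
  cases s with
  | nil =>
    obtain ⟨rfl, -⟩ : a = k ∧ l = t := by simpa using hst
    exact hO.not_isChain_cycle hpos hmono hD (l := []) (by simp) (by simp) henvy
      fun x hx => hhalf x (List.mem_singleton.1 hx ▸ List.mem_cons_self)
  | cons b s =>
    obtain ⟨rfl, rfl⟩ : a = b ∧ l = s ++ k :: t := by simpa using hst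
    -- the part of the chain up to `k` closes into a cycle
    have hpre : a :: (s ++ [k]) <+: a :: (s ++ k :: t) := by simp
    exact hO.not_isChain_cycle hpos hmono hD (hnd.sublist hpre.sublist) (hchain.prefix hpre)
      (by simpa using henvy) fun x hx => hhalf x (hpre.subset hx)

end Chains

/-- A certificate that `a` keeps at least half of `O a` when cut down to `X a`: a chain of
distinct agents from `a` to an agent whose recorded set is its whole `O`-bundle, each agent
strongly envying the recorded set of its predecessor. -/
def HasEnvyChain (v : A → Finset G → ℝ) (O X : A → Finset G) (a : A) : Prop :=
  ∃ (l : List A) (D : A → Finset G), (a :: l).Nodup ∧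
    (a :: l).IsChain (fun x y => StronglyEnvies v D y x) ∧ (∀ x, D x ⊆ O x) ∧ D a = X a ∧
    D ((a :: l).getLast (List.cons_ne_nil a l)) = O ((a :: l).getLast (List.cons_ne_nil a l)) ∧
    ∀ x ∈ a :: l, v x (O x) ≤ 2 * v x (D x) ∧ X x ⊆ D x

section EnvyChain

variable {v : A → Finset G → ℝ} {O X : A → Finset G} {a : A}

theorem hasEnvyChain_self (hnn : ∀ a S, 0 ≤ v a S) (a : A) : HasEnvyChain v O O a :=
  ⟨[], O, by simp, by simp, fun _ => subset_rfl, rfl, rfl,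
    fun x _ => ⟨by linarith [hnn x (O x)], subset_rfl⟩⟩

theorem HasEnvyChain.subset (h : HasEnvyChain v O X a) : X a ⊆ O a := by
  obtain ⟨l, D, -, -, hD, hDa, -⟩ := h
  exact hDa ▸ hD a

theorem HasEnvyChain.le_two_mul (h : HasEnvyChain v O X a) : v a (O a) ≤ 2 * v a (X a) := by
  obtain ⟨l, D, -, -, -, hDa, -, hmem⟩ := h
  exact hDa ▸ (hmem a List.mem_cons_self).1

theorem HasEnvyChain.mono {X' : A → Finset G} (h : HasEnvyChain v O X a)
    (hX : ∀ x, X' x ⊆ X x) (ha : X' a = X a) : HasEnvyChain v O X' a := by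
  obtain ⟨l, D, hnd, hchain, hD, hDa, hlast, hmem⟩ := h
  exact ⟨l, D, hnd, hchain, hD, hDa.trans ha.symm, hlast,
    fun x hx => ⟨(hmem x hx).1, (hX x).trans (hmem x hx).2⟩⟩

variable [DecidableEq G] [Fintype A]

/-- The new chain is `k` followed by the chain of `i`. -/
theorem IsNashOptimal.hasEnvyChain_update [DecidableEq A] (hO : IsNashOptimal v O)
    (hpos : ∀ a, 0 < v a (O a)) (hmono : ∀ a, Monotone (v a))
    (hsub : ∀ a S T, v a (S ∪ T) ≤ v a S + v a T) (hnn : ∀ a S, 0 ≤ v a S) {i k : A}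
    {Z : Finset G} (hi : HasEnvyChain v O X i) (hZ : Z ⊆ X k) (hXk : X k ⊆ O k)
    (henvy : 2 * v i (X i) < v i Z) : HasEnvyChain v O (update X k Z) k := by
  obtain ⟨l, D, hnd, hchain, hD, hDi, hlast, hmem⟩ := hi
  have hk : k ∉ i :: l := fun hk => hO.not_stronglyEnvies_of_mem hpos hmono hD hnd hchain
    (fun x hx => (hmem x hx).1) hk
    (by rw [StronglyEnvies, hDi]; exact henvy.trans_le (hmono i (hZ.trans (hmem k hk).2)))
  set D' := update D k Z
  have hD' : ∀ x ∈ i :: l, D' x = D x := fun x hx => update_of_ne (ne_of_mem_of_not_mem hx hk) _ _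
  have hX' : ∀ x ∈ i :: l, update X k Z x = X x :=
    fun x hx => update_of_ne (ne_of_mem_of_not_mem hx hk) _ _
  have hnd' : (k :: i :: l).Nodup := List.nodup_cons.2 ⟨hk, hnd⟩
  have hchain' : (k :: i :: l).IsChain fun x y => StronglyEnvies v D' y x := by
    refine List.isChain_cons_cons.2 ⟨?_, hchain.imp_of_mem_imp fun x y hx hy h => ?_⟩
    · simpa [StronglyEnvies, D', hD' i List.mem_cons_self, hDi] using henvy
    · rwa [StronglyEnvies, hD' x hx, hD' y hy]
  have hDO' : ∀ x, D' x ⊆ O x := by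
    intro x
    by_cases hx : x = k
    · subst hx; simpa [D'] using hZ.trans hXk
    · simpa [D', hx] using hD x
  have hlast' : D' ((i :: l).getLast (List.cons_ne_nil i l)) =
      O ((i :: l).getLast (List.cons_ne_nil i l)) :=
    (hD' _ (List.getLast_mem _)).trans hlast
  have hhalf' : ∀ x ∈ i :: l, v x (O x) ≤ 2 * v x (D' x) := fun x hx => by
    rw [hD' x hx]; exact (hmem x hx).1
  have hk_half : v k (O k) ≤ 2 * v k (D' k) :=
    hO.le_two_mul_of_isChain hpos hmono hsub hnn hDO' (List.cons_ne_nil i l) hnd' hchain' hlast'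
      hhalf'
  refine ⟨i :: l, D', hnd', hchain', hDO', by simp [D'], by simpa using hlast', ?_⟩
  rintro x (_ | ⟨_, hx⟩)
  · exact ⟨hk_half, by simp [D']⟩
  · exact ⟨hhalf' x hx, by rw [hX' x hx, hD' x hx]; exact (hmem x hx).2⟩

theorem IsNashOptimal.exists_isHalfEFX [Finite G] (hO : IsNashOptimal v O)
    (hpos : ∀ a, 0 < v a (O a)) (hmono : ∀ a, Monotone (v a))
    (hsub : ∀ a S T, v a (S ∪ T) ≤ v a S + v a T) (hnn : ∀ a S, 0 ≤ v a S) :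
    ∃ X, Pairwise (Disjoint on X) ∧ IsHalfEFX v X ∧ ∀ a, v a (O a) ≤ 2 * v a (X a) := by
  classical
  obtain ⟨X, hX, hmin⟩ := Set.exists_min_image {X : A → Finset G | ∀ a, HasEnvyChain v O X a}
    (fun X => ∑ a, (X a).card) (Set.toFinite _) ⟨O, hasEnvyChain_self hnn⟩
  refine ⟨X, fun a b hab => (hO.1 hab).mono (hX a).subset (hX b).subset, fun i k j hj => ?_,
    fun a => (hX a).le_two_mul⟩
  by_contra! henvy
  set X' := update X k ((X k).erase j)
  have hX'X : ∀ x, X' x ⊆ X x := fun x => by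
    by_cases hx : x = k
    · subst hx; simpa [X'] using erase_subset j (X x)
    · simp [X', hx]
  have hX' : ∀ a, HasEnvyChain v O X' a := by
    intro a
    by_cases hak : a = k
    · subst hak
      exact hO.hasEnvyChain_update hpos hmono hsub hnn (hX i) (erase_subset j _) (hX a).subset
        henvy
    · exact (hX a).mono hX'X (update_of_ne hak _ _)
  have hcard : ∑ a, (X' a).card < ∑ a, (X a).card :=
    sum_lt_sum (fun a _ => card_le_card (hX'X a))
      ⟨k, mem_univ k, by simpa [X'] using card_erase_lt_of_mem hj⟩
  exact (hmin X' hX').not_gt hcard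

end EnvyChain

theorem _root_.Function.periodicPts_nonempty {α : Type*} [Finite α] [Nonempty α] (f : α → α) :
    (periodicPts f).Nonempty := by
  obtain ⟨m, n, hmn, h⟩ :=
    Finite.exists_ne_map_eq_of_infinite fun n : ℕ => f^[n] (Classical.arbitrary α)
  wlog hlt : m < n generalizing m n
  · exact this n m hmn.symm h.symm (by omega)
  refine ⟨f^[m] (Classical.arbitrary α), mk_mem_periodicPts (n := n - m) (by omega) ?_⟩
  rw [IsPeriodicPt, IsFixedPt, ← iterate_add_apply, Nat.sub_add_cancel hlt.le, h]

theorem _root_.Function.exists_perm_eqOn_periodicPts {α : Type*} (f : α → α) :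
    ∃ σ : Equiv.Perm α, Set.EqOn σ f (periodicPts f) ∧ ∀ x ∉ periodicPts f, σ x = x := by
  classical
  exact ⟨Equiv.Perm.ofSubtype ((bijOn_periodicPts f).equiv f),
    fun x hx => Equiv.Perm.ofSubtype_apply_of_mem _ hx,
    fun x hx => Equiv.Perm.ofSubtype_apply_of_not_mem _ hx⟩

section Completion

variable [DecidableEq G] {v : A → Finset G → ℝ} {X : A → Finset G}

/-- Envy-cycle elimination: if every bundle is envied, passing bundles around a cycle of the
"is envied by" map makes everyone on the cycle strictly better off. -/
theorem IsHalfEFX.exists_lt_of_forall_envied [Finite A] [Nonempty A] (hX : Pairwise (Disjoint on X))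
    (he : IsHalfEFX v X) (henvied : ∀ m, ∃ i, v i (X i) < v i (X m)) :
    ∃ X', Pairwise (Disjoint on X') ∧ IsHalfEFX v X' ∧
      (fun a => v a (X a)) < fun a => v a (X' a) := by
  choose f hf using henvied
  obtain ⟨σ, hσf, hσ⟩ := exists_perm_eqOn_periodicPts f
  obtain ⟨m, hm⟩ := periodicPts_nonempty f
  have hgain : ∀ x, v (σ x) (X (σ x)) ≤ v (σ x) (X x) := fun x => by
    by_cases hx : x ∈ periodicPts f
    · rw [hσf hx]; exact (hf x).le
    · rw [hσ x hx]
  have hle : ∀ a, v a (X a) ≤ v a (X (σ.symm a)) := fun a => by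
    simpa using hgain (σ.symm a)
  refine ⟨fun a => X (σ.symm a), fun a b hab => hX (σ.symm.injective.ne hab),
    fun i k j hj => (he i _ j hj).trans (by linarith [hle i]), Pi.lt_def.2 ⟨hle, σ m, ?_⟩⟩
  show v (σ m) (X (σ m)) < v (σ m) (X (σ.symm (σ m)))
  rw [Equiv.symm_apply_apply, hσf hm]
  exact hf m

/-- If some agent values the pool `C` of unallocated items above its bundle, it swaps its bundle
for an inclusion-minimal such subset of `C`, which nobody then envies up to any item. -/
theorem IsHalfEFX.exists_lt_of_lt_pool (hnn : ∀ a S, 0 ≤ v a S) (hX : Pairwise (Disjoint on X))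
    (he : IsHalfEFX v X) {C : Finset G} (hC : ∀ a, Disjoint C (X a)) {l : A}
    (hl : v l (X l) < v l C) :
    ∃ X', Pairwise (Disjoint on X') ∧ IsHalfEFX v X' ∧
      (fun a => v a (X a)) < fun a => v a (X' a) := by
  classical
  obtain ⟨Z, ⟨hZC, l, hl⟩, hmin⟩ := Set.exists_min_image {Z | Z ⊆ C ∧ ∃ l, v l (X l) < v l Z}
    card ((finite_toSet C.powerset).subset fun Z hZ => mem_powerset.2 hZ.1)
    ⟨C, subset_rfl, l, hl⟩
  have hsmall : ∀ g ∈ Z, ∀ i, v i (Z.erase g) ≤ v i (X i) := by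
    intro g hg i
    by_contra! h
    exact (hmin _ ⟨(erase_subset g Z).trans hZC, i, h⟩).not_gt (card_erase_lt_of_mem hg)
  have hgain : ∀ a, v a (X a) ≤ v a (update X l Z a) := fun a => by
    by_cases ha : a = l
    · subst ha; simpa using hl.le
    · simp [ha]
  refine ⟨update X l Z, pairwise_disjoint_update hX fun a _ => (hC a).mono_left hZC,
    fun i k j hj => ?_, Pi.lt_def.2 ⟨hgain, l, by simpa using hl⟩⟩
  by_cases hk : k = l
  · subst hk
    simp only [update_self] at hj ⊢
    linarith [hsmall j hj i, hgain i, hnn i (X i)]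
  · simp only [update_of_ne hk] at hj ⊢
    linarith [he i k j hj, hgain i]

theorem IsHalfEFX.update_union [DecidableEq A] (hmono : ∀ a, Monotone (v a))
    (hsub : ∀ a S T, v a (S ∪ T) ≤ v a S + v a T) (hnn : ∀ a S, 0 ≤ v a S)
    (he : IsHalfEFX v X) {C : Finset G} {m : A} (hm : ∀ i, v i (X m) ≤ v i (X i))
    (hC : ∀ i, v i C ≤ v i (X i)) : IsHalfEFX v (update X m (X m ∪ C)) := by
  have hgain : ∀ a, v a (X a) ≤ v a (update X m (X m ∪ C) a) := fun a => by
    by_cases ha : a = m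
    · subst ha; simpa using hmono a subset_union_left
    · simp [ha]
  intro i k j hj
  by_cases hk : k = m
  · subst hk
    simp only [update_self] at hj ⊢
    by_cases hi : i = k
    · subst hi
      simp only [update_self]
      linarith [hmono i (erase_subset j (X i ∪ C)), hnn i (X i ∪ C)]
    · linarith [hmono i (erase_subset j (X k ∪ C)), hsub i (X k) C, hm i, hC i, hgain i]
  · simp only [update_of_ne hk] at hj ⊢
    linarith [he i k j hj, hgain i]

theorem IsHalfEFX.exists_complete [Fintype A] [Nonempty A] [Fintype G]
    (hmono : ∀ a, Monotone (v a)) (hsub : ∀ a S T, v a (S ∪ T) ≤ v a S + v a T)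
    (hnn : ∀ a S, 0 ≤ v a S) (hX : Pairwise (Disjoint on X)) (he : IsHalfEFX v X) :
    ∃ T : A → Finset G, Pairwise (Disjoint on T) ∧ univ.biUnion T = univ ∧ IsHalfEFX v T ∧
      ∀ a, v a (X a) ≤ v a (T a) := by
  classical
  obtain ⟨Y, ⟨hYd, hYe, hXY⟩, hmax⟩ := Set.exists_max_image
    {Y | Pairwise (Disjoint on Y) ∧ IsHalfEFX v Y ∧ ∀ a, v a (X a) ≤ v a (Y a)}
    (fun Y => ∑ a, v a (Y a)) (Set.toFinite _) ⟨X, hX, he, fun _ => le_rfl⟩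
  have hnot : ∀ Y', Pairwise (Disjoint on Y') → IsHalfEFX v Y' →
      ¬(fun a => v a (Y a)) < fun a => v a (Y' a) := by
    intro Y' hd' he' hlt
    obtain ⟨hle, a, ha⟩ := Pi.lt_def.1 hlt
    exact (hmax Y' ⟨hd', he', fun b => (hXY b).trans (hle b)⟩).not_gt
      (sum_lt_sum (fun b _ => hle b) ⟨a, mem_univ a, ha⟩)
  set C := univ \ univ.biUnion Y
  have hC : ∀ a, Disjoint C (Y a) := fun a =>
    disjoint_sdiff_self_left.mono_right (subset_biUnion_of_mem Y (mem_univ a))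
  have hCv : ∀ i, v i C ≤ v i (Y i) := fun i => not_lt.1 fun h => by
    obtain ⟨Y', hd', he', hlt⟩ := hYe.exists_lt_of_lt_pool hnn hYd hC h
    exact hnot Y' hd' he' hlt
  obtain ⟨m, hm⟩ : ∃ m, ∀ i, v i (Y m) ≤ v i (Y i) := by
    by_contra! henvied
    obtain ⟨Y', hd', he', hlt⟩ := hYe.exists_lt_of_forall_envied hYd henvied
    exact hnot Y' hd' he' hlt
  refine ⟨update Y m (Y m ∪ C), pairwise_disjoint_update hYd fun a ham => ?_, ?_,
    hYe.update_union hmono hsub hnn hm hCv, fun a => (hXY a).trans ?_⟩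
  · exact disjoint_union_left.2 ⟨hYd (Ne.symm ham), hC a⟩
  · refine eq_univ_of_forall fun g => mem_biUnion.2 ?_
    by_cases hg : g ∈ univ.biUnion Y
    · obtain ⟨k, -, hk⟩ := mem_biUnion.1 hg
      by_cases hkm : k = m
      · subst hkm; exact ⟨k, mem_univ k, by simp [hk]⟩
      · exact ⟨k, mem_univ k, by simpa [hkm] using hk⟩
    · exact ⟨m, mem_univ m, by simp [C, hg]⟩
  · by_cases ham : a = m
    · subst ham; simpa using hmono a subset_union_left
    · simp [ham]

end Completion

theorem exists_isNashOptimal [Fintype A] [Finite G] (v : A → Finset G → ℝ) :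
    ∃ O, IsNashOptimal v O := by
  obtain ⟨O, hO, hmax⟩ := Set.exists_max_image {W : A → Finset G | Pairwise (Disjoint on W)}
    (fun W => ∏ a, v a (W a)) (Set.toFinite _) ⟨fun _ => ∅, fun _ _ _ => disjoint_empty_left _⟩
  exact ⟨O, hO, hmax⟩

end FairDivision

open FairDivision

theorem half_EFX_complete_allocation_general {G A : Type*} [Fintype G] [DecidableEq G]
    [Fintype A] [Nonempty A]
    (n : ℕ) (hn : n = Fintype.card A)
    (v : A → Finset G → ℝ)
    (hmono : ∀ i, ∀ S T : Finset G, S ⊆ T → v i S ≤ v i T)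
    (hsubadd : ∀ i, ∀ S T : Finset G, v i (S ∪ T) ≤ v i S + v i T)
    (hv0 : ∀ i, v i ∅ = 0)
    (S : A → Finset G)
    (hSdisj : ∀ i k, i ≠ k → Disjoint (S i) (S k)) :
    ∃ T : A → Finset G,
      (∀ i k, i ≠ k → Disjoint (T i) (T k)) ∧
      Finset.univ.biUnion T = (univ : Finset G) ∧
      (∀ i k : A, ∀ j ∈ T k, (1 / 2 : ℝ) * v i ((T k).erase j) ≤ v i (T i)) ∧
      (1 / 2 : ℝ) * ∏ i, v i (S i) ^ ((n : ℝ)⁻¹) ≤ ∏ i, v i (T i) ^ ((n : ℝ)⁻¹) := by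
  have hmono' : ∀ i, Monotone (v i) := fun i _ _ h => hmono i _ _ h
  have hnn : ∀ i S, 0 ≤ v i S := fun i S => hv0 i ▸ hmono i ∅ S (empty_subset S)
  obtain ⟨O, hO⟩ := exists_isNashOptimal v
  obtain ⟨X, hXd, hXe, hOX⟩ : ∃ X, Pairwise (Disjoint on X) ∧ IsHalfEFX v X ∧
      ∏ a, v a (O a) ≤ ∏ a, 2 * v a (X a) := by
    by_cases hpos : ∀ a, 0 < v a (O a)
    · obtain ⟨X, hXd, hXe, hX⟩ := hO.exists_isHalfEFX hpos hmono' hsubadd hnn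
      exact ⟨X, hXd, hXe, prod_le_prod (fun a _ => hnn a _) fun a _ => hX a⟩
    · obtain ⟨a, ha⟩ := not_forall.1 hpos
      refine ⟨fun _ => ∅, fun _ _ _ => disjoint_empty_left _,
        fun _ _ j hj => absurd hj (notMem_empty j), ?_⟩
      rw [prod_eq_zero (mem_univ a) ((hnn a _).antisymm (not_lt.1 ha)).symm]
      exact prod_nonneg fun b _ => by simp [hv0]
  obtain ⟨T, hTd, hTc, hTe, hXT⟩ := hXe.exists_complete hmono' hsubadd hnn hXd
  refine ⟨T, fun i k h => hTd h, hTc, fun i k j hj => by linarith [hTe i k j hj], ?_⟩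
  have hST : ∏ a, v a (S a) ≤ ∏ a, 2 * v a (T a) :=
    (hO.2 S fun i k h => hSdisj i k h).trans <| hOX.trans <|
      prod_le_prod (fun a _ => by linarith [hnn a (X a)]) fun a _ => by linarith [hXT a]
  subst hn
  linarith [prod_rpow_inv_card_le_mul (fun a => hnn a (S a)) (fun a => hnn a (T a)) zero_le_two
    hST]

/-- (Theorem on completing a partial allocation.) For agents with
monotone subadditive valuations and any partial allocation `S`, there exists a
complete allocation `T` (a partition of `G`) that is ½-EFX and satisfies
`NSW(T) ≥ ½·NSW(S)`. -/
theorem half_EFX_complete_allocation {G A : Type*} [Fintype G] [DecidableEq G]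
    [Fintype A] [DecidableEq A] [Nonempty A]
    (n : ℕ) (hn : n = Fintype.card A)
    (v : A → Finset G → ℝ)
    (hmono : ∀ i, ∀ S T : Finset G, S ⊆ T → v i S ≤ v i T)
    (hsubadd : ∀ i, ∀ S T : Finset G, v i (S ∪ T) ≤ v i S + v i T)
    (hv0 : ∀ i, v i ∅ = 0)
    (S : A → Finset G)
    (hSdisj : ∀ i k, i ≠ k → Disjoint (S i) (S k)) :
    ∃ T : A → Finset G,
      (∀ i k, i ≠ k → Disjoint (T i) (T k)) ∧
      Finset.univ.biUnion T = (univ : Finset G) ∧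
      (∀ i k : A, ∀ j ∈ T k, (1 / 2 : ℝ) * v i ((T k).erase j) ≤ v i (T i)) ∧
      (1 / 2 : ℝ) * ∏ i, v i (S i) ^ ((n : ℝ)⁻¹) ≤ ∏ i, v i (T i) ^ ((n : ℝ)⁻¹) :=
  half_EFX_complete_allocation_general n hn v hmono hsubadd hv0 S hSdisj
end

section
/- (Envy-cycle step preserves ½-EFX) Let A be a set of agents with monotone subadditive valuations v_i : 2^G → ℝ, v_i(∅) = 0, over a finite item set G. Let T = (T_i)_{i∈A} be a partial allocation that is ½-EFX, and let j ∈ G ∖ ∪_{i∈A} T_i be an unallocated item such that v_k(T_k) ≥ v_k({j}) for every agent k. Suppose agent i is unenvied, i.e., v_k(T_k) ≥ v_k(T_i) for every agent k. Then the partial allocation T' obtained from T by replacing T_i with T_i ∪ {j} (and leaving all other bundles unchanged) is ½-EFX. -/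
open Finset

/-- (Envy-cycle step preserves ½-EFX.) Let `T` be a ½-EFX partial
allocation, let `j` be an unallocated item with `v_k(T_k) ≥ v_k({j})` for every agent
`k`, and let `i` be an unenvied agent. Then the allocation obtained by replacing `T_i`
with `T_i ∪ {j}` is still ½-EFX. -/
theorem envy_cycle_step_preserves_half_EFX {G A : Type*} [Fintype G] [DecidableEq G]
    [Fintype A] [DecidableEq A]
    (v : A → Finset G → ℝ)
    (hmono : ∀ i, ∀ S T : Finset G, S ⊆ T → v i S ≤ v i T)
    (hsubadd : ∀ i, ∀ S T : Finset G, v i (S ∪ T) ≤ v i S + v i T)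
    (hv0 : ∀ i, v i ∅ = 0)
    (T : A → Finset G)
    (hTdisj : ∀ i k, i ≠ k → Disjoint (T i) (T k))
    (hefx : ∀ i k : A, ∀ g ∈ T k, (1 / 2 : ℝ) * v i ((T k).erase g) ≤ v i (T i))
    (j : G) (hj : j ∉ Finset.univ.biUnion T)
    (hval : ∀ k : A, v k {j} ≤ v k (T k))
    (i : A) (hunenvied : ∀ k : A, v k (T i) ≤ v k (T k))
    (T' : A → Finset G) (hT' : T' = Function.update T i (T i ∪ {j})) :
    ∀ a k : A, ∀ g ∈ T' k, (1 / 2 : ℝ) * v a ((T' k).erase g) ≤ v a (T' a) := by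
  subst hT'
  have hnn : ∀ a (S : Finset G), 0 ≤ v a S := fun a S =>
    (hv0 a) ▸ hmono a ∅ S (Finset.empty_subset S)
  have hjT : ∀ k, j ∉ T k := fun k hk =>
    hj (Finset.mem_biUnion.mpr ⟨k, Finset.mem_univ k, hk⟩)
  have hsub : ∀ a, T a ⊆ Function.update T i (T i ∪ {j}) a := by
    intro a
    rcases eq_or_ne a i with rfl | h
    · rw [Function.update_self]; exact Finset.subset_union_left
    · rw [Function.update_of_ne h]
  intro a k g hg
  have key : (1 / 2 : ℝ) * v a ((Function.update T i (T i ∪ {j}) k).erase g)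
      ≤ v a (T a) := by
    rcases eq_or_ne k i with rfl | hk
    · rw [Function.update_self] at hg ⊢
      rcases eq_or_ne g j with rfl | hgj
      · have he : (T k ∪ {g}).erase g = T k := by
          rw [Finset.erase_union_distrib, Finset.erase_eq_of_notMem (hjT k),
            Finset.erase_singleton, Finset.union_empty]
        rw [he]
        have h1 := hunenvied a
        have h2 := hnn a (T k)
        linarith
      · have he : (T k ∪ {j}).erase g = (T k).erase g ∪ {j} := by
          rw [Finset.erase_union_distrib, Finset.erase_eq_of_notMem (fun h => hgj (Finset.mem_singleton.mp h))]
        rw [he]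
        have h1 := hsubadd a ((T k).erase g) {j}
        have h2 : v a ((T k).erase g) ≤ v a (T k) :=
          hmono a _ _ (Finset.erase_subset g (T k))
        have h3 := hunenvied a
        have h4 := hval a
        linarith
    · rw [Function.update_of_ne hk] at hg ⊢
      exact hefx a k g hg
  exact key.trans (hmono a _ _ (hsub a))
end
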